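/- arXiv:1512.06684 — 8 statements merged into one kernel-verified Lean document; each statement's English description precedes it below -/
import Mathlib

section
/- Let M be an oval with support function p, and let P_λ(θ) = λp(θ) − (1−λ)p(θ+π). Then the oriented area of the affine λ-equidistant of M, parametrized by θ ↦ (P_λ(θ)cos θ − P_λ'(θ)sin θ, P_λ(θ)sin θ + P_λ'(θ)cos θ) over [0, 2π], equals (2λ² − 2λ + 1)·A_M − 2λ(1−λ)·Ψ_M, where A_M is the oriented area of M and Ψ_M = (1/2)∫₀^{2π} (p(θ)p(θ+π) − p'(θ)p'(θ+π)) dθ. -/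
open Real

/-- The oriented area of the affine λ-equidistant equals
`(2λ²-2λ+1)·A_M - 2λ(1-λ)·Ψ_M`. -/
theorem oriented_area_equidistant (p : ℝ → ℝ) (hp : ContDiff ℝ (⊤ : ℕ∞) p)
    (hper : Function.Periodic p (2 * π))
    (hpos : ∀ θ : ℝ, 0 < p θ + deriv (deriv p) θ)
    (lam : ℝ) (P : ℝ → ℝ)
    (hP : ∀ θ : ℝ, P θ = lam * p θ - (1 - lam) * p (θ + π))
    (c : ℝ → ℝ × ℝ)
    (hc : ∀ θ : ℝ, c θ =
      (P θ * cos θ - deriv P θ * sin θ, P θ * sin θ + deriv P θ * cos θ)) :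
    (1/2) * ∫ θ in (0:ℝ)..(2 * π),
        ((c θ).1 * deriv (fun t => (c t).2) θ - (c θ).2 * deriv (fun t => (c t).1) θ)
      = (2 * lam ^ 2 - 2 * lam + 1) *
          ((1/2) * ∫ θ in (0:ℝ)..(2 * π), (p θ ^ 2 - deriv p θ ^ 2))
        - 2 * lam * (1 - lam) *
          ((1/2) * ∫ θ in (0:ℝ)..(2 * π),
            (p θ * p (θ + π) - deriv p θ * deriv p (θ + π))) := by
  have hPf : P = fun θ => lam * p θ - (1 - lam) * p (θ + π) := funext hP
  subst hPf
  set f0 : ℝ → ℝ := fun θ => lam * p θ - (1 - lam) * p (θ + π) with hf0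
  -- smoothness of derivatives
  have hpi : ContDiff ℝ (↑(⊤ : ℕ∞)) p := hp.of_le (by simp)
  have hp1 : ContDiff ℝ (↑(⊤ : ℕ∞)) (deriv p) := (contDiff_infty_iff_deriv.mp hpi).2
  have hp2 : ContDiff ℝ (↑(⊤ : ℕ∞)) (deriv (deriv p)) := (contDiff_infty_iff_deriv.mp hp1).2
  have dp : Differentiable ℝ p := hpi.differentiable (by simp)
  have dp1 : Differentiable ℝ (deriv p) := hp1.differentiable (by simp)
  set f1 : ℝ → ℝ := fun θ => lam * deriv p θ - (1 - lam) * deriv p (θ + π) with hf1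
  set f2 : ℝ → ℝ := fun θ =>
    lam * deriv (deriv p) θ - (1 - lam) * deriv (deriv p) (θ + π) with hf2
  -- shifted derivatives
  have hq0 : ∀ θ : ℝ, HasDerivAt (fun t => p (t + π)) (deriv p (θ + π)) θ := fun θ => by
    simpa [Function.comp_def] using ((dp (θ + π)).hasDerivAt).comp θ ((hasDerivAt_id θ).add_const π)
  have hq1 : ∀ θ : ℝ, HasDerivAt (fun t => deriv p (t + π)) (deriv (deriv p) (θ + π)) θ :=
    fun θ => by
      simpa [Function.comp_def] using ((dp1 (θ + π)).hasDerivAt).comp θ ((hasDerivAt_id θ).add_const π)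
  have hdf0 : ∀ θ : ℝ, HasDerivAt f0 (f1 θ) θ := fun θ =>
    (((dp θ).hasDerivAt).const_mul lam).sub ((hq0 θ).const_mul (1 - lam))
  have hdf1 : ∀ θ : ℝ, HasDerivAt f1 (f2 θ) θ := fun θ =>
    (((dp1 θ).hasDerivAt).const_mul lam).sub ((hq1 θ).const_mul (1 - lam))
  have hd1 : deriv f0 = f1 := funext fun θ => (hdf0 θ).deriv
  -- derivatives of the curve coordinates
  have hdg1 : ∀ θ : ℝ, HasDerivAt (fun t => f0 t * cos t - f1 t * sin t)
      (-((f0 θ + f2 θ) * sin θ)) θ := by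
    intro θ
    have h := ((hdf0 θ).mul (Real.hasDerivAt_cos θ)).sub
      ((hdf1 θ).mul (Real.hasDerivAt_sin θ))
    exact h.congr_deriv (by ring)
  have hdg2 : ∀ θ : ℝ, HasDerivAt (fun t => f0 t * sin t + f1 t * cos t)
      ((f0 θ + f2 θ) * cos θ) θ := by
    intro θ
    have h := ((hdf0 θ).mul (Real.hasDerivAt_sin θ)).add
      ((hdf1 θ).mul (Real.hasDerivAt_cos θ))
    exact h.congr_deriv (by ring)
  have hc1 : (fun t => (c t).1) = fun t => f0 t * cos t - f1 t * sin t :=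
    funext fun t => by rw [hc t, hd1]
  have hc2 : (fun t => (c t).2) = fun t => f0 t * sin t + f1 t * cos t :=
    funext fun t => by rw [hc t, hd1]
  have hmain : ∀ θ : ℝ,
      (c θ).1 * deriv (fun t => (c t).2) θ - (c θ).2 * deriv (fun t => (c t).1) θ
        = f0 θ ^ 2 + f0 θ * f2 θ := by
    intro θ
    rw [hc1, hc2, (hdg1 θ).deriv, (hdg2 θ).deriv, hc θ, hd1]
    have h := Real.sin_sq_add_cos_sq θ
    linear_combination (f0 θ ^ 2 + f0 θ * f2 θ) * h
  -- periodicity of deriv p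
  have hper1 : Function.Periodic (deriv p) (2 * π) := by
    intro x
    have h1 : HasDerivAt (fun y => p (y + 2 * π)) (deriv p (x + 2 * π)) x := by
      simpa [Function.comp_def] using ((dp (x + 2 * π)).hasDerivAt).comp x ((hasDerivAt_id x).add_const (2 * π))
    have h2 : (fun y => p (y + 2 * π)) = p := funext fun y => hper y
    rw [h2] at h1
    exact (h1.deriv).symm ▸ rfl
  -- continuity
  have cf0 : Continuous f0 := by
    exact (continuous_const.mul hp.continuous).sub
      (continuous_const.mul (hp.continuous.comp (continuous_id.add continuous_const)))
  have cf1 : Continuous f1 := by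
    exact (continuous_const.mul hp1.continuous).sub
      (continuous_const.mul (hp1.continuous.comp (continuous_id.add continuous_const)))
  have cf2 : Continuous f2 := by
    exact (continuous_const.mul hp2.continuous).sub
      (continuous_const.mul (hp2.continuous.comp (continuous_id.add continuous_const)))
  -- rewrite integral
  rw [intervalIntegral.integral_congr (g := fun θ => f0 θ ^ 2 + f0 θ * f2 θ)
    (fun θ _ => hmain θ)]
  -- integration by parts for ∫ f0 * f2
  have hparts : ∫ θ in (0:ℝ)..(2 * π), f0 θ * f2 θ
      = f0 (2 * π) * f1 (2 * π) - f0 0 * f1 0 - ∫ θ in (0:ℝ)..(2 * π), f1 θ * f1 θ := by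
    exact intervalIntegral.integral_mul_deriv_eq_deriv_mul
      (fun x _ => hdf0 x) (fun x _ => hdf1 x)
      (cf1.intervalIntegrable _ _) (cf2.intervalIntegrable _ _)
  have hb0 : f0 (2 * π) = f0 0 := by
    simp only [hf0]
    rw [show (2 * π : ℝ) = 0 + 2 * π by ring, hper 0,
      show (0 + 2 * π + π : ℝ) = 0 + π + 2 * π by ring, hper (0 + π)]
  have hb1 : f1 (2 * π) = f1 0 := by
    simp only [hf1]
    rw [show (2 * π : ℝ) = 0 + 2 * π by ring, hper1 0,
      show (0 + 2 * π + π : ℝ) = 0 + π + 2 * π by ring, hper1 (0 + π)]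
  have hsplit : ∫ θ in (0:ℝ)..(2 * π), (f0 θ ^ 2 + f0 θ * f2 θ)
      = (∫ θ in (0:ℝ)..(2 * π), f0 θ ^ 2) + ∫ θ in (0:ℝ)..(2 * π), f0 θ * f2 θ :=
    intervalIntegral.integral_add ((cf0.pow 2).intervalIntegrable _ _)
      ((cf0.mul cf2).intervalIntegrable _ _)
  rw [hsplit, hparts, hb0, hb1]
  -- now LHS = (1/2) * (∫ f0² + (0 - ∫ f1²))
  have hsq : ∫ θ in (0:ℝ)..(2 * π), f1 θ * f1 θ = ∫ θ in (0:ℝ)..(2 * π), f1 θ ^ 2 :=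
    intervalIntegral.integral_congr fun θ _ => by ring
  rw [hsq]
  -- expand f0² - f1² pointwise
  have hshift : (∫ θ in (0:ℝ)..(2 * π), (p (θ + π) ^ 2 - deriv p (θ + π) ^ 2))
      = ∫ θ in (0:ℝ)..(2 * π), (p θ ^ 2 - deriv p θ ^ 2) := by
    have hF : Function.Periodic (fun θ => p θ ^ 2 - deriv p θ ^ 2) (2 * π) := by
      intro x; simp [hper x, hper1 x]
    rw [intervalIntegral.integral_comp_add_right (fun θ => p θ ^ 2 - deriv p θ ^ 2) π]
    have := hF.intervalIntegral_add_eq π 0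
    simpa [add_comm] using this
  have hexp : (∫ θ in (0:ℝ)..(2 * π), f0 θ ^ 2) - ∫ θ in (0:ℝ)..(2 * π), f1 θ ^ 2
      = lam ^ 2 * (∫ θ in (0:ℝ)..(2 * π), (p θ ^ 2 - deriv p θ ^ 2))
        + (1 - lam) ^ 2 * (∫ θ in (0:ℝ)..(2 * π), (p (θ + π) ^ 2 - deriv p (θ + π) ^ 2))
        - 2 * lam * (1 - lam) *
          ∫ θ in (0:ℝ)..(2 * π), (p θ * p (θ + π) - deriv p θ * deriv p (θ + π)) := by
    have cps : Continuous (fun θ : ℝ => p (θ + π)) :=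
      hp.continuous.comp (continuous_id.add continuous_const)
    have cps1 : Continuous (fun θ : ℝ => deriv p (θ + π)) :=
      hp1.continuous.comp (continuous_id.add continuous_const)
    have h1 : (∫ θ in (0:ℝ)..(2 * π), f0 θ ^ 2) - ∫ θ in (0:ℝ)..(2 * π), f1 θ ^ 2
        = ∫ θ in (0:ℝ)..(2 * π), (f0 θ ^ 2 - f1 θ ^ 2) :=
      (intervalIntegral.integral_sub (((cf0.pow 2)).intervalIntegrable _ _)
        ((cf1.pow 2).intervalIntegrable _ _)).symm
    rw [h1]
    have h2 : ∀ θ : ℝ, f0 θ ^ 2 - f1 θ ^ 2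
        = lam ^ 2 * (p θ ^ 2 - deriv p θ ^ 2)
          + (1 - lam) ^ 2 * (p (θ + π) ^ 2 - deriv p (θ + π) ^ 2)
          - 2 * lam * (1 - lam) * (p θ * p (θ + π) - deriv p θ * deriv p (θ + π)) := by
      intro θ; simp only [hf0, hf1]; ring
    rw [intervalIntegral.integral_congr (g := fun θ =>
      lam ^ 2 * (p θ ^ 2 - deriv p θ ^ 2)
        + (1 - lam) ^ 2 * (p (θ + π) ^ 2 - deriv p (θ + π) ^ 2)
        - 2 * lam * (1 - lam) * (p θ * p (θ + π) - deriv p θ * deriv p (θ + π)))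
      (fun θ _ => h2 θ)]
    have i1 : IntervalIntegrable (fun θ : ℝ => lam ^ 2 * (p θ ^ 2 - deriv p θ ^ 2))
        MeasureTheory.volume 0 (2 * π) :=
      (continuous_const.mul ((hp.continuous.pow 2).sub (hp1.continuous.pow 2))).intervalIntegrable _ _
    have i2 : IntervalIntegrable
        (fun θ : ℝ => (1 - lam) ^ 2 * (p (θ + π) ^ 2 - deriv p (θ + π) ^ 2))
        MeasureTheory.volume 0 (2 * π) :=
      (continuous_const.mul ((cps.pow 2).sub (cps1.pow 2))).intervalIntegrable _ _
    have i3 : IntervalIntegrable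
        (fun θ : ℝ => 2 * lam * (1 - lam) *
          (p θ * p (θ + π) - deriv p θ * deriv p (θ + π)))
        MeasureTheory.volume 0 (2 * π) :=
      (continuous_const.mul ((hp.continuous.mul cps).sub
        (hp1.continuous.mul cps1))).intervalIntegrable _ _
    rw [intervalIntegral.integral_sub (i1.add i2) i3, intervalIntegral.integral_add i1 i2,
      intervalIntegral.integral_const_mul, intervalIntegral.integral_const_mul,
      intervalIntegral.integral_const_mul]
  have hfinal := hexp
  rw [hshift] at hfinal
  linarith [hfinal]
end

section
/- Let p be a smooth 2π-periodic function with Fourier series p(θ) = a₀ + Σ_{n≥1} (aₙ cos nθ + bₙ sin nθ). Then Ψ := (1/2)∫₀^{2π} (p(θ)p(θ+π) − p'(θ)p'(θ+π)) dθ equals π a₀² − (π/2) Σ_{n≥2} (−1)ⁿ (n²−1)(aₙ² + bₙ²). -/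
open Real MeasureTheory

lemma ic (j : ℤ) : ∫ θ in (0:ℝ)..(2*π), Real.cos (j*θ) = if j = 0 then 2*π else 0 := by
  rcases eq_or_ne j 0 with h | h
  · simp [h]
  · rw [if_neg h]
    have : ∀ x : ℝ, HasDerivAt (fun θ : ℝ => Real.sin (j*θ) / j) (Real.cos (j*x)) x := by
      intro x
      have h1 : HasDerivAt (fun θ : ℝ => Real.sin (j*θ)) (Real.cos (j*x) * j) x := by
        have := (Real.hasDerivAt_sin ((j:ℝ)*x)).comp x ((hasDerivAt_id x).const_mul (j:ℝ))
        simpa [Function.comp_def] using this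
      have := h1.div_const (j:ℝ)
      simpa [mul_div_assoc, mul_div_cancel_right₀, (Int.cast_ne_zero (α := ℝ)).2 h] using this
    rw [intervalIntegral.integral_eq_sub_of_hasDerivAt (fun x _ => this x)
      ((Real.continuous_cos.comp (continuous_const.mul continuous_id)).intervalIntegrable 0 (2*π))]
    have h2 : (j:ℝ) * (2*π) = (2*j : ℤ) * π := by push_cast; ring
    rw [h2, Real.sin_int_mul_pi]
    simp

lemma isin (j : ℤ) : ∫ θ in (0:ℝ)..(2*π), Real.sin (j*θ) = 0 := by
  rcases eq_or_ne j 0 with h | h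
  · simp [h]
  · have : ∀ x : ℝ, HasDerivAt (fun θ : ℝ => -Real.cos (j*θ) / j) (Real.sin (j*x)) x := by
      intro x
      have h1 : HasDerivAt (fun θ : ℝ => Real.cos (j*θ)) (-Real.sin (j*x) * j) x := by
        have := (Real.hasDerivAt_cos ((j:ℝ)*x)).comp x ((hasDerivAt_id x).const_mul (j:ℝ))
        simpa [Function.comp_def] using this
      have := (h1.neg).div_const (j:ℝ)
      have hj : (j:ℝ) ≠ 0 := (Int.cast_ne_zero (α := ℝ)).2 h
      convert this using 1
      · rfl
      · rfl
      · rfl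
      · rw [neg_mul, neg_neg, mul_div_assoc, div_self hj, mul_one]
    rw [intervalIntegral.integral_eq_sub_of_hasDerivAt (fun x _ => this x)
      ((Real.continuous_sin.comp (continuous_const.mul continuous_id)).intervalIntegrable 0 (2*π))]
    have h2 : (j:ℝ) * (2*π) = (2*j : ℤ) * (2*π) / 2 := by push_cast; ring
    have h3 : Real.cos ((j:ℝ) * (2*π)) = 1 := by
      have := Real.cos_int_mul_two_pi j
      simpa using this
    simp [h3]


lemma ccont (c : ℝ) : Continuous (fun θ : ℝ => Real.cos (c*θ)) :=
  Real.continuous_cos.comp (continuous_const.mul continuous_id)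

lemma scont (c : ℝ) : Continuous (fun θ : ℝ => Real.sin (c*θ)) :=
  Real.continuous_sin.comp (continuous_const.mul continuous_id)

lemma occ (m k : ℕ) (hm : 1 ≤ m) (hk : 1 ≤ k) :
    ∫ θ in (0:ℝ)..(2*π), Real.cos (m*θ) * Real.cos (k*θ) = if m = k then π else 0 := by
  have hpt : ∀ θ : ℝ, Real.cos (m*θ) * Real.cos (k*θ)
      = (Real.cos ((((m:ℤ)-k):ℤ)*θ) + Real.cos ((((m:ℤ)+k):ℤ)*θ))/2 := by
    intro θ; push_cast; rw [sub_mul, add_mul, Real.cos_sub, Real.cos_add]; ring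
  simp_rw [hpt]
  rw [intervalIntegral.integral_div,
    intervalIntegral.integral_add ((ccont _).intervalIntegrable _ _) ((ccont _).intervalIntegrable _ _),
    ic, ic]
  have hmk : ((m:ℤ)+k) ≠ 0 := by omega
  rcases eq_or_ne m k with h | h
  · rw [if_pos h, if_pos (by omega), if_neg hmk]; ring
  · rw [if_neg h, if_neg (by omega), if_neg hmk]; ring

lemma oss (m k : ℕ) (hm : 1 ≤ m) (hk : 1 ≤ k) :
    ∫ θ in (0:ℝ)..(2*π), Real.sin (m*θ) * Real.sin (k*θ) = if m = k then π else 0 := by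
  have hpt : ∀ θ : ℝ, Real.sin (m*θ) * Real.sin (k*θ)
      = (Real.cos ((((m:ℤ)-k):ℤ)*θ) - Real.cos ((((m:ℤ)+k):ℤ)*θ))/2 := by
    intro θ; push_cast; rw [sub_mul, add_mul, Real.cos_sub, Real.cos_add]; ring
  simp_rw [hpt]
  rw [intervalIntegral.integral_div,
    intervalIntegral.integral_sub ((ccont _).intervalIntegrable _ _) ((ccont _).intervalIntegrable _ _),
    ic, ic]
  have hmk : ((m:ℤ)+k) ≠ 0 := by omega
  rcases eq_or_ne m k with h | h
  · rw [if_pos h, if_pos (by omega), if_neg hmk]; ring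
  · rw [if_neg h, if_neg (by omega), if_neg hmk]; ring

lemma osc (m k : ℕ) :
    ∫ θ in (0:ℝ)..(2*π), Real.sin (m*θ) * Real.cos (k*θ) = 0 := by
  have hpt : ∀ θ : ℝ, Real.sin (m*θ) * Real.cos (k*θ)
      = (Real.sin ((((m:ℤ)-k):ℤ)*θ) + Real.sin ((((m:ℤ)+k):ℤ)*θ))/2 := by
    intro θ; push_cast; rw [sub_mul, add_mul, Real.sin_sub, Real.sin_add]; ring
  simp_rw [hpt]
  rw [intervalIntegral.integral_div,
    intervalIntegral.integral_add ((scont _).intervalIntegrable _ _) ((scont _).intervalIntegrable _ _),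
    isin, isin]
  ring

lemma ocs (m k : ℕ) :
    ∫ θ in (0:ℝ)..(2*π), Real.cos (m*θ) * Real.sin (k*θ) = 0 := by
  have : ∀ θ : ℝ, Real.cos (m*θ) * Real.sin (k*θ) = Real.sin (k*θ) * Real.cos (m*θ) := fun θ => mul_comm _ _
  simp_rw [this]
  exact osc k m

lemma icn (m : ℕ) (hm : 1 ≤ m) : ∫ θ in (0:ℝ)..(2*π), Real.cos (m*θ) = 0 := by
  have := ic (m:ℤ)
  rw [if_neg (by omega)] at this
  simpa using this

lemma isn (m : ℕ) : ∫ θ in (0:ℝ)..(2*π), Real.sin (m*θ) = 0 := by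
  have := isin (m:ℤ)
  simpa using this


lemma two_pi_pos' : (0:ℝ) < 2*π := by positivity

lemma key_expand (pp : ℝ → ℝ) (hpc : Continuous pp) (a b : ℕ → ℝ)
    (hS : Summable (fun n : ℕ => |a (n+1)| + |b (n+1)|))
    (hfour : ∀ θ : ℝ, pp θ = a 0 +
      ∑' n : ℕ, (a (n+1) * Real.cos ((n+1:ℕ) * θ) + b (n+1) * Real.sin ((n+1:ℕ) * θ)))
    (g : ℝ → ℝ) (hg : Continuous g) :
    HasSum (fun n : ℕ => a (n+1) * (∫ θ in (0:ℝ)..(2*π), g θ * Real.cos ((n+1:ℕ)*θ))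
        + b (n+1) * ∫ θ in (0:ℝ)..(2*π), g θ * Real.sin ((n+1:ℕ)*θ))
      ((∫ θ in (0:ℝ)..(2*π), g θ * pp θ) - a 0 * ∫ θ in (0:ℝ)..(2*π), g θ) := by
  set μ : Measure ℝ := volume.restrict (Set.Ioc (0:ℝ) (2*π)) with hμ
  set F : ℕ → ℝ → ℝ := fun n θ =>
    g θ * (a (n+1) * Real.cos ((n+1:ℕ)*θ) + b (n+1) * Real.sin ((n+1:ℕ)*θ)) with hF
  have hcont : ∀ n, Continuous (F n) := by
    intro n
    exact hg.mul (((continuous_const.mul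
      (Real.continuous_cos.comp (continuous_const.mul continuous_id))).add
      (continuous_const.mul (Real.continuous_sin.comp (continuous_const.mul continuous_id)))))
  have hF_int : ∀ n, Integrable (F n) μ := fun n => (hcont n).integrableOn_Ioc
  obtain ⟨C, hC⟩ := (isCompact_Icc (a := (0:ℝ)) (b := 2*π)).exists_bound_of_continuousOn
    hg.continuousOn
  have hC0 : 0 ≤ C := le_trans (norm_nonneg (g 0)) (hC 0 ⟨le_refl _, two_pi_pos'.le⟩)
  have hbd : ∀ n, ∀ θ ∈ Set.Ioc (0:ℝ) (2*π), ‖F n θ‖ ≤ C * (|a (n+1)| + |b (n+1)|) := by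
    intro n θ hθ
    have h1 : ‖g θ‖ ≤ C := hC θ ⟨hθ.1.le, hθ.2⟩
    have h2 : |a (n+1) * Real.cos ((n+1:ℕ)*θ) + b (n+1) * Real.sin ((n+1:ℕ)*θ)|
        ≤ |a (n+1)| + |b (n+1)| := by
      refine le_trans (abs_add_le _ _) (add_le_add ?_ ?_) <;>
      · rw [abs_mul]
        exact mul_le_of_le_one_right (abs_nonneg _) (by
          first
          | exact Real.abs_cos_le_one _
          | exact Real.abs_sin_le_one _)
    calc ‖F n θ‖ = ‖g θ‖ * |a (n+1) * Real.cos ((n+1:ℕ)*θ) + b (n+1) * Real.sin ((n+1:ℕ)*θ)| := by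
          rw [hF]; exact abs_mul _ _
      _ ≤ C * (|a (n+1)| + |b (n+1)|) :=
          mul_le_mul h1 h2 (abs_nonneg _) hC0
  have hF_sum : Summable (fun n => ∫ θ, ‖F n θ‖ ∂μ) := by
    refine Summable.of_nonneg_of_le (fun n => integral_nonneg (fun θ => norm_nonneg _))
      (fun n => ?_) (hS.mul_left (C * (2*π)))
    have hmono : ∫ θ, ‖F n θ‖ ∂μ ≤ ∫ θ in Set.Ioc (0:ℝ) (2*π),
        (C * (|a (n+1)| + |b (n+1)|)) := by
      rw [hμ]
      refine setIntegral_mono_on (hF_int n).norm ?_ measurableSet_Ioc (hbd n)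
      exact integrableOn_const (by rw [Real.volume_Ioc]; exact ENNReal.ofReal_ne_top)
    refine le_trans hmono ?_
    rw [setIntegral_const, Measure.real, Real.volume_Ioc, smul_eq_mul]
    rw [ENNReal.toReal_ofReal (by nlinarith [Real.pi_pos] : (0:ℝ) ≤ 2*π - 0)]
    ring_nf
    exact le_refl _
  have key := MeasureTheory.hasSum_integral_of_summable_integral_norm hF_int hF_sum
  have h1 : ∀ n : ℕ, (∫ θ, F n θ ∂μ)
      = a (n+1) * (∫ θ in (0:ℝ)..(2*π), g θ * Real.cos ((n+1:ℕ)*θ))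
        + b (n+1) * ∫ θ in (0:ℝ)..(2*π), g θ * Real.sin ((n+1:ℕ)*θ) := by
    intro n
    have e1 : ∀ θ : ℝ, F n θ = a (n+1) * (g θ * Real.cos ((n+1:ℕ)*θ))
        + b (n+1) * (g θ * Real.sin ((n+1:ℕ)*θ)) := by intro θ; rw [hF]; ring
    have : (∫ θ, F n θ ∂μ) = ∫ θ in (0:ℝ)..(2*π), F n θ := by
      rw [intervalIntegral.integral_of_le two_pi_pos'.le, hμ]
    rw [this]
    simp_rw [e1]
    rw [intervalIntegral.integral_add
        (Continuous.intervalIntegrable (by fun_prop) _ _)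
        (Continuous.intervalIntegrable (by fun_prop) _ _),
      intervalIntegral.integral_const_mul, intervalIntegral.integral_const_mul]
  have h2 : (∫ θ, (∑' n, F n θ) ∂μ)
      = (∫ θ in (0:ℝ)..(2*π), g θ * pp θ) - a 0 * ∫ θ in (0:ℝ)..(2*π), g θ := by
    have e2 : ∀ θ : ℝ, (∑' n, F n θ) = g θ * pp θ - a 0 * g θ := by
      intro θ
      rw [hF]
      rw [tsum_mul_left]
      have := hfour θ
      have h3 : (∑' n : ℕ, (a (n+1) * Real.cos ((n+1:ℕ)*θ) + b (n+1) * Real.sin ((n+1:ℕ)*θ)))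
          = pp θ - a 0 := by rw [this]; ring
      rw [h3]; ring
    simp_rw [e2]
    rw [← intervalIntegral.integral_of_le two_pi_pos'.le]
    rw [intervalIntegral.integral_sub (f := fun x => g x * pp x) (g := fun x => a 0 * g x) ((hg.mul hpc).intervalIntegrable _ _)
      ((continuous_const.mul hg).intervalIntegrable _ _),
      intervalIntegral.integral_const_mul]
  rw [h2] at key
  simp only [h1] at key
  exact key


lemma summ (a b : ℕ → ℝ)
    (hsum : Summable (fun n : ℕ => ((n : ℝ) ^ 2 - 1) * (a n ^ 2 + b n ^ 2))) :
    Summable (fun n : ℕ => |a (n+1)| + |b (n+1)|) ∧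
    Summable (fun n : ℕ => ((n+1:ℕ):ℝ)^2 * (a (n+1)^2 + b (n+1)^2)) := by
  have h1 : Summable (fun n : ℕ => (((n+2:ℕ):ℝ)^2 - 1) * (a (n+2)^2 + b (n+2)^2)) := by
    exact_mod_cast (summable_nat_add_iff
      (f := fun n : ℕ => ((n : ℝ) ^ 2 - 1) * (a n ^ 2 + b n ^ 2)) 2).2 hsum
  have h2 : Summable (fun n : ℕ => a (n+2)^2 + b (n+2)^2) := by
    refine Summable.of_nonneg_of_le (fun n => by positivity) (fun n => ?_) h1
    have hge : (1:ℝ) ≤ ((n+2:ℕ):ℝ)^2 - 1 := by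
      have : (2:ℝ) ≤ ((n+2:ℕ):ℝ) := by exact_mod_cast Nat.le_add_left 2 n
      nlinarith
    exact le_mul_of_one_le_left (by positivity) hge
  have h3 : Summable (fun n : ℕ => ((n+2:ℕ):ℝ)^2 * (a (n+2)^2 + b (n+2)^2)) := by
    refine (h1.add h2).congr (fun n => ?_)
    push_cast; ring
  have h4 : Summable (fun n : ℕ => ((n+1:ℕ):ℝ)^2 * (a (n+1)^2 + b (n+1)^2)) := by
    refine (summable_nat_add_iff
      (f := fun m : ℕ => ((m+1:ℕ):ℝ)^2 * (a (m+1)^2 + b (m+1)^2)) 1).1 ?_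
    exact_mod_cast h3
  refine ⟨?_, h4⟩
  have hodd : Summable (fun n : ℕ => 1/((n+1:ℕ):ℝ)^2) := by
    have : Summable (fun n : ℕ => 1/((n:ℕ):ℝ)^2) := by
      rw [Real.summable_one_div_nat_pow]; omega
    exact_mod_cast (summable_nat_add_iff (f := fun n : ℕ => 1/((n:ℕ):ℝ)^2) 1).2 this
  refine Summable.of_nonneg_of_le (fun n => by positivity) (fun n => ?_)
    (((h4.div_const 2).add hodd))
  set k : ℝ := ((n+1:ℕ):ℝ) with hkdef
  have hk1 : (1:ℝ) ≤ k := by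
    rw [hkdef]; exact_mod_cast Nat.succ_le_succ (Nat.zero_le n)
  have hk0 : (0:ℝ) < k := by linarith
  have hkk : k * (1/k) = 1 := by field_simp
  have hq : (1/k)^2 = 1/k^2 := by rw [one_div, one_div, inv_pow]
  have amgm : ∀ x : ℝ, |x| ≤ (k^2 * x^2 + 1/k^2)/2 := by
    intro x
    have h1 : (k*|x| - 1/k)^2 = k^2*|x|^2 - 2*(k*(1/k))*|x| + (1/k)^2 := by ring
    rw [hkk, sq_abs, hq] at h1
    have h2 : (0:ℝ) ≤ (k*|x| - 1/k)^2 := sq_nonneg _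
    rw [h1] at h2
    linarith
  have hA := amgm (a (n+1))
  have hB := amgm (b (n+1))
  have : (k^2 * a (n+1)^2 + 1/k^2)/2 + (k^2 * b (n+1)^2 + 1/k^2)/2
      = k^2 * (a (n+1)^2 + b (n+1)^2)/2 + 1/k^2 := by ring
  calc |a (n+1)| + |b (n+1)| ≤ _ := add_le_add hA hB
    _ = k^2 * (a (n+1)^2 + b (n+1)^2)/2 + 1/k^2 := this

lemma coeff_cos (pp : ℝ → ℝ) (hpc : Continuous pp) (a b : ℕ → ℝ)
    (hS : Summable (fun n : ℕ => |a (n+1)| + |b (n+1)|))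
    (hfour : ∀ θ : ℝ, pp θ = a 0 +
      ∑' n : ℕ, (a (n+1) * Real.cos ((n+1:ℕ) * θ) + b (n+1) * Real.sin ((n+1:ℕ) * θ)))
    (k : ℕ) (hk : 1 ≤ k) :
    ∫ θ in (0:ℝ)..(2*π), Real.cos (k*θ) * pp θ = π * a k := by
  have H := key_expand pp hpc a b hS hfour (fun θ => Real.cos (k*θ))
    (Real.continuous_cos.comp (continuous_const.mul continuous_id))
  have H2 : (fun n : ℕ => a (n+1) * (∫ θ in (0:ℝ)..(2*π), Real.cos (k*θ) * Real.cos ((n+1:ℕ)*θ))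
        + b (n+1) * ∫ θ in (0:ℝ)..(2*π), Real.cos (k*θ) * Real.sin ((n+1:ℕ)*θ))
      = fun n : ℕ => if n = k-1 then π * a k else 0 := by
    funext n
    rw [occ k (n+1) hk (Nat.le_add_left 1 n), ocs k (n+1)]
    rcases eq_or_ne k (n+1) with h | h
    · rw [if_pos h, if_pos (by omega)]
      rw [← h]; ring
    · rw [if_neg h, if_neg (by omega)]; ring
  rw [H2] at H
  have H3 := (hasSum_ite_eq (k-1) (π * a k)).unique H
  rw [icn k hk] at H3
  linarith

lemma coeff_sin (pp : ℝ → ℝ) (hpc : Continuous pp) (a b : ℕ → ℝ)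
    (hS : Summable (fun n : ℕ => |a (n+1)| + |b (n+1)|))
    (hfour : ∀ θ : ℝ, pp θ = a 0 +
      ∑' n : ℕ, (a (n+1) * Real.cos ((n+1:ℕ) * θ) + b (n+1) * Real.sin ((n+1:ℕ) * θ)))
    (k : ℕ) (hk : 1 ≤ k) :
    ∫ θ in (0:ℝ)..(2*π), Real.sin (k*θ) * pp θ = π * b k := by
  have H := key_expand pp hpc a b hS hfour (fun θ => Real.sin (k*θ))
    (Real.continuous_sin.comp (continuous_const.mul continuous_id))
  have H2 : (fun n : ℕ => a (n+1) * (∫ θ in (0:ℝ)..(2*π), Real.sin (k*θ) * Real.cos ((n+1:ℕ)*θ))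
        + b (n+1) * ∫ θ in (0:ℝ)..(2*π), Real.sin (k*θ) * Real.sin ((n+1:ℕ)*θ))
      = fun n : ℕ => if n = k-1 then π * b k else 0 := by
    funext n
    rw [oss k (n+1) hk (Nat.le_add_left 1 n), osc k (n+1)]
    rcases eq_or_ne k (n+1) with h | h
    · rw [if_pos h, if_pos (by omega)]
      rw [← h]; ring
    · rw [if_neg h, if_neg (by omega)]; ring
  rw [H2] at H
  have H3 := (hasSum_ite_eq (k-1) (π * b k)).unique H
  rw [isn k] at H3
  linarith

lemma coeff_one (pp : ℝ → ℝ) (hpc : Continuous pp) (a b : ℕ → ℝ)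
    (hS : Summable (fun n : ℕ => |a (n+1)| + |b (n+1)|))
    (hfour : ∀ θ : ℝ, pp θ = a 0 +
      ∑' n : ℕ, (a (n+1) * Real.cos ((n+1:ℕ) * θ) + b (n+1) * Real.sin ((n+1:ℕ) * θ))) :
    ∫ θ in (0:ℝ)..(2*π), pp θ = 2 * π * a 0 := by
  have H := key_expand pp hpc a b hS hfour (fun _ => (1:ℝ)) continuous_const
  have H2 : (fun n : ℕ => a (n+1) * (∫ θ in (0:ℝ)..(2*π), (1:ℝ) * Real.cos ((n+1:ℕ)*θ))
        + b (n+1) * ∫ θ in (0:ℝ)..(2*π), (1:ℝ) * Real.sin ((n+1:ℕ)*θ))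
      = fun _ : ℕ => (0:ℝ) := by
    funext n
    simp_rw [one_mul]
    rw [icn (n+1) (Nat.le_add_left 1 n), isn (n+1)]
    ring
  rw [H2] at H
  have H3 := hasSum_zero.unique H
  simp only [one_mul] at H3
  have hI : ∫ θ in (0:ℝ)..(2*π), (1:ℝ) = 2*π := by simp
  rw [hI] at H3
  linarith


lemma coskpi (k : ℕ) : Real.cos (k*π) = (-1:ℝ)^k := by
  have := Real.cos_nat_mul_pi_sub 0 k
  simpa using this

lemma sink2pi (k : ℕ) : Real.sin ((k:ℝ)*(2*π)) = 0 := by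
  have h : (k:ℝ)*(2*π) = ((2*k : ℕ):ℝ)*π := by push_cast; ring
  rw [h, Real.sin_nat_mul_pi]

lemma shift_one (f : ℝ → ℝ) (hper : Function.Periodic f (2*π)) :
    ∫ θ in (0:ℝ)..(2*π), f (θ+π) = ∫ θ in (0:ℝ)..(2*π), f θ := by
  rw [intervalIntegral.integral_comp_add_right f π]
  have h1 : (0:ℝ)+π = π := by ring
  have h2 : 2*π+π = π+2*π := by ring
  rw [h1, h2]
  have := hper.intervalIntegral_add_eq π 0
  rw [this]
  norm_num

lemma shift_cos (f : ℝ → ℝ) (hper : Function.Periodic f (2*π)) (k : ℕ) :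
    ∫ θ in (0:ℝ)..(2*π), f (θ+π) * Real.cos (k*θ)
      = (-1:ℝ)^k * ∫ θ in (0:ℝ)..(2*π), Real.cos (k*θ) * f θ := by
  set F : ℝ → ℝ := fun u => f u * Real.cos (k*(u - π)) with hF
  have e1 : ∀ θ : ℝ, f (θ+π) * Real.cos (k*θ) = F (θ+π) := by
    intro θ; rw [hF]; simp [add_sub_cancel_right]
  simp_rw [e1]
  rw [intervalIntegral.integral_comp_add_right F π]
  have hFper : Function.Periodic F (2*π) := by
    intro u
    rw [hF]
    simp only
    rw [hper u]
    congr 1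
    have h3 : (k:ℝ)*(u + 2*π - π) = (k:ℝ)*(u-π) + (k:ℕ)*(2*π) := by push_cast; ring
    rw [h3, Real.cos_add, Real.cos_nat_mul_two_pi, sink2pi]
    ring
  have h1 : (0:ℝ)+π = π := by ring
  have h2 : 2*π+π = π+2*π := by ring
  rw [h1, h2, hFper.intervalIntegral_add_eq π 0]
  have h4 : (0:ℝ)+2*π = 2*π := by ring
  rw [h4]
  have e2 : ∀ u : ℝ, F u = (-1:ℝ)^k * (Real.cos (k*u) * f u) := by
    intro u
    rw [hF]
    simp only
    have h5 : (k:ℝ)*(u-π) = (k:ℝ)*u - (k:ℝ)*π := by ring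
    rw [h5, Real.cos_sub, coskpi, Real.sin_nat_mul_pi]
    ring
  simp_rw [e2]
  rw [intervalIntegral.integral_const_mul]

lemma shift_sin (f : ℝ → ℝ) (hper : Function.Periodic f (2*π)) (k : ℕ) :
    ∫ θ in (0:ℝ)..(2*π), f (θ+π) * Real.sin (k*θ)
      = (-1:ℝ)^k * ∫ θ in (0:ℝ)..(2*π), Real.sin (k*θ) * f θ := by
  set F : ℝ → ℝ := fun u => f u * Real.sin (k*(u - π)) with hF
  have e1 : ∀ θ : ℝ, f (θ+π) * Real.sin (k*θ) = F (θ+π) := by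
    intro θ; rw [hF]; simp [add_sub_cancel_right]
  simp_rw [e1]
  rw [intervalIntegral.integral_comp_add_right F π]
  have hFper : Function.Periodic F (2*π) := by
    intro u
    rw [hF]
    simp only
    rw [hper u]
    congr 1
    have h3 : (k:ℝ)*(u + 2*π - π) = (k:ℝ)*(u-π) + (k:ℕ)*(2*π) := by push_cast; ring
    rw [h3, Real.sin_add, Real.cos_nat_mul_two_pi, sink2pi]
    ring
  have h1 : (0:ℝ)+π = π := by ring
  have h2 : 2*π+π = π+2*π := by ring
  rw [h1, h2, hFper.intervalIntegral_add_eq π 0]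
  have h4 : (0:ℝ)+2*π = 2*π := by ring
  rw [h4]
  have e2 : ∀ u : ℝ, F u = (-1:ℝ)^k * (Real.sin (k*u) * f u) := by
    intro u
    rw [hF]
    simp only
    have h5 : (k:ℝ)*(u-π) = (k:ℝ)*u - (k:ℝ)*π := by ring
    rw [h5, Real.sin_sub, coskpi, Real.sin_nat_mul_pi]
    ring
  simp_rw [e2]
  rw [intervalIntegral.integral_const_mul]

lemma swap_shift (f g : ℝ → ℝ) (hfp : Function.Periodic f (2*π))
    (hgp : Function.Periodic g (2*π)) :
    ∫ θ in (0:ℝ)..(2*π), f θ * g (θ+π) = ∫ θ in (0:ℝ)..(2*π), f (θ+π) * g θ := by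
  set F : ℝ → ℝ := fun u => f (u - π) * g u with hF
  have e1 : ∀ θ : ℝ, f θ * g (θ+π) = F (θ+π) := by
    intro θ
    show f θ * g (θ+π) = f (θ+π-π) * g (θ+π)
    rw [add_sub_cancel_right]
  simp_rw [e1]
  rw [intervalIntegral.integral_comp_add_right F π]
  have hFper : Function.Periodic F (2*π) := by
    intro u
    rw [hF]
    simp only
    rw [hgp u]
    have h := hfp (u-π)
    rw [show u-π+2*π = u+2*π-π by ring] at h
    rw [h]
  have h1 : (0:ℝ)+π = π := by ring
  have h2 : 2*π+π = π+2*π := by ring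
  rw [h1, h2, hFper.intervalIntegral_add_eq π 0]
  have h4 : (0:ℝ)+2*π = 2*π := by ring
  rw [h4]
  have e2 : ∀ u : ℝ, F u = f (u+π) * g u := by
    intro u
    rw [hF]
    simp only
    have := hfp (u - π)
    rw [show u - π + 2*π = u + π by ring] at this
    rw [← this]
  simp_rw [e2]


lemma hdc (k : ℕ) (x : ℝ) : HasDerivAt (fun θ : ℝ => Real.cos (k*θ)) (-(k * Real.sin (k*x))) x := by
  have := (Real.hasDerivAt_cos ((k:ℝ)*x)).comp x ((hasDerivAt_id x).const_mul (k:ℝ))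
  have h2 : -Real.sin ((k:ℝ)*x) * ((k:ℝ)*1) = -(k * Real.sin (k*x)) := by ring
  rw [h2] at this
  exact this

lemma hds (k : ℕ) (x : ℝ) : HasDerivAt (fun θ : ℝ => Real.sin (k*θ)) (k * Real.cos (k*x)) x := by
  have := (Real.hasDerivAt_sin ((k:ℝ)*x)).comp x ((hasDerivAt_id x).const_mul (k:ℝ))
  have h2 : Real.cos ((k:ℝ)*x) * ((k:ℝ)*1) = (k * Real.cos (k*x)) := by ring
  rw [h2] at this
  exact this

/-- IBP: `∫ cos(kθ) g θ = k ∫ sin(kθ) f θ` when `g = f'` and `f(2π)=f(0)`. -/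
lemma ibpC (f g : ℝ → ℝ) (hd : ∀ x : ℝ, HasDerivAt f (g x) x) (hfc : Continuous f)
    (hgc : Continuous g) (hb : f (2*π) = f 0) (k : ℕ) :
    ∫ θ in (0:ℝ)..(2*π), Real.cos (k*θ) * g θ
      = k * ∫ θ in (0:ℝ)..(2*π), Real.sin (k*θ) * f θ := by
  rw [intervalIntegral.integral_mul_deriv_eq_deriv_mul
    (u := fun θ : ℝ => Real.cos (k*θ)) (u' := fun x => -(k * Real.sin (k*x)))
    (v := f) (v' := g)
    (fun x _ => hdc k x) (fun x _ => hd x)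
    (Continuous.intervalIntegrable (by fun_prop) _ _)
    (hgc.intervalIntegrable _ _)]
  rw [Real.cos_nat_mul_two_pi, hb]
  have e : ∀ θ : ℝ, -(↑k * Real.sin (k*θ)) * f θ = -(k * (Real.sin (k*θ) * f θ)) := by
    intro θ; ring
  simp_rw [e]
  rw [intervalIntegral.integral_neg, intervalIntegral.integral_const_mul]
  simp

/-- IBP: `∫ sin(kθ) g θ = -k ∫ cos(kθ) f θ` when `g = f'`. -/
lemma ibpS (f g : ℝ → ℝ) (hd : ∀ x : ℝ, HasDerivAt f (g x) x) (hfc : Continuous f)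
    (hgc : Continuous g) (k : ℕ) :
    ∫ θ in (0:ℝ)..(2*π), Real.sin (k*θ) * g θ
      = -(k : ℝ) * ∫ θ in (0:ℝ)..(2*π), Real.cos (k*θ) * f θ := by
  rw [intervalIntegral.integral_mul_deriv_eq_deriv_mul
    (u := fun θ : ℝ => Real.sin (k*θ)) (u' := fun x => (k * Real.cos (k*x)))
    (v := f) (v' := g)
    (fun x _ => hds k x) (fun x _ => hd x)
    (Continuous.intervalIntegrable (by fun_prop) _ _)
    (hgc.intervalIntegrable _ _)]
  have h1 : Real.sin ((k:ℝ)*(2*π)) = 0 := by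
    rw [show (k:ℝ)*(2*π) = ((2*k : ℕ):ℝ)*π by push_cast; ring, Real.sin_nat_mul_pi]
  rw [h1]
  have e : ∀ θ : ℝ, (↑k * Real.cos (k*θ)) * f θ = k * (Real.cos (k*θ) * f θ) := by
    intro θ; ring
  simp_rw [e]
  rw [intervalIntegral.integral_const_mul]
  simp

/-- Fourier formula for `Ψ = (1/2)∫₀^{2π}(p(θ)p(θ+π) - p'(θ)p'(θ+π))dθ`. -/
theorem psi_fourier (p : ℝ → ℝ) (hp : ContDiff ℝ (⊤ : ℕ∞) p)
    (hper : Function.Periodic p (2 * π))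
    (a b : ℕ → ℝ)
    (hsum : Summable (fun n : ℕ => ((n : ℝ) ^ 2 - 1) * (a n ^ 2 + b n ^ 2)))
    (hfour : ∀ θ : ℝ, p θ = a 0 +
      ∑' n : ℕ, (a (n+1) * cos ((n+1 : ℕ) * θ) + b (n+1) * sin ((n+1 : ℕ) * θ))) :
    (1/2) * ∫ θ in (0:ℝ)..(2 * π),
        (p θ * p (θ + π) - deriv p θ * deriv p (θ + π))
      = π * a 0 ^ 2 -
        (π/2) * ∑' n : ℕ,
          (-1 : ℝ) ^ (n+2) * (((n+2 : ℕ) : ℝ) ^ 2 - 1) * (a (n+2) ^ 2 + b (n+2) ^ 2) := by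
  have hπ : (π:ℝ) ≠ 0 := Real.pi_ne_zero
  obtain ⟨S1, _S2⟩ := summ a b hsum
  have hpi : ContDiff ℝ ((⊤:ℕ∞) : WithTop ℕ∞) p := hp.of_le (by simp)
  have hdiffp : Differentiable ℝ p := hpi.differentiable (by simp)
  have hP1smooth : ContDiff ℝ ((⊤:ℕ∞) : WithTop ℕ∞) (deriv p) :=
    (contDiff_infty_iff_deriv.1 hpi).2
  set P1 : ℝ → ℝ := deriv p with hP1def
  set P2 : ℝ → ℝ := deriv P1 with hP2def
  have hdiffP1 : Differentiable ℝ P1 := hP1smooth.differentiable (by simp)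
  have hc0 : Continuous p := hpi.continuous
  have hc1 : Continuous P1 := hP1smooth.continuous
  have hc2 : Continuous P2 := (contDiff_infty_iff_deriv.1 hP1smooth).2.continuous
  have hd1 : ∀ x, HasDerivAt p (P1 x) x := fun x => (hdiffp x).hasDerivAt
  have hd2 : ∀ x, HasDerivAt P1 (P2 x) x := fun x => (hdiffP1 x).hasDerivAt
  have hperP1 : Function.Periodic P1 (2*π) := by
    intro x
    have hpe : (fun y => p (y + 2*π)) = p := funext (fun y => hper y)
    calc P1 (x + 2*π) = deriv (fun y => p (y + 2*π)) x := (deriv_comp_add_const _ _ _).symm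
      _ = P1 x := by rw [hpe]
  have hperP2 : Function.Periodic P2 (2*π) := by
    intro x
    have hpe : (fun y => P1 (y + 2*π)) = P1 := funext (fun y => hperP1 y)
    calc P2 (x + 2*π) = deriv (fun y => P1 (y + 2*π)) x := (deriv_comp_add_const _ _ _).symm
      _ = P2 x := by rw [hpe]
  have hb0 : p (2*π) = p 0 := by have := hper 0; simpa using this
  have hb1 : P1 (2*π) = P1 0 := by have := hperP1 0; simpa using this
  have Acos : ∀ k : ℕ, 1 ≤ k → ∫ θ in (0:ℝ)..(2*π), Real.cos (k*θ) * p θ = π * a k :=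
    coeff_cos p hc0 a b S1 hfour
  have Asin : ∀ k : ℕ, 1 ≤ k → ∫ θ in (0:ℝ)..(2*π), Real.sin (k*θ) * p θ = π * b k :=
    coeff_sin p hc0 a b S1 hfour
  have A0 : ∫ θ in (0:ℝ)..(2*π), p θ = 2 * π * a 0 := coeff_one p hc0 a b S1 hfour
  have Ccos : ∀ k : ℕ, 1 ≤ k →
      ∫ θ in (0:ℝ)..(2*π), Real.cos (k*θ) * P2 θ = -(k:ℝ)^2 * (π * a k) := by
    intro k hk
    rw [ibpC P1 P2 hd2 hc1 hc2 hb1 k, ibpS p P1 hd1 hc0 hc1 k, Acos k hk]; ring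
  have Csin : ∀ k : ℕ, 1 ≤ k →
      ∫ θ in (0:ℝ)..(2*π), Real.sin (k*θ) * P2 θ = -(k:ℝ)^2 * (π * b k) := by
    intro k hk
    rw [ibpS P1 P2 hd2 hc1 hc2 k, ibpC p P1 hd1 hc0 hc1 hb0 k, Asin k hk]; ring
  have C0 : ∫ θ in (0:ℝ)..(2*π), P2 θ = 0 := by
    have : ∫ θ in (0:ℝ)..(2*π), deriv P1 θ = P1 (2*π) - P1 0 :=
      intervalIntegral.integral_deriv_eq_sub (fun x _ => hdiffP1 x)
        (hc2.intervalIntegrable _ _)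
    rw [hP2def, this, hb1, sub_self]
  -- first expansion: ∫ p(θ+π) p(θ)
  have H1 := key_expand p hc0 a b S1 hfour (fun θ => p (θ+π))
    (hc0.comp (continuous_id.add continuous_const))
  have e1 : (fun n : ℕ => a (n+1) * (∫ θ in (0:ℝ)..(2*π), p (θ+π) * Real.cos ((n+1:ℕ)*θ))
        + b (n+1) * ∫ θ in (0:ℝ)..(2*π), p (θ+π) * Real.sin ((n+1:ℕ)*θ))
      = fun n : ℕ => (-1:ℝ)^(n+1) * π * (1 - ((n+1:ℕ):ℝ)^2) * (a (n+1)^2 + b (n+1)^2)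
        + (-1:ℝ)^(n+1) * π * ((n+1:ℕ):ℝ)^2 * (a (n+1)^2 + b (n+1)^2) := by
    funext n
    rw [shift_cos p hper (n+1), shift_sin p hper (n+1),
      Acos (n+1) (Nat.le_add_left 1 n), Asin (n+1) (Nat.le_add_left 1 n)]
    ring
  rw [e1, shift_one p hper, A0] at H1
  -- second expansion: ∫ P2(θ+π) p(θ)
  have H2 := key_expand p hc0 a b S1 hfour (fun θ => P2 (θ+π))
    (hc2.comp (continuous_id.add continuous_const))
  have e2 : (fun n : ℕ => a (n+1) * (∫ θ in (0:ℝ)..(2*π), P2 (θ+π) * Real.cos ((n+1:ℕ)*θ))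
        + b (n+1) * ∫ θ in (0:ℝ)..(2*π), P2 (θ+π) * Real.sin ((n+1:ℕ)*θ))
      = fun n : ℕ => -((-1:ℝ)^(n+1) * π * ((n+1:ℕ):ℝ)^2 * (a (n+1)^2 + b (n+1)^2)) := by
    funext n
    rw [shift_cos P2 hperP2 (n+1), shift_sin P2 hperP2 (n+1),
      Ccos (n+1) (Nat.le_add_left 1 n), Csin (n+1) (Nat.le_add_left 1 n)]
    ring
  rw [e2, shift_one P2 hperP2, C0, mul_zero, sub_zero] at H2
  -- combined HasSum
  set I1 : ℝ := ∫ θ in (0:ℝ)..(2*π), p (θ+π) * p θ with hI1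
  set I2 : ℝ := ∫ θ in (0:ℝ)..(2*π), P2 (θ+π) * p θ with hI2
  have Hadd := H1.add H2
  have e3 : (fun n : ℕ =>
        ((-1:ℝ)^(n+1) * π * (1 - ((n+1:ℕ):ℝ)^2) * (a (n+1)^2 + b (n+1)^2)
          + (-1:ℝ)^(n+1) * π * ((n+1:ℕ):ℝ)^2 * (a (n+1)^2 + b (n+1)^2))
        + -((-1:ℝ)^(n+1) * π * ((n+1:ℕ):ℝ)^2 * (a (n+1)^2 + b (n+1)^2)))
      = fun n : ℕ => (-1:ℝ)^(n+1) * π * (1 - ((n+1:ℕ):ℝ)^2) * (a (n+1)^2 + b (n+1)^2) := by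
    funext n; ring
  rw [e3] at Hadd
  set V : ℝ := (I1 - a 0 * (2 * π * a 0)) + I2 with hV
  have Hsh : HasSum (fun n : ℕ =>
      (-1:ℝ)^(n+1+1) * π * (1 - ((n+1+1:ℕ):ℝ)^2) * (a (n+1+1)^2 + b (n+1+1)^2)) V := by
    refine (hasSum_nat_add_iff
      (f := fun n : ℕ => (-1:ℝ)^(n+1) * π * (1 - ((n+1:ℕ):ℝ)^2) * (a (n+1)^2 + b (n+1)^2))
      1).2 ?_
    rw [Finset.sum_range_one]
    have h0 : (-1:ℝ)^(0+1) * π * (1 - ((0+1:ℕ):ℝ)^2) * (a (0+1)^2 + b (0+1)^2) = 0 := by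
      norm_num
    rw [h0, add_zero]
    exact Hadd
  have e4 : (fun n : ℕ =>
        (-1:ℝ)^(n+1+1) * π * (1 - ((n+1+1:ℕ):ℝ)^2) * (a (n+1+1)^2 + b (n+1+1)^2))
      = fun n : ℕ => -π * ((-1:ℝ)^(n+2) * (((n+2:ℕ):ℝ)^2 - 1) * (a (n+2)^2 + b (n+2)^2)) := by
    funext n
    rw [show n+1+1 = n+2 from rfl]
    ring
  rw [e4] at Hsh
  have Hs : HasSum (fun n : ℕ =>
      (-1:ℝ)^(n+2) * (((n+2:ℕ):ℝ)^2 - 1) * (a (n+2)^2 + b (n+2)^2)) ((-1/π) * V) := by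
    have h := Hsh.mul_left (-1/π)
    have e5 : (fun n : ℕ => (-1/π) * (-π * ((-1:ℝ)^(n+2) * (((n+2:ℕ):ℝ)^2 - 1)
        * (a (n+2)^2 + b (n+2)^2))))
        = fun n : ℕ => (-1:ℝ)^(n+2) * (((n+2:ℕ):ℝ)^2 - 1) * (a (n+2)^2 + b (n+2)^2) := by
      funext n; field_simp
    rw [e5] at h
    exact h
  have hts := Hs.tsum_eq
  rw [hts]
  have hTsplit : (∫ θ in (0:ℝ)..(2*π), (p θ * p (θ+π) - P1 θ * P1 (θ+π)))
      = (∫ θ in (0:ℝ)..(2*π), p θ * p (θ+π)) - ∫ θ in (0:ℝ)..(2*π), P1 θ * P1 (θ+π) :=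
    intervalIntegral.integral_sub
      ((hc0.mul (hc0.comp (continuous_id.add continuous_const))).intervalIntegrable _ _)
      ((hc1.mul (hc1.comp (continuous_id.add continuous_const))).intervalIntegrable _ _)
  have hI1' : (∫ θ in (0:ℝ)..(2*π), p θ * p (θ+π)) = I1 := by
    rw [hI1]
    apply intervalIntegral.integral_congr
    intro θ _
    exact mul_comm _ _
  have hJ : (∫ θ in (0:ℝ)..(2*π), P1 θ * P1 (θ+π)) = -I2 := by
    have hv : ∀ x ∈ Set.uIcc (0:ℝ) (2*π), HasDerivAt (fun θ => p (θ+π)) (P1 (x+π)) x := by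
      intro x _
      have h := (hd1 (x+π)).comp x ((hasDerivAt_id x).add_const π)
      simpa [Function.comp_def] using h
    rw [intervalIntegral.integral_mul_deriv_eq_deriv_mul (u := P1) (v := fun θ => p (θ+π))
      (u' := P2) (v' := fun θ => P1 (θ+π)) (fun x _ => hd2 x) hv
      (hc2.intervalIntegrable _ _)
      ((hc1.comp (continuous_id.add continuous_const)).intervalIntegrable _ _)]
    rw [hb1, show (2*π+π : ℝ) = π + 2*π by ring, hper π, zero_add]
    rw [swap_shift P2 p hperP2 hper, ← hI2]
    ring
  rw [hTsplit, hI1', hJ, hV]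
  field_simp
  ring
end

section
/- Let M be an oval with support function p, length L_M and enclosed area A_M. Then A_M ≤ Ψ_M ≤ L_M²/(2π) − A_M, where Ψ_M = (1/2)∫₀^{2π} (p(θ)p(θ+π) − p'(θ)p'(θ+π)) dθ. -/
open Real MeasureTheory Set intervalIntegral AddCircle

noncomputable section

lemma parseval_periodic (f : ℝ → ℂ) (hc : Continuous f)
    (hper : Function.Periodic f (2 * π)) :
    haveI : Fact (0 < 2 * π) := ⟨Real.two_pi_pos⟩
    (∑' n : ℤ, ‖fourierCoeff (AddCircle.liftIco (2 * π) 0 f) n‖ ^ 2)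
      = (1 / (2 * π)) * ∫ x in (0:ℝ)..(2 * π), ‖f x‖ ^ 2 := by
  haveI : Fact (0 < 2 * π) := ⟨Real.two_pi_pos⟩
  set F : C(AddCircle (2 * π), ℂ) :=
    ⟨AddCircle.liftIco (2 * π) 0 f,
      AddCircle.liftIco_continuous (by simpa using (hper 0).symm) hc.continuousOn⟩ with hF
  have h1 := tsum_sq_fourierCoeff (ContinuousMap.toLp (E := ℂ) 2 haarAddCircle ℂ F)
  simp_rw [fourierCoeff_toLp] at h1
  have hFc : ⇑F = AddCircle.liftIco (2 * π) 0 f := rfl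
  rw [hFc] at h1
  rw [h1]
  have h2 : (∫ t : AddCircle (2 * π),
      ‖(ContinuousMap.toLp (E := ℂ) 2 haarAddCircle ℂ F) t‖ ^ 2 ∂haarAddCircle)
      = ∫ t : AddCircle (2 * π), ‖F t‖ ^ 2 ∂haarAddCircle := by
    apply MeasureTheory.integral_congr_ae
    filter_upwards [ContinuousMap.coeFn_toLp (p := 2) haarAddCircle (𝕜 := ℂ) F] with t ht
    rw [ht]
  rw [h2]
  have h3 : (∫ x in (0:ℝ)..(0 + 2 * π), ‖F x‖ ^ 2)
      = ∫ t : AddCircle (2 * π), ‖F t‖ ^ 2 :=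
    AddCircle.intervalIntegral_preimage (2 * π) 0 (fun t => ‖F t‖ ^ 2)
  rw [volume_eq_smul_haarAddCircle, MeasureTheory.integral_smul_measure _ _,
    ENNReal.toReal_ofReal Real.two_pi_pos.le, zero_add] at h3
  have h4 : (∫ x in (0:ℝ)..(2 * π), ‖F (↑x)‖ ^ 2) = ∫ x in (0:ℝ)..(2 * π), ‖f x‖ ^ 2 := by
    apply intervalIntegral.integral_congr_ae
    have hae : ∀ᵐ x : ℝ, x ≠ 2 * π := by
      rw [MeasureTheory.ae_iff]
      simpa using measure_singleton (2 * π)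
    filter_upwards [hae] with x hx hmem
    rw [Set.uIoc_of_le Real.two_pi_pos.le] at hmem
    have hx' : x ∈ Ico (0:ℝ) (0 + 2 * π) := by
      constructor
      · linarith [hmem.1]
      · rw [zero_add]; exact lt_of_le_of_ne hmem.2 hx
    rw [hFc, AddCircle.liftIco_coe_apply hx']
  rw [h4] at h3
  rw [h3, smul_eq_mul]
  have h2pi : (2 * π) ≠ 0 := by positivity
  field_simp

lemma summable_sq_fourierCoeff (f : ℝ → ℂ) (hc : Continuous f)
    (hper : Function.Periodic f (2 * π)) :
    haveI : Fact (0 < 2 * π) := ⟨Real.two_pi_pos⟩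
    Summable fun n : ℤ => ‖fourierCoeff (AddCircle.liftIco (2 * π) 0 f) n‖ ^ 2 := by
  haveI : Fact (0 < 2 * π) := ⟨Real.two_pi_pos⟩
  set F : C(AddCircle (2 * π), ℂ) :=
    ⟨AddCircle.liftIco (2 * π) 0 f,
      AddCircle.liftIco_continuous (by simpa using (hper 0).symm) hc.continuousOn⟩ with hF
  have hm := (lp.memℓp ((fourierBasis (T := 2 * π)).repr
      (ContinuousMap.toLp (E := ℂ) 2 haarAddCircle ℂ F)))
  have hs := hm.summable (by norm_num)
  simp_rw [fourierBasis_repr, fourierCoeff_toLp] at hs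
  have hFc : ⇑F = AddCircle.liftIco (2 * π) 0 f := rfl
  rw [hFc] at hs
  convert hs using 2 with n
  norm_num

lemma fourierCoeff_deriv_rel (f : ℝ → ℂ) (hf : ContDiff ℝ (⊤ : ℕ∞) f)
    (hper : Function.Periodic f (2 * π)) (n : ℤ) :
    haveI : Fact (0 < 2 * π) := ⟨Real.two_pi_pos⟩
    fourierCoeff (AddCircle.liftIco (2 * π) 0 (deriv f)) n
      = (Complex.I * n) * fourierCoeff (AddCircle.liftIco (2 * π) 0 f) n := by
  haveI : Fact (0 < 2 * π) := ⟨Real.two_pi_pos⟩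
  have key := fourierCoeff_liftIco_eq (T := 2 * π) (a := 0) f n
  have key' := fourierCoeff_liftIco_eq (T := 2 * π) (a := 0) (deriv f) n
  simp only [zero_add] at key key'
  have hf20 : f (2 * π) = f 0 := by simpa using hper 0
  by_cases hn : n = 0
  · subst hn
    simp only [Int.cast_zero, mul_zero, zero_mul]
    rw [key']
    rw [fourierCoeffOn_eq_integral]
    simp only [neg_zero, fourier_zero, one_smul]
    rw [intervalIntegral.integral_deriv_eq_sub
      (fun x _ => hf.differentiable (by simp) x)
      ((hf.continuous_deriv (by simp)).intervalIntegrable 0 (2 * π))]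
    rw [hf20, sub_self, smul_zero]
  · have h := fourierCoeffOn_of_hasDerivAt (Real.two_pi_pos) hn
      (fun x _ => (hf.differentiable (by simp) x).hasDerivAt)
      ((hf.continuous_deriv (by simp)).intervalIntegrable 0 (2 * π))
    rw [hf20, sub_self, mul_zero, zero_sub] at h
    rw [key, key'] at *
    rw [h]
    have hπ : (π : ℂ) ≠ 0 := Complex.ofReal_ne_zero.mpr Real.pi_ne_zero
    have hnc : (n : ℂ) ≠ 0 := Int.cast_ne_zero.mpr hn
    field_simp
    push_cast
    ring

lemma periodic_deriv' {f : ℝ → ℂ} (hper : Function.Periodic f (2 * π)) :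
    Function.Periodic (deriv f) (2 * π) := by
  intro x
  have h : deriv (fun y => f (y + 2 * π)) x = deriv f (x + 2 * π) := deriv_comp_add_const f _ x
  rw [← h]
  congr 1
  ext y; exact hper y

lemma wirtinger_complex (f : ℝ → ℂ) (hf : ContDiff ℝ (⊤ : ℕ∞) f)
    (hper : Function.Periodic f (2 * π))
    (hmean : (∫ θ in (0:ℝ)..(2 * π), f θ) = 0) :
    (∫ θ in (0:ℝ)..(2 * π), ‖f θ‖ ^ 2) ≤ ∫ θ in (0:ℝ)..(2 * π), ‖deriv f θ‖ ^ 2 := by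
  haveI : Fact (0 < 2 * π) := ⟨Real.two_pi_pos⟩
  have hc : Continuous f := hf.continuous
  have hc' : Continuous (deriv f) := hf.continuous_deriv (by simp)
  have hper' : Function.Periodic (deriv f) (2 * π) := periodic_deriv' hper
  set c : ℤ → ℂ := fun n => fourierCoeff (AddCircle.liftIco (2 * π) 0 f) n with hc_def
  set d : ℤ → ℂ := fun n => fourierCoeff (AddCircle.liftIco (2 * π) 0 (deriv f)) n with hd_def
  have hc0 : c 0 = 0 := by
    have key := fourierCoeff_liftIco_eq (T := 2 * π) (a := 0) f 0
    simp only [zero_add] at key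
    rw [hc_def]
    simp only
    rw [key, fourierCoeffOn_eq_integral]
    simp only [neg_zero, fourier_zero, one_smul]
    rw [hmean, smul_zero]
  have hrel : ∀ n, d n = (Complex.I * n) * c n := fun n => fourierCoeff_deriv_rel f hf hper n
  have hterm : ∀ n : ℤ, ‖c n‖ ^ 2 ≤ ‖d n‖ ^ 2 := by
    intro n
    rw [hrel n]
    by_cases hn : n = 0
    · subst hn; rw [hc0]; simp
    · have h1 : ‖Complex.I * n * c n‖ ^ 2 = (n : ℝ) ^ 2 * ‖c n‖ ^ 2 := by
        rw [norm_mul, norm_mul, Complex.norm_I, one_mul]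
        rw [mul_pow]
        congr 1
        rw [Complex.norm_intCast, sq_abs]
      rw [h1]
      have : (1:ℝ) ≤ (n:ℝ)^2 := by
        have : (1:ℝ) ≤ |(n:ℝ)| := by
          rw [← Int.cast_abs]
          exact_mod_cast Int.one_le_abs (by exact_mod_cast hn)
        nlinarith [this, sq_abs ((n:ℝ))]
      nlinarith [sq_nonneg ‖c n‖, norm_nonneg (c n)]
  have hsum := Summable.tsum_le_tsum hterm (summable_sq_fourierCoeff f hc hper)
    (summable_sq_fourierCoeff (deriv f) hc' hper')
  rw [parseval_periodic f hc hper, parseval_periodic (deriv f) hc' hper'] at hsum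
  have h2pi : 0 < 1 / (2 * π) := by positivity
  exact le_of_mul_le_mul_left (by linarith [hsum]) h2pi

lemma wirtinger_real (f : ℝ → ℝ) (hf : ContDiff ℝ (⊤ : ℕ∞) f)
    (hper : Function.Periodic f (2 * π))
    (hmean : (∫ θ in (0:ℝ)..(2 * π), f θ) = 0) :
    (∫ θ in (0:ℝ)..(2 * π), f θ ^ 2) ≤ ∫ θ in (0:ℝ)..(2 * π), (deriv f θ) ^ 2 := by
  have hg : ContDiff ℝ (⊤ : ℕ∞) (fun x => (f x : ℂ)) := Complex.ofRealCLM.contDiff.comp hf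
  have hgper : Function.Periodic (fun x => (f x : ℂ)) (2 * π) := fun x => by
    simp [hper x]
  have hgd : ∀ x, deriv (fun y => (f y : ℂ)) x = Complex.ofReal (deriv f x) := fun x =>
    (((hf.differentiable (by simp) x).hasDerivAt).ofReal_comp).deriv
  have hgm : (∫ θ in (0:ℝ)..(2 * π), ((f θ : ℂ))) = 0 := by
    rw [intervalIntegral.integral_ofReal, hmean]; simp
  have key := wirtinger_complex _ hg hgper hgm
  have h1 : (∫ θ in (0:ℝ)..(2 * π), ‖(f θ : ℂ)‖ ^ 2) = ∫ θ in (0:ℝ)..(2 * π), f θ ^ 2 := by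
    apply intervalIntegral.integral_congr
    intro θ _
    simp [Complex.norm_real, Real.norm_eq_abs, sq_abs]
  have h2 : (∫ θ in (0:ℝ)..(2 * π), ‖deriv (fun y => (f y : ℂ)) θ‖ ^ 2)
      = ∫ θ in (0:ℝ)..(2 * π), (deriv f θ) ^ 2 := by
    apply intervalIntegral.integral_congr
    intro θ _
    simp only []
    rw [hgd θ, Complex.norm_real, Real.norm_eq_abs, sq_abs]
  rw [h1, h2] at key
  exact key

lemma shift_integral (g : ℝ → ℝ) (hg : Function.Periodic g (2 * π)) :
    (∫ x in (0:ℝ)..(2 * π), g (x + π)) = ∫ x in (0:ℝ)..(2 * π), g x := by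
  rw [intervalIntegral.integral_comp_add_right g π, zero_add,
    show 2 * π + π = π + 2 * π by ring, hg.intervalIntegral_add_eq π 0, zero_add]

lemma periodic_deriv_real {f : ℝ → ℝ} (hper : Function.Periodic f (2 * π)) :
    Function.Periodic (deriv f) (2 * π) := by
  intro x
  have h : deriv (fun y => f (y + 2 * π)) x = deriv f (x + 2 * π) := deriv_comp_add_const f _ x
  rw [← h]; congr 1; ext y; exact hper y

/-- Bounds for `Ψ_M`: `A_M ≤ Ψ_M ≤ L_M²/(2π) - A_M`. -/
theorem psi_bounds (p : ℝ → ℝ) (hp : ContDiff ℝ (⊤ : ℕ∞) p)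
    (hper : Function.Periodic p (2 * π))
    (hpos : ∀ θ : ℝ, 0 < p θ + deriv (deriv p) θ)
    (L A Ψ : ℝ)
    (hL : L = ∫ θ in (0:ℝ)..(2 * π), p θ)
    (hA : A = (1/2) * ∫ θ in (0:ℝ)..(2 * π), (p θ ^ 2 - deriv p θ ^ 2))
    (hΨ : Ψ = (1/2) * ∫ θ in (0:ℝ)..(2 * π),
        (p θ * p (θ + π) - deriv p θ * deriv p (θ + π))) :
    A ≤ Ψ ∧ Ψ ≤ L ^ 2 / (2 * π) - A := by
  have hπ := Real.pi_pos
  have hc : Continuous p := hp.continuous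
  have hc' : Continuous (deriv p) := hp.continuous_deriv (by simp)
  have hper' : Function.Periodic (deriv p) (2 * π) := periodic_deriv_real hper
  have hcs : Continuous (fun θ => p (θ + π)) := hc.comp (continuous_id.add continuous_const)
  have hcs' : Continuous (fun θ => deriv p (θ + π)) := hc'.comp (continuous_id.add continuous_const)
  have hshift_smooth : ContDiff ℝ (⊤ : ℕ∞) (fun θ => p (θ + π)) :=
    hp.comp (contDiff_id.add contDiff_const)
  have hdshift : ∀ θ : ℝ, deriv (fun t => p (t + π)) θ = deriv p (θ + π) :=
    fun θ => deriv_comp_add_const p π θ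
  -- the odd part q
  set q : ℝ → ℝ := fun θ => p θ - p (θ + π) with hq_def
  have hqsmooth : ContDiff ℝ (⊤ : ℕ∞) q := hp.sub hshift_smooth
  have hqper : Function.Periodic q (2 * π) := by
    intro x
    simp only [hq_def]
    rw [hper x, show x + 2 * π + π = (x + π) + 2 * π by ring, hper (x + π)]
  have hqd : ∀ θ, deriv q θ = deriv p θ - deriv p (θ + π) := by
    intro θ
    rw [hq_def]
    rw [deriv_fun_sub (hp.differentiable (by simp) θ) (hshift_smooth.differentiable (by simp) θ)]
    rw [hdshift θ]
  have hmean_q : (∫ θ in (0:ℝ)..(2 * π), q θ) = 0 := by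
    simp only [hq_def]
    rw [intervalIntegral.integral_sub (hc.intervalIntegrable _ _) (hcs.intervalIntegrable _ _),
      shift_integral p hper, sub_self]
  have hq2 : (∫ θ in (0:ℝ)..(2 * π), q θ ^ 2)
      = 2 * (∫ θ in (0:ℝ)..(2 * π), p θ ^ 2) - 2 * ∫ θ in (0:ℝ)..(2 * π), p θ * p (θ + π) := by
    have e : ∀ θ ∈ uIcc (0:ℝ) (2 * π),
        q θ ^ 2 = (p θ ^ 2 + p (θ + π) ^ 2) - 2 * (p θ * p (θ + π)) := by
      intro θ _; simp only [hq_def]; ring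
    rw [intervalIntegral.integral_congr e,
      intervalIntegral.integral_sub (((hc.fun_pow 2).fun_add (hcs.fun_pow 2)).intervalIntegrable _ _)
        ((continuous_const.fun_mul (hc.fun_mul hcs)).intervalIntegrable _ _),
      intervalIntegral.integral_add ((hc.fun_pow 2).intervalIntegrable _ _)
        ((hcs.fun_pow 2).intervalIntegrable _ _),
      intervalIntegral.integral_const_mul,
      shift_integral (fun θ => p θ ^ 2) (fun x => by simp [hper x])]
    ring
  have hq'2 : (∫ θ in (0:ℝ)..(2 * π), (deriv q θ) ^ 2)
      = 2 * (∫ θ in (0:ℝ)..(2 * π), (deriv p θ) ^ 2)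
        - 2 * ∫ θ in (0:ℝ)..(2 * π), deriv p θ * deriv p (θ + π) := by
    have e : ∀ θ ∈ uIcc (0:ℝ) (2 * π),
        (deriv q θ) ^ 2 = ((deriv p θ) ^ 2 + (deriv p (θ + π)) ^ 2)
          - 2 * (deriv p θ * deriv p (θ + π)) := by
      intro θ _; rw [hqd θ]; ring
    rw [intervalIntegral.integral_congr e,
      intervalIntegral.integral_sub (((hc'.fun_pow 2).fun_add (hcs'.fun_pow 2)).intervalIntegrable _ _)
        ((continuous_const.fun_mul (hc'.fun_mul hcs')).intervalIntegrable _ _),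
      intervalIntegral.integral_add ((hc'.fun_pow 2).intervalIntegrable _ _)
        ((hcs'.fun_pow 2).intervalIntegrable _ _),
      intervalIntegral.integral_const_mul,
      shift_integral (fun θ => (deriv p θ) ^ 2) (fun x => by simp [hper' x])]
    ring
  have key1 := wirtinger_real q hqsmooth hqper hmean_q
  rw [hq2, hq'2] at key1
  -- the even part r
  set m : ℝ := L / π with hm_def
  set r : ℝ → ℝ := fun θ => p θ + p (θ + π) - m with hr_def
  have hrsmooth : ContDiff ℝ (⊤ : ℕ∞) r := (hp.add hshift_smooth).sub contDiff_const
  have hrper : Function.Periodic r (2 * π) := by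
    intro x
    simp only [hr_def]
    rw [hper x, show x + 2 * π + π = (x + π) + 2 * π by ring, hper (x + π)]
  have hrd : ∀ θ, deriv r θ = deriv p θ + deriv p (θ + π) := by
    intro θ
    rw [hr_def]
    rw [deriv_fun_sub ((hp.differentiable (by simp) θ).fun_add (hshift_smooth.differentiable (by simp) θ))
      (differentiableAt_const m), deriv_const, sub_zero,
      deriv_fun_add (hp.differentiable (by simp) θ) (hshift_smooth.differentiable (by simp) θ), hdshift θ]
  have hmean_r : (∫ θ in (0:ℝ)..(2 * π), r θ) = 0 := by
    simp only [hr_def]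
    rw [intervalIntegral.integral_sub ((hc.fun_add hcs).intervalIntegrable _ _)
        (intervalIntegrable_const),
      intervalIntegral.integral_add (hc.intervalIntegrable _ _) (hcs.intervalIntegrable _ _),
      shift_integral p hper, intervalIntegral.integral_const, ← hL]
    rw [hm_def]
    simp only [smul_eq_mul]
    field_simp
    ring
  have hr2 : (∫ θ in (0:ℝ)..(2 * π), r θ ^ 2)
      = 2 * (∫ θ in (0:ℝ)..(2 * π), p θ ^ 2) + 2 * (∫ θ in (0:ℝ)..(2 * π), p θ * p (θ + π))
        - 2 * (L ^ 2 / π) := by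
    have e : ∀ θ ∈ uIcc (0:ℝ) (2 * π),
        r θ ^ 2 = ((p θ ^ 2 + p (θ + π) ^ 2) + 2 * (p θ * p (θ + π))
          - (2 * m) * (p θ + p (θ + π))) + m ^ 2 := by
      intro θ _; simp only [hr_def]; ring
    rw [intervalIntegral.integral_congr e,
      intervalIntegral.integral_add
        (((((hc.fun_pow 2).fun_add (hcs.fun_pow 2)).fun_add (continuous_const.fun_mul (hc.fun_mul hcs))).fun_sub
          (continuous_const.fun_mul (hc.fun_add hcs))).intervalIntegrable _ _)
        (intervalIntegrable_const),
      intervalIntegral.integral_sub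
        ((((hc.fun_pow 2).fun_add (hcs.fun_pow 2)).fun_add (continuous_const.fun_mul (hc.fun_mul hcs))).intervalIntegrable _ _)
        ((continuous_const.fun_mul (hc.fun_add hcs)).intervalIntegrable _ _),
      intervalIntegral.integral_add (((hc.fun_pow 2).fun_add (hcs.fun_pow 2)).intervalIntegrable _ _)
        ((continuous_const.fun_mul (hc.fun_mul hcs)).intervalIntegrable _ _),
      intervalIntegral.integral_add ((hc.fun_pow 2).intervalIntegrable _ _)
        ((hcs.fun_pow 2).intervalIntegrable _ _),
      intervalIntegral.integral_const_mul, intervalIntegral.integral_const_mul,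
      intervalIntegral.integral_add (hc.intervalIntegrable _ _) (hcs.intervalIntegrable _ _),
      shift_integral (fun θ => p θ ^ 2) (fun x => by simp [hper x]),
      shift_integral p hper, intervalIntegral.integral_const, ← hL]
    rw [hm_def]
    simp only [smul_eq_mul]
    field_simp
    ring
  have hr'2 : (∫ θ in (0:ℝ)..(2 * π), (deriv r θ) ^ 2)
      = 2 * (∫ θ in (0:ℝ)..(2 * π), (deriv p θ) ^ 2)
        + 2 * ∫ θ in (0:ℝ)..(2 * π), deriv p θ * deriv p (θ + π) := by
    have e : ∀ θ ∈ uIcc (0:ℝ) (2 * π),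
        (deriv r θ) ^ 2 = ((deriv p θ) ^ 2 + (deriv p (θ + π)) ^ 2)
          + 2 * (deriv p θ * deriv p (θ + π)) := by
      intro θ _; rw [hrd θ]; ring
    rw [intervalIntegral.integral_congr e,
      intervalIntegral.integral_add (((hc'.fun_pow 2).fun_add (hcs'.fun_pow 2)).intervalIntegrable _ _)
        ((continuous_const.fun_mul (hc'.fun_mul hcs')).intervalIntegrable _ _),
      intervalIntegral.integral_add ((hc'.fun_pow 2).intervalIntegrable _ _)
        ((hcs'.fun_pow 2).intervalIntegrable _ _),
      intervalIntegral.integral_const_mul,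
      shift_integral (fun θ => (deriv p θ) ^ 2) (fun x => by simp [hper' x])]
    ring
  have key2 := wirtinger_real r hrsmooth hrper hmean_r
  rw [hr2, hr'2] at key2
  -- final algebra
  have hAe : A = (1/2) * ((∫ θ in (0:ℝ)..(2 * π), p θ ^ 2)
      - ∫ θ in (0:ℝ)..(2 * π), (deriv p θ) ^ 2) := by
    rw [hA, intervalIntegral.integral_sub ((hc.fun_pow 2).intervalIntegrable _ _)
      ((hc'.fun_pow 2).intervalIntegrable _ _)]
  have hΨe : Ψ = (1/2) * ((∫ θ in (0:ℝ)..(2 * π), p θ * p (θ + π))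
      - ∫ θ in (0:ℝ)..(2 * π), deriv p θ * deriv p (θ + π)) := by
    rw [hΨ, intervalIntegral.integral_sub ((hc.fun_mul hcs).intervalIntegrable _ _)
      ((hc'.fun_mul hcs').intervalIntegrable _ _)]
  have e3 : L ^ 2 / π = 2 * (L ^ 2 / (2 * π)) := by
    field_simp
  constructor
  · linarith
  · linarith

end
end

section
/- Let M be an oval with length L_M, enclosed area A_M, and let λ ∈ (0, 1/2) ∪ (1/2, 1). Then the oriented area of the affine λ-equidistant satisfies A_M − (λ(1−λ)/π)·L_M² ≤ Ã_{E_λ(M)} ≤ (2λ−1)²·A_M. -/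
open Real intervalIntegral Filter Topology

/-- Core Dirichlet–Wirtinger inequality on `[0, π]`. -/
lemma wirtinger_core (g : ℝ → ℝ) (hg : ContDiff ℝ (⊤ : ℕ∞) g) (h0 : g 0 = 0) (hpi : g π = 0) :
    (∫ θ in (0:ℝ)..π, (g θ ^ 2 - deriv g θ ^ 2)) ≤ 0 := by
  have hgc : Continuous g := hg.continuous
  have hg' : Continuous (deriv g) := hg.continuous_deriv (by simp)
  set f : ℝ → ℝ := fun θ => g θ ^ 2 - deriv g θ ^ 2 with hf
  have hfc : Continuous f := by continuity
  set F : ℝ → ℝ := fun θ => g θ ^ 2 * (cos θ / sin θ) with hF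
  -- key inequality on truncated intervals
  have key : ∀ ε ∈ Set.Ioo (0:ℝ) (π/2),
      (∫ θ in ε..(π - ε), f θ) ≤ F ε - F (π - ε) := by
    intro ε hε
    have hεπ : ε ≤ π - ε := by nlinarith [hε.1, hε.2, pi_pos]
    have hsin : ∀ θ ∈ Set.uIcc ε (π - ε), sin θ ≠ 0 := by
      intro θ hθ
      rw [Set.uIcc_of_le hεπ] at hθ
      have : 0 < sin θ := sin_pos_of_pos_of_lt_pi (lt_of_lt_of_le hε.1 hθ.1)
        (lt_of_le_of_lt hθ.2 (by linarith [hε.1]))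
      exact ne_of_gt this
    set F' : ℝ → ℝ := fun θ =>
      2 * g θ * deriv g θ * (cos θ / sin θ) + g θ ^ 2 * ((-sin θ * sin θ - cos θ * cos θ) / sin θ ^ 2)
      with hF'
    have hder : ∀ θ ∈ Set.uIcc ε (π - ε), HasDerivAt F (F' θ) θ := by
      intro θ hθ
      have h1 : HasDerivAt (fun θ => g θ ^ 2) (2 * g θ * deriv g θ) θ := by
        have := (hg.differentiable (by simp) θ).hasDerivAt
        simpa [mul_comm, mul_assoc, pow_two] using this.fun_pow 2
      have h2 : HasDerivAt (fun θ => cos θ / sin θ)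
          ((-sin θ * sin θ - cos θ * cos θ) / sin θ ^ 2) θ :=
        (hasDerivAt_cos θ).div (hasDerivAt_sin θ) (hsin θ hθ)
      simpa [F', mul_comm, mul_assoc, mul_left_comm] using h1.fun_mul h2
    have hF'c : ContinuousOn F' (Set.uIcc ε (π - ε)) := by
      apply ContinuousOn.add
      · exact (((hgc.continuousOn.const_smul 2).mul hg'.continuousOn).mul
          (continuousOn_cos.div continuousOn_sin hsin)).congr (fun x hx => by simp [smul_eq_mul])
      · exact ((hgc.pow 2).continuousOn.mul
          (ContinuousOn.div (by fun_prop) (by fun_prop)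
            (fun x hx => pow_ne_zero 2 (hsin x hx))))
    have hFTC : (∫ θ in ε..(π - ε), F' θ) = F (π - ε) - F ε :=
      integral_eq_sub_of_hasDerivAt hder (hF'c.intervalIntegrable)
    have hptle : ∀ θ ∈ Set.uIcc ε (π - ε), f θ + F' θ ≤ 0 := by
      intro θ hθ
      have hs := hsin θ hθ
      have hpyth := sin_sq_add_cos_sq θ
      have : f θ + F' θ = -((deriv g θ - g θ * (cos θ / sin θ)) ^ 2) := by
        simp only [f, F']
        field_simp
        ring
      rw [this]
      exact neg_nonpos_of_nonneg (sq_nonneg _)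
    have hint : (∫ θ in ε..(π - ε), (f θ + F' θ)) ≤ 0 := by
      have h0 : 0 ≤ ∫ θ in ε..(π - ε), -(f θ + F' θ) := by
        apply intervalIntegral.integral_nonneg hεπ
        intro x hx
        have := hptle x (by rw [Set.uIcc_of_le hεπ]; exact hx)
        linarith
      rw [intervalIntegral.integral_neg] at h0
      linarith
    have hintf : IntervalIntegrable f MeasureTheory.volume ε (π - ε) :=
      hfc.intervalIntegrable _ _
    have : (∫ θ in ε..(π - ε), (f θ + F' θ)) =
        (∫ θ in ε..(π - ε), f θ) + (F (π - ε) - F ε) := by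
      rw [integral_add hintf hF'c.intervalIntegrable, hFTC]
    linarith [hint, this ▸ hint]
  -- pass to the limit ε → 0⁺
  have hI : Continuous (fun x => ∫ θ in (0:ℝ)..x, f θ) :=
    intervalIntegral.continuous_primitive (μ := MeasureTheory.volume) (fun a b => hfc.intervalIntegrable a b) 0
  have hsplit : ∀ ε : ℝ, (∫ θ in ε..(π - ε), f θ)
      = (∫ θ in (0:ℝ)..(π - ε), f θ) - ∫ θ in (0:ℝ)..ε, f θ := by
    intro ε
    have h := intervalIntegral.integral_add_adjacent_intervals (a := 0) (b := ε)
      (c := π - ε) (μ := MeasureTheory.volume)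
      (hfc.intervalIntegrable 0 ε) (hfc.intervalIntegrable ε (π - ε))
    linarith
  have hLHS : Tendsto (fun ε => ∫ θ in ε..(π - ε), f θ) (𝓝[>] (0:ℝ))
      (𝓝 (∫ θ in (0:ℝ)..π, f θ)) := by
    have h1 : Tendsto (fun ε : ℝ => (∫ θ in (0:ℝ)..(π - ε), f θ) - ∫ θ in (0:ℝ)..ε, f θ)
        (𝓝 0) (𝓝 (∫ θ in (0:ℝ)..π, f θ)) := by
      have hc : Continuous (fun ε : ℝ =>
          (∫ θ in (0:ℝ)..(π - ε), f θ) - ∫ θ in (0:ℝ)..ε, f θ) :=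
        (hI.comp (continuous_const.sub continuous_id)).sub hI
      have := hc.tendsto 0
      simpa using this
    refine Tendsto.congr (fun ε => (hsplit ε).symm) (h1.mono_left nhdsWithin_le_nhds)
  have hslope0 : Tendsto (fun ε => g ε / ε) (𝓝[>] (0:ℝ)) (𝓝 (deriv g 0)) := by
    have h := hasDerivAt_iff_tendsto_slope.mp (hg.differentiable (by simp) 0).hasDerivAt
    have h2 : Tendsto (slope g 0) (𝓝[>] (0:ℝ)) (𝓝 (deriv g 0)) :=
      h.mono_left (nhdsWithin_mono 0 (fun x hx => ne_of_gt hx))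
    refine h2.congr (fun ε => ?_)
    simp [slope_def_field, h0, div_eq_mul_inv, mul_comm]
  have hsinq : Tendsto (fun ε : ℝ => ε / sin ε) (𝓝[>] (0:ℝ)) (𝓝 1) := by
    have h := hasDerivAt_iff_tendsto_slope.mp (Real.hasDerivAt_sin 0)
    have h2 : Tendsto (fun ε => sin ε / ε) (𝓝[>] (0:ℝ)) (𝓝 1) := by
      have h3 := h.mono_left (nhdsWithin_mono 0 (fun x hx => ne_of_gt hx))
      rw [Real.cos_zero] at h3
      refine h3.congr (fun ε => ?_)
      simp [slope_def_field, div_eq_mul_inv, mul_comm]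
    have h4 := h2.inv₀ one_ne_zero
    simpa [inv_div] using h4
  have hg0 : Tendsto (fun ε : ℝ => g ε * cos ε) (𝓝[>] (0:ℝ)) (𝓝 0) := by
    have := ((hgc.tendsto 0).mul (Real.continuous_cos.tendsto 0)).mono_left
      (nhdsWithin_le_nhds (s := Set.Ioi (0:ℝ)))
    simpa [h0] using this
  have hF0 : Tendsto F (𝓝[>] (0:ℝ)) (𝓝 0) := by
    have hprod : Tendsto (fun ε : ℝ => (g ε * cos ε) * ((g ε / ε) * (ε / sin ε)))
        (𝓝[>] (0:ℝ)) (𝓝 (0 * (deriv g 0 * 1))) := hg0.mul (hslope0.mul hsinq)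
    rw [zero_mul] at hprod
    refine hprod.congr' ?_
    filter_upwards [Ioo_mem_nhdsGT_of_mem (Set.left_mem_Ico.mpr pi_pos)] with ε hε
    have hε0 : ε ≠ 0 := ne_of_gt hε.1
    have hsε : sin ε ≠ 0 := ne_of_gt (sin_pos_of_pos_of_lt_pi hε.1 hε.2)
    simp only [F]
    field_simp
  have hmap : Tendsto (fun ε : ℝ => π - ε) (𝓝[>] (0:ℝ)) (𝓝[≠] π) := by
    rw [tendsto_nhdsWithin_iff]
    constructor
    · have h : Tendsto (fun ε : ℝ => π - ε) (𝓝 0) (𝓝 π) := by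
        have hc : Continuous fun ε : ℝ => π - ε := continuous_const.sub continuous_id
        simpa using hc.tendsto 0
      exact h.mono_left nhdsWithin_le_nhds
    · filter_upwards [self_mem_nhdsWithin] with ε (hε : 0 < ε)
      simp only [Set.mem_compl_iff, Set.mem_singleton_iff]
      intro h; linarith
  have hslopepi : Tendsto (fun ε : ℝ => g (π - ε) / ε) (𝓝[>] (0:ℝ)) (𝓝 (-(deriv g π))) := by
    have h := hasDerivAt_iff_tendsto_slope.mp (hg.differentiable (by simp) π).hasDerivAt
    have h2 := (h.comp hmap).neg
    refine h2.congr' ?_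
    filter_upwards [self_mem_nhdsWithin] with ε (hε : 0 < ε)
    have hε0 : ε ≠ 0 := ne_of_gt hε
    simp only [Function.comp, slope_def_field, hpi]
    simp only [show π - ε - π = -ε by ring, sub_zero]
    field_simp
  have hgpi : Tendsto (fun ε : ℝ => g (π - ε) * cos (π - ε)) (𝓝[>] (0:ℝ)) (𝓝 0) := by
    have hc : Continuous (fun ε : ℝ => g (π - ε) * cos (π - ε)) :=
      (hgc.comp (continuous_const.sub continuous_id)).mul
        (Real.continuous_cos.comp (continuous_const.sub continuous_id))
    have := (hc.tendsto 0).mono_left (nhdsWithin_le_nhds (s := Set.Ioi (0:ℝ)))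
    simpa [hpi] using this
  have hFpi : Tendsto (fun ε : ℝ => F (π - ε)) (𝓝[>] (0:ℝ)) (𝓝 0) := by
    have hprod : Tendsto
        (fun ε : ℝ => (g (π - ε) * cos (π - ε)) * ((g (π - ε) / ε) * (ε / sin ε)))
        (𝓝[>] (0:ℝ)) (𝓝 (0 * (-(deriv g π) * 1))) := hgpi.mul (hslopepi.mul hsinq)
    rw [zero_mul] at hprod
    refine hprod.congr' ?_
    filter_upwards [Ioo_mem_nhdsGT_of_mem (Set.left_mem_Ico.mpr pi_pos)] with ε hε
    have hε0 : ε ≠ 0 := ne_of_gt hε.1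
    have hsε : sin ε ≠ 0 := ne_of_gt (sin_pos_of_pos_of_lt_pi hε.1 hε.2)
    have hspi : sin (π - ε) = sin ε := Real.sin_pi_sub ε
    simp only [F]
    rw [hspi]
    field_simp
    try ring_nf
    try simp
  have hRHS : Tendsto (fun ε : ℝ => F ε - F (π - ε)) (𝓝[>] (0:ℝ)) (𝓝 0) := by
    simpa using hF0.sub hFpi
  refine le_of_tendsto_of_tendsto hLHS hRHS ?_
  filter_upwards [Ioo_mem_nhdsGT_of_mem
    (Set.left_mem_Ico.mpr (by positivity : (0:ℝ) < π/2))] with ε hε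
  exact key ε hε


lemma periodic_deriv'_s7 (f : ℝ → ℝ) (T : ℝ) (hf : Function.Periodic f T) :
    Function.Periodic (deriv f) T := by
  intro x
  have h1 : (fun y => f (y + T)) = f := funext hf
  have h2 := deriv_comp_add_const f T x
  rw [h1] at h2
  exact h2.symm

lemma wirtinger_shift (g : ℝ → ℝ) (hg : ContDiff ℝ (⊤ : ℕ∞) g) (a : ℝ)
    (h0 : g a = 0) (hpi : g (a + π) = 0) :
    (∫ θ in a..(a + π), (g θ ^ 2 - deriv g θ ^ 2)) ≤ 0 := by
  set h : ℝ → ℝ := fun θ => g (θ + a) with hh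
  have hhc : ContDiff ℝ (⊤ : ℕ∞) h := hg.comp (contDiff_id.add contDiff_const)
  have hd : ∀ θ, deriv h θ = deriv g (θ + a) := fun θ => deriv_comp_add_const g a θ
  have h1 := wirtinger_core h hhc (by simp [hh, h0]) (by simpa [hh, add_comm] using hpi)
  have h2 : (∫ θ in (0:ℝ)..π, (h θ ^ 2 - deriv h θ ^ 2))
      = ∫ θ in a..(a + π), (g θ ^ 2 - deriv g θ ^ 2) := by
    have h3 : (∫ θ in (0:ℝ)..π, (h θ ^ 2 - deriv h θ ^ 2))
        = ∫ θ in (0:ℝ)..π, (g (θ + a) ^ 2 - deriv g (θ + a) ^ 2) := by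
      apply intervalIntegral.integral_congr
      intro x _
      beta_reduce
      rw [hd x]
    rw [h3, intervalIntegral.integral_comp_add_right (fun θ => g θ ^ 2 - deriv g θ ^ 2) a,
      zero_add, add_comm π a]
  linarith [h2 ▸ h1]

lemma wirtinger_two_zeros (f : ℝ → ℝ) (hf : ContDiff ℝ (⊤ : ℕ∞) f)
    (hper : Function.Periodic f (2 * π)) (a : ℝ) (h0 : f a = 0) (h1 : f (a + π) = 0) :
    (∫ θ in (0:ℝ)..(2 * π), (f θ ^ 2 - deriv f θ ^ 2)) ≤ 0 := by
  set q : ℝ → ℝ := fun θ => f θ ^ 2 - deriv f θ ^ 2 with hq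
  have hqc : Continuous q := by
    exact ((hf.continuous.pow 2).sub ((hf.continuous_deriv (by simp)).pow 2))
  have hqper : Function.Periodic q (2 * π) := by
    intro x
    simp only [hq]
    rw [hper x, periodic_deriv'_s7 f (2 * π) hper x]
  have hshift : (∫ θ in (0:ℝ)..(2 * π), q θ) = ∫ θ in a..(a + 2 * π), q θ := by
    have h := hqper.intervalIntegral_add_eq 0 a
    rw [zero_add] at h
    exact h
  have hsplitted : (∫ θ in a..(a + 2 * π), q θ)
      = (∫ θ in a..(a + π), q θ) + ∫ θ in (a + π)..(a + 2 * π), q θ := by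
    rw [intervalIntegral.integral_add_adjacent_intervals
      (hqc.intervalIntegrable a (a + π)) (hqc.intervalIntegrable (a + π) (a + 2 * π))]
  have w1 : (∫ θ in a..(a + π), q θ) ≤ 0 := wirtinger_shift f hf a h0 h1
  have w2 : (∫ θ in (a + π)..(a + 2 * π), q θ) ≤ 0 := by
    have h2 : f (a + π + π) = 0 := by
      have := hper a
      rw [show a + 2 * π = a + π + π by ring] at this
      rw [this, h0]
    have := wirtinger_shift f hf (a + π) h1 h2
    rw [show a + π + π = a + 2 * π by ring] at this
    exact this
  linarith [hshift ▸ (hsplitted ▸ add_nonpos w1 w2)]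

lemma exists_zero_of_integral_zero (w : ℝ → ℝ) (hw : Continuous w)
    (h : (∫ θ in (0:ℝ)..π, w θ) = 0) : ∃ a, w a = 0 := by
  by_contra h'
  push_neg at h'
  have key : ∀ z : ℝ → ℝ, Continuous z → (∀ a, z a ≠ 0) → 0 < z 0 →
      0 < ∫ θ in (0:ℝ)..π, z θ := by
    intro z hz hz0 hpos
    have hall : ∀ θ, 0 < z θ := by
      intro θ
      rcases (hz0 θ).lt_or_gt with hlt | hgt
      · exfalso
        have hm : (0:ℝ) ∈ Set.uIcc (z θ) (z 0) :=
          Set.mem_uIcc.mpr (Or.inl ⟨le_of_lt hlt, le_of_lt hpos⟩)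
        obtain ⟨x, _, hx⟩ := intermediate_value_uIcc (hz.continuousOn (s := Set.uIcc θ 0)) hm
        exact hz0 x hx
      · exact hgt
    exact intervalIntegral.intervalIntegral_pos_of_pos
      (hz.intervalIntegrable 0 π) (fun x => hall x) pi_pos
  rcases (h' 0).lt_or_gt with hneg | hpos
  · have hkey := key (fun θ => -w θ) hw.neg (fun a => neg_ne_zero.mpr (h' a)) (by show (0:ℝ) < -w 0; linarith)
    rw [intervalIntegral.integral_neg] at hkey
    linarith
  · have hkey := key w hw h' hpos
    linarith

lemma wirtinger_antiperiodic (u : ℝ → ℝ) (hu : ContDiff ℝ (⊤ : ℕ∞) u)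
    (hanti : ∀ θ, u (θ + π) = -u θ) :
    (∫ θ in (0:ℝ)..(2 * π), (u θ ^ 2 - deriv u θ ^ 2)) ≤ 0 := by
  have hper : Function.Periodic u (2 * π) := by
    intro x
    rw [show x + 2 * π = x + π + π by ring, hanti (x + π), hanti x, neg_neg]
  have hm : (0:ℝ) ∈ Set.uIcc (u 0) (u π) := by
    have h1 : u π = -u 0 := by simpa using hanti 0
    rcases le_or_gt 0 (u 0) with h | h
    · exact Set.mem_uIcc.mpr (Or.inr ⟨by rw [h1]; linarith, h⟩)
    · exact Set.mem_uIcc.mpr (Or.inl ⟨le_of_lt h, by rw [h1]; linarith⟩)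
  obtain ⟨a, _, ha⟩ := intermediate_value_uIcc
    (hu.continuous.continuousOn (s := Set.uIcc 0 π)) hm
  exact wirtinger_two_zeros u hu hper a ha (by rw [hanti a, ha, neg_zero])

lemma wirtinger_periodic_mean (v : ℝ → ℝ) (hv : ContDiff ℝ (⊤ : ℕ∞) v)
    (hper : Function.Periodic v π) :
    (∫ θ in (0:ℝ)..(2 * π), (v θ ^ 2 - deriv v θ ^ 2))
      ≤ (1 / (2 * π)) * (∫ θ in (0:ℝ)..(2 * π), v θ) ^ 2 := by
  have hvc : Continuous v := hv.continuous
  have hdc : Continuous (deriv v) := hv.continuous_deriv (by simp)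
  set c : ℝ := (1 / (2 * π)) * ∫ θ in (0:ℝ)..(2 * π), v θ with hc
  set w : ℝ → ℝ := fun θ => v θ - c with hw
  have hwc : ContDiff ℝ (⊤ : ℕ∞) w := hv.sub contDiff_const
  have hwper : Function.Periodic w π := fun x => by simp [hw, hper x]
  have hwper2 : Function.Periodic w (2 * π) := by
    have := hwper.add_period hwper
    rwa [show π + π = 2 * π by ring] at this
  have hdw : ∀ θ, deriv w θ = deriv v θ := by
    intro θ
    simp only [hw]
    exact deriv_sub_const c
  -- integral of v over [0,2π] equals 2π c
  have hintv : (∫ θ in (0:ℝ)..(2 * π), v θ) = 2 * π * c := by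
    rw [hc]
    field_simp
  -- integral of w over [0,2π] is zero
  have hintw2 : (∫ θ in (0:ℝ)..(2 * π), w θ) = 0 := by
    simp only [hw]
    rw [intervalIntegral.integral_sub (hvc.intervalIntegrable _ _)
      (continuous_const.intervalIntegrable _ _), hintv]
    simp
  -- hence integral over [0,π] is zero
  have hhalf : (∫ θ in π..(2 * π), w θ) = ∫ θ in (0:ℝ)..π, w θ := by
    have h := hwper.intervalIntegral_add_eq π 0
    rwa [zero_add, show π + π = 2 * π by ring] at h
  have hintw : (∫ θ in (0:ℝ)..π, w θ) = 0 := by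
    have hsp := intervalIntegral.integral_add_adjacent_intervals (μ := MeasureTheory.volume)
      (a := 0) (b := π) (c := 2 * π)
      (hwc.continuous.intervalIntegrable 0 π) (hwc.continuous.intervalIntegrable π (2 * π))
    rw [hintw2] at hsp
    rw [hhalf] at hsp
    linarith
  obtain ⟨a, ha⟩ := exists_zero_of_integral_zero w hwc.continuous hintw
  have hW := wirtinger_two_zeros w hwc hwper2 a ha (by rw [hwper a, ha])
  -- expand ∫ (w² - w'²)
  have hexp : (∫ θ in (0:ℝ)..(2 * π), (w θ ^ 2 - deriv w θ ^ 2))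
      = (∫ θ in (0:ℝ)..(2 * π), (v θ ^ 2 - deriv v θ ^ 2))
        - 2 * c * (∫ θ in (0:ℝ)..(2 * π), v θ) + 2 * π * c ^ 2 := by
    have h1 : (∫ θ in (0:ℝ)..(2 * π), (w θ ^ 2 - deriv w θ ^ 2))
        = ∫ θ in (0:ℝ)..(2 * π),
            ((v θ ^ 2 - deriv v θ ^ 2) - 2 * c * v θ + c ^ 2) := by
      apply intervalIntegral.integral_congr
      intro x _
      beta_reduce
      rw [hdw x]
      simp only [hw]
      ring
    rw [h1, intervalIntegral.integral_add (((((hvc.fun_pow 2).fun_sub (hdc.fun_pow 2))).fun_sub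
        ((continuous_const.fun_mul hvc))).intervalIntegrable _ _)
        (continuous_const.intervalIntegrable _ _),
      intervalIntegral.integral_sub (((hvc.fun_pow 2).fun_sub (hdc.fun_pow 2)).intervalIntegrable _ _)
        ((continuous_const.fun_mul hvc).intervalIntegrable _ _),
      intervalIntegral.integral_const_mul]
    try simp
    try ring
  rw [hexp, hintv] at hW
  have hπ : 0 < π := pi_pos
  rw [hintv]
  have hrhs : 1 / (2 * π) * (2 * π * c) ^ 2 = 2 * π * c ^ 2 := by
    field_simp
  rw [hrhs]
  nlinarith [hW]

/-- Bounds for the oriented area of the affine λ-equidistant, `λ ∈ (0,1/2)∪(1/2,1)`. -/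
theorem equidistant_area_bounds (p : ℝ → ℝ) (hp : ContDiff ℝ (⊤ : ℕ∞) p)
    (hper : Function.Periodic p (2 * π))
    (hpos : ∀ θ : ℝ, 0 < p θ + deriv (deriv p) θ)
    (lam : ℝ) (hlam : lam ∈ Set.Ioo (0:ℝ) (1/2) ∪ Set.Ioo (1/2 : ℝ) 1)
    (P : ℝ → ℝ) (hP : ∀ θ : ℝ, P θ = lam * p θ - (1 - lam) * p (θ + π))
    (L A Al : ℝ)
    (hL : L = ∫ θ in (0:ℝ)..(2 * π), p θ)
    (hA : A = (1/2) * ∫ θ in (0:ℝ)..(2 * π), (p θ ^ 2 - deriv p θ ^ 2))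
    (hAl : Al = (1/2) * ∫ θ in (0:ℝ)..(2 * π), (P θ ^ 2 - deriv P θ ^ 2)) :
    A - lam * (1 - lam) / π * L ^ 2 ≤ Al ∧ Al ≤ (2 * lam - 1) ^ 2 * A := by
  have hπ : 0 < π := pi_pos
  obtain ⟨hl0, hl1⟩ : 0 < lam ∧ lam < 1 := by
    rcases hlam with h | h
    · exact ⟨h.1, by linarith [h.2]⟩
    · exact ⟨by linarith [h.1], h.2⟩
  have hll : 0 < lam * (1 - lam) := by nlinarith
  set p1 : ℝ → ℝ := fun θ => p (θ + π) with hp1def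
  have hp1 : ContDiff ℝ (⊤ : ℕ∞) p1 := hp.comp (contDiff_id.add contDiff_const)
  have hd1 : ∀ θ, deriv p1 θ = deriv p (θ + π) := fun θ => deriv_comp_add_const p π θ
  have hpc : Continuous p := hp.continuous
  have hdc : Continuous (deriv p) := hp.continuous_deriv (by simp)
  have hp1c : Continuous p1 := hp1.continuous
  have hd1c : Continuous (deriv p1) := hp1.continuous_deriv (by simp)
  have hPfun : P = fun θ => lam * p θ - (1 - lam) * p1 θ := funext hP
  have hPD : ContDiff ℝ (⊤ : ℕ∞) P := by
    rw [hPfun]; exact (contDiff_const.mul hp).sub (contDiff_const.mul hp1)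
  have hdP : ∀ θ, deriv P θ = lam * deriv p θ - (1 - lam) * deriv p1 θ := by
    intro θ
    rw [hPfun]
    exact (((hp.differentiable (by simp) θ).hasDerivAt.const_mul lam).sub
      ((hp1.differentiable (by simp) θ).hasDerivAt.const_mul (1 - lam))).deriv
  -- continuity of integrands
  have cA : Continuous (fun θ => p θ ^ 2 - deriv p θ ^ 2) := (hpc.pow 2).sub (hdc.pow 2)
  have cB : Continuous (fun θ => p1 θ ^ 2 - deriv p1 θ ^ 2) := (hp1c.pow 2).sub (hd1c.pow 2)
  have cC : Continuous (fun θ => p θ * p1 θ - deriv p θ * deriv p1 θ) :=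
    (hpc.mul hp1c).sub (hdc.mul hd1c)
  set Ip : ℝ := ∫ θ in (0:ℝ)..(2 * π), (p θ ^ 2 - deriv p θ ^ 2) with hIp
  set X : ℝ := ∫ θ in (0:ℝ)..(2 * π), (p θ * p1 θ - deriv p θ * deriv p1 θ) with hXdef
  -- the integrand of Ip is 2π-periodic
  have hqper : Function.Periodic (fun θ => p θ ^ 2 - deriv p θ ^ 2) (2 * π) := by
    intro x
    simp only
    rw [hper x, periodic_deriv'_s7 p (2 * π) hper x]
  -- shifted integral equals Ip
  have hI1 : (∫ θ in (0:ℝ)..(2 * π), (p1 θ ^ 2 - deriv p1 θ ^ 2)) = Ip := by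
    have h1 : (∫ θ in (0:ℝ)..(2 * π), (p1 θ ^ 2 - deriv p1 θ ^ 2))
        = ∫ θ in (0:ℝ)..(2 * π), (fun s => p s ^ 2 - deriv p s ^ 2) (θ + π) := by
      apply intervalIntegral.integral_congr
      intro x _
      beta_reduce
      rw [hd1 x]
    rw [h1, intervalIntegral.integral_comp_add_right (fun s => p s ^ 2 - deriv p s ^ 2) π,
      zero_add]
    have h2 := hqper.intervalIntegral_add_eq π 0
    rw [zero_add] at h2
    rw [show 2 * π + π = π + 2 * π by ring, h2, hIp]
  -- the key linear-combination computation
  have comb : ∀ α β γ : ℝ,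
      (∫ θ in (0:ℝ)..(2 * π), (α * (p θ ^ 2 - deriv p θ ^ 2)
        + β * (p1 θ ^ 2 - deriv p1 θ ^ 2)
        + γ * (p θ * p1 θ - deriv p θ * deriv p1 θ)))
      = α * Ip + β * Ip + γ * X := by
    intro α β γ
    rw [intervalIntegral.integral_add (((continuous_const.fun_mul cA).fun_add
        (continuous_const.fun_mul cB)).intervalIntegrable _ _)
        ((continuous_const.fun_mul cC).intervalIntegrable _ _),
      intervalIntegral.integral_add ((continuous_const.fun_mul cA).intervalIntegrable _ _)
        ((continuous_const.fun_mul cB).intervalIntegrable _ _),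
      intervalIntegral.integral_const_mul, intervalIntegral.integral_const_mul,
      intervalIntegral.integral_const_mul, hI1]
  -- the function u
  set u : ℝ → ℝ := fun θ => p θ - p1 θ with hudef
  have hu : ContDiff ℝ (⊤ : ℕ∞) u := hp.sub hp1
  have hdu : ∀ θ, deriv u θ = deriv p θ - deriv p1 θ := fun θ =>
    ((hp.differentiable (by simp) θ).hasDerivAt.sub
      (hp1.differentiable (by simp) θ).hasDerivAt).deriv
  have hanti : ∀ θ, u (θ + π) = -u θ := by
    intro θ
    simp only [hudef, hp1def]
    rw [show θ + π + π = θ + 2 * π by ring, hper θ]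
    ring
  have W1 : (∫ θ in (0:ℝ)..(2 * π), (u θ ^ 2 - deriv u θ ^ 2)) ≤ 0 :=
    wirtinger_antiperiodic u hu hanti
  have e_u : (∫ θ in (0:ℝ)..(2 * π), (u θ ^ 2 - deriv u θ ^ 2))
      = 1 * Ip + 1 * Ip + (-2) * X := by
    rw [← comb 1 1 (-2)]
    apply intervalIntegral.integral_congr
    intro x _
    beta_reduce
    rw [hdu x]
    simp only [hudef]
    ring
  have hXIp : Ip ≤ X := by
    rw [e_u] at W1
    linarith
  -- the function v
  set v : ℝ → ℝ := fun θ => p θ + p1 θ with hvdef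
  have hv : ContDiff ℝ (⊤ : ℕ∞) v := hp.add hp1
  have hdv : ∀ θ, deriv v θ = deriv p θ + deriv p1 θ := fun θ =>
    ((hp.differentiable (by simp) θ).hasDerivAt.add
      (hp1.differentiable (by simp) θ).hasDerivAt).deriv
  have hvper : Function.Periodic v π := by
    intro θ
    simp only [hvdef, hp1def]
    rw [show θ + π + π = θ + 2 * π by ring, hper θ]
    ring
  have W2 : (∫ θ in (0:ℝ)..(2 * π), (v θ ^ 2 - deriv v θ ^ 2))
      ≤ (1 / (2 * π)) * (∫ θ in (0:ℝ)..(2 * π), v θ) ^ 2 :=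
    wirtinger_periodic_mean v hv hvper
  have e_v : (∫ θ in (0:ℝ)..(2 * π), (v θ ^ 2 - deriv v θ ^ 2))
      = 1 * Ip + 1 * Ip + 2 * X := by
    rw [← comb 1 1 2]
    apply intervalIntegral.integral_congr
    intro x _
    beta_reduce
    rw [hdv x]
    simp only [hvdef]
    ring
  have hintv : (∫ θ in (0:ℝ)..(2 * π), v θ) = 2 * L := by
    have h1 : (∫ θ in (0:ℝ)..(2 * π), p1 θ) = L := by
      rw [hp1def, intervalIntegral.integral_comp_add_right p π, zero_add]
      have h2 := hper.intervalIntegral_add_eq π 0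
      rw [zero_add] at h2
      rw [show 2 * π + π = π + 2 * π by ring, h2, hL]
    have h3 : (∫ θ in (0:ℝ)..(2 * π), v θ)
        = (∫ θ in (0:ℝ)..(2 * π), p θ) + ∫ θ in (0:ℝ)..(2 * π), p1 θ := by
      simp only [hvdef]
      rw [intervalIntegral.integral_add (hpc.intervalIntegrable _ _)
        (hp1c.intervalIntegrable _ _)]
    rw [h3, h1, ← hL]
    ring
  have hW2' : Ip + X ≤ L ^ 2 / π := by
    rw [e_v, hintv] at W2
    have hsq : (1 / (2 * π)) * (2 * L) ^ 2 = 2 * (L ^ 2 / π) := by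
      field_simp
    rw [hsq] at W2
    linarith
  -- expansion of the Al integral
  have e_P : (∫ θ in (0:ℝ)..(2 * π), (P θ ^ 2 - deriv P θ ^ 2))
      = lam ^ 2 * Ip + (1 - lam) ^ 2 * Ip + (-(2 * lam * (1 - lam))) * X := by
    rw [← comb (lam ^ 2) ((1 - lam) ^ 2) (-(2 * lam * (1 - lam)))]
    apply intervalIntegral.integral_congr
    intro x _
    simp only [hP x, hdP x, hp1def]
    ring
  rw [e_P] at hAl
  constructor
  · -- lower bound
    have key := mul_le_mul_of_nonneg_left hW2' hll.le
    rw [hA, hAl]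
    have h6 : (1/2 * Ip - lam * (1 - lam) / π * L ^ 2)
        - 1/2 * (lam ^ 2 * Ip + (1 - lam) ^ 2 * Ip + -(2 * lam * (1 - lam)) * X)
        = lam * (1 - lam) * (Ip + X) - lam * (1 - lam) / π * L ^ 2 := by ring
    have h7 : lam * (1 - lam) / π * L ^ 2 = lam * (1 - lam) * (L ^ 2 / π) := by ring
    linarith [key, h6, h7]
  · -- upper bound
    have key := mul_le_mul_of_nonneg_left hXIp hll.le
    rw [hA, hAl]
    have h5 : (2 * lam - 1) ^ 2 * (1/2 * Ip)
        - 1/2 * (lam ^ 2 * Ip + (1 - lam) ^ 2 * Ip + -(2 * lam * (1 - lam)) * X)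
        = lam * (1 - lam) * X - lam * (1 - lam) * Ip := by ring
    linarith [key, h5]
end

section
/- Let M be an oval with length L_M and enclosed area A_M. Then the oriented area of the Wigner caustic satisfies A_M − L_M²/(4π) ≤ 2·Ã_{E_{1/2}(M)} ≤ 0. -/
open Real

namespace WignerAux

open MeasureTheory Function Set AddCircle
open scoped ENNReal

noncomputable section

instance fact2pi : Fact ((0:ℝ) < 2 * π) := ⟨by positivity⟩

/-- The complexification of a real function. -/
def cF (f : ℝ → ℝ) : ℝ → ℂ := fun t => (f t : ℂ)

variable {f : ℝ → ℝ}

lemma perC (hper : Function.Periodic f (2*π)) : Function.Periodic (cF f) (2*π) :=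
  fun x => by simp [cF, hper x]

lemma lift_eq (hper : Function.Periodic f (2*π)) :
    AddCircle.liftIco (2*π) 0 (cF f) = (perC hper).lift := by
  ext z
  obtain ⟨b, hb, rfl⟩ := AddCircle.eq_coe_Ico z
  rw [AddCircle.liftIco_coe_apply (by simpa using hb)]
  simp

lemma lift_continuous (hc : Continuous f) (hper : Function.Periodic f (2*π)) :
    Continuous (perC hper).lift := by
  rw [← lift_eq hper]
  apply AddCircle.liftIco_continuous
  · simpa using ((perC hper) 0).symm
  · exact (Complex.continuous_ofReal.comp hc).continuousOn

/-- Fourier coefficients of a periodic real function. -/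
def fc (hper : Function.Periodic f (2*π)) (n : ℤ) : ℂ :=
  fourierCoeff ((perC hper).lift) n

lemma fc_zero (hper : Function.Periodic f (2*π))
    (hmean : ∫ θ in (0:ℝ)..(2*π), f θ = 0) : fc hper 0 = 0 := by
  rw [fc, fourierCoeff_eq_intervalIntegral _ 0 0]
  simp only [neg_zero, fourier_zero, one_smul, zero_add, Function.Periodic.lift_coe]
  have : ∫ x in (0:ℝ)..(2*π), cF f x = ((∫ x in (0:ℝ)..(2*π), f x : ℝ) : ℂ) := by
    rw [← intervalIntegral.integral_ofReal]; rfl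
  rw [this, hmean]
  simp

lemma fc_parseval (hc : Continuous f) (hper : Function.Periodic f (2*π)) :
    Summable (fun n : ℤ => ‖fc hper n‖ ^ 2) ∧
    ∫ θ in (0:ℝ)..(2*π), (f θ)^2 = (2*π) * ∑' n : ℤ, ‖fc hper n‖ ^ 2 := by
  set cm : C(AddCircle (2*π), ℂ) := ⟨(perC hper).lift, lift_continuous hc hper⟩ with hcm
  set G := ContinuousMap.toLp (E := ℂ) 2 haarAddCircle ℂ cm with hG
  have hcoeff : ∀ n, fourierCoeff (G : AddCircle (2*π) → ℂ) n = fc hper n := fun n =>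
    fourierCoeff_toLp cm n
  have hsum : Summable (fun n : ℤ => ‖fc hper n‖ ^ 2) := by
    have h0 : Summable (fun n : ℤ => ‖fourierBasis.repr G n‖ ^ ((2:ℝ≥0∞).toReal)) :=
      (lp.memℓp (fourierBasis.repr G)).summable (by norm_num)
    refine h0.congr fun n => ?_
    rw [fourierBasis_repr, hcoeff n]
    norm_num
  refine ⟨hsum, ?_⟩
  have hpar := tsum_sq_fourierCoeff G
  simp_rw [hcoeff] at hpar
  rw [hpar]
  have hae : ∫ t, ‖G t‖^2 ∂haarAddCircle = ∫ t, ‖cm t‖^2 ∂haarAddCircle := by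
    refine integral_congr_ae ?_
    filter_upwards [ContinuousMap.coeFn_toLp (p := 2) haarAddCircle (𝕜 := ℂ) cm] with t ht
    rw [ht]
  rw [hae]
  have hvol : ∫ t : AddCircle (2*π), ‖cm t‖^2 ∂(volume) = (2*π) * ∫ t, ‖cm t‖^2 ∂haarAddCircle := by
    rw [volume_eq_smul_haarAddCircle, integral_smul_measure, ENNReal.toReal_ofReal (by positivity)]
    rfl
  rw [← hvol]
  have hpre := AddCircle.intervalIntegral_preimage (2*π) 0 (fun z => ‖cm z‖^2)
  rw [← hpre]
  rw [zero_add]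
  refine intervalIntegral.integral_congr fun x hx => ?_
  show (f x)^2 = ‖cm (x : AddCircle (2*π))‖^2
  have : cm (x : AddCircle (2*π)) = (f x : ℂ) := rfl
  rw [this, Complex.norm_real, Real.norm_eq_abs, sq_abs]

lemma fc_eq_on (hper : Function.Periodic f (2*π)) (n : ℤ) :
    fc hper n = fourierCoeffOn (lt_add_of_pos_right 0 (fact2pi.out)) (cF f) n := by
  rw [fc, ← lift_eq hper, fourierCoeff_liftIco_eq]

lemma fc_deriv_le (hf : ContDiff ℝ (⊤ : ℕ∞) f) (hper : Function.Periodic f (2*π))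
    (hper' : Function.Periodic (deriv f) (2*π)) {n : ℤ} (hn : n ≠ 0) :
    ‖fc hper n‖ ≤ ‖fc hper' n‖ := by
  have hd : ∀ x ∈ uIcc (0:ℝ) (0 + 2*π), HasDerivAt (cF f) (cF (deriv f) x) x := by
    intro x _
    exact ((hf.differentiable (by simp) x).hasDerivAt).ofReal_comp
  have hint : IntervalIntegrable (cF (deriv f)) volume 0 (0 + 2*π) :=
    (Complex.continuous_ofReal.comp (hf.continuous_deriv (by simp))).intervalIntegrable _ _
  have key := fourierCoeffOn_of_hasDerivAt (lt_add_of_pos_right 0 (fact2pi.out)) hn hd hint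
  have hzero : cF f (0 + 2*π) - cF f 0 = 0 := by
    rw [perC hper 0, sub_self]
  rw [hzero, mul_zero, zero_sub] at key
  rw [fc_eq_on hper, fc_eq_on hper', key]
  rw [norm_mul, norm_neg, norm_mul]
  have h1 : ‖(1:ℂ) / (-2 * ↑π * Complex.I * ↑n)‖ = 1 / (2*π*|(n:ℝ)|) := by
    rw [norm_div, norm_one]
    congr 1
    simp [abs_of_pos pi_pos]
  have h2 : ‖(((0 + 2*π : ℝ)) : ℂ) - (((0:ℝ)) : ℂ)‖ = 2*π := by
    have : (((0 + 2*π : ℝ)) : ℂ) - (((0:ℝ)) : ℂ) = ((2*π : ℝ) : ℂ) := by push_cast; ring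
    rw [this, Complex.norm_real, Real.norm_eq_abs, abs_of_pos (by positivity)]
  rw [h1, h2]
  have hn1 : (1:ℝ) ≤ |(n:ℝ)| := by exact_mod_cast Int.one_le_abs hn
  set x := ‖fourierCoeffOn (lt_add_of_pos_right 0 (fact2pi.out)) (cF (deriv f)) n‖ with hx
  have hhalf : 1/(2*π*|(n:ℝ)|) * (2*π*x) = x / |(n:ℝ)| := by
    field_simp
  rw [hhalf]
  exact div_le_self (norm_nonneg _) hn1

lemma periodic_deriv' (f : ℝ → ℝ) (hper : Function.Periodic f (2*π)) :
    Function.Periodic (deriv f) (2*π) := by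
  intro x
  have hfun : (fun y => f (y + 2*π)) = f := funext hper
  calc deriv f (x + 2*π) = deriv (fun y => f (y + 2*π)) x := (deriv_comp_add_const f (2*π) x).symm
  _ = deriv f x := by rw [hfun]

/-- Wirtinger's inequality for smooth `2π`-periodic functions with zero mean. -/
lemma wirtinger (f : ℝ → ℝ) (hf : ContDiff ℝ (⊤ : ℕ∞) f) (hper : Function.Periodic f (2*π))
    (hmean : ∫ θ in (0:ℝ)..(2*π), f θ = 0) :
    ∫ θ in (0:ℝ)..(2*π), (f θ)^2 ≤ ∫ θ in (0:ℝ)..(2*π), (deriv f θ)^2 := by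
  have hper' := periodic_deriv' f hper
  obtain ⟨S1, E1⟩ := fc_parseval hf.continuous hper
  obtain ⟨S2, E2⟩ := fc_parseval (hf.continuous_deriv (by simp)) hper'
  rw [E1, E2]
  refine mul_le_mul_of_nonneg_left ?_ (by positivity)
  refine Summable.tsum_le_tsum (fun n => ?_) S1 S2
  by_cases hn : n = 0
  · subst hn
    rw [fc_zero hper hmean]
    simp only [norm_zero]
    norm_num
  · exact pow_le_pow_left₀ (norm_nonneg _) (fc_deriv_le hf hper hper' hn) 2

/-- The integral of a continuous `π`-antiperiodic function over a full period vanishes. -/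
lemma integral_anti_zero (g : ℝ → ℝ) (hg : Continuous g) (hanti : ∀ θ, g (θ + π) = - g θ) :
    ∫ θ in (0:ℝ)..(2*π), g θ = 0 := by
  have h1 : (∫ θ in (0:ℝ)..(2*π), g θ)
      = (∫ θ in (0:ℝ)..π, g θ) + ∫ θ in π..(2*π), g θ :=
    (intervalIntegral.integral_add_adjacent_intervals (hg.intervalIntegrable _ _)
      (hg.intervalIntegrable _ _)).symm
  have h2 : (∫ θ in (0:ℝ)..π, g (θ + π)) = ∫ θ in π..(2*π), g θ := by
    rw [intervalIntegral.integral_comp_add_right]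
    rw [zero_add, show π + π = 2*π by ring]
  have h3 : (∫ θ in (0:ℝ)..π, g (θ + π)) = - ∫ θ in (0:ℝ)..π, g θ := by
    simp only [hanti]
    exact intervalIntegral.integral_neg
  rw [h1, ← h2, h3]
  ring

end

end WignerAux

/-- Bounds for the oriented area of the Wigner caustic:
`A_M - L_M²/(4π) ≤ 2Ã_{E_{1/2}(M)} ≤ 0`. -/
theorem wigner_caustic_area_bounds (p : ℝ → ℝ) (hp : ContDiff ℝ (⊤ : ℕ∞) p)
    (hper : Function.Periodic p (2 * π))
    (hpos : ∀ θ : ℝ, 0 < p θ + deriv (deriv p) θ)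
    (q : ℝ → ℝ) (hq : ∀ θ : ℝ, q θ = (p θ - p (θ + π)) / 2)
    (L A At : ℝ)
    (hL : L = ∫ θ in (0:ℝ)..(2 * π), p θ)
    (hA : A = (1/2) * ∫ θ in (0:ℝ)..(2 * π), (p θ ^ 2 - deriv p θ ^ 2))
    (hAt : 2 * At = (1/2) * ∫ θ in (0:ℝ)..(2 * π), (q θ ^ 2 - deriv q θ ^ 2)) :
    A - L ^ 2 / (4 * π) ≤ 2 * At ∧ 2 * At ≤ 0 := by
  have pi_pos := Real.pi_pos
  have hdiff : Differentiable ℝ p := hp.differentiable (by simp)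
  have hpc : Continuous p := hp.continuous
  have hp'c : Continuous (deriv p) := hp.continuous_deriv (by simp)
  have hper' : Function.Periodic (deriv p) (2 * π) := WignerAux.periodic_deriv' p hper
  set r : ℝ → ℝ := fun θ => (p θ + p (θ + π)) / 2 with hr
  have hqfun : q = fun θ => (p θ - p (θ + π)) / 2 := funext hq
  have hshift_cd : ContDiff ℝ (⊤ : ℕ∞) (fun θ : ℝ => p (θ + π)) :=
    hp.comp (contDiff_id.add contDiff_const)
  have hshift_diff : Differentiable ℝ (fun θ : ℝ => p (θ + π)) := hshift_cd.differentiable (by simp)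
  have hq_cd : ContDiff ℝ (⊤ : ℕ∞) q := by rw [hqfun]; exact (hp.sub hshift_cd).div_const 2
  have hr_cd : ContDiff ℝ (⊤ : ℕ∞) r := by rw [hr]; exact (hp.add hshift_cd).div_const 2
  have hqc : Continuous q := hq_cd.continuous
  have hrc : Continuous r := hr_cd.continuous
  have hdq : ∀ θ, deriv q θ = (deriv p θ - deriv p (θ + π)) / 2 := by
    intro θ
    rw [hqfun, deriv_div_const, deriv_fun_sub (hdiff θ) (hshift_diff θ), deriv_comp_add_const]
  have hdr : ∀ θ, deriv r θ = (deriv p θ + deriv p (θ + π)) / 2 := by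
    intro θ
    rw [hr, deriv_div_const, deriv_fun_add (hdiff θ) (hshift_diff θ), deriv_comp_add_const]
  have hq'c : Continuous (deriv q) := by
    have h : deriv q = fun θ => (deriv p θ - deriv p (θ + π)) / 2 := funext hdq
    rw [h]
    exact (hp'c.sub (hp'c.comp (continuous_id.add continuous_const))).div_const 2
  have hr'c : Continuous (deriv r) := by
    have h : deriv r = fun θ => (deriv p θ + deriv p (θ + π)) / 2 := funext hdr
    rw [h]
    exact (hp'c.add (hp'c.comp (continuous_id.add continuous_const))).div_const 2
  have hq_anti : ∀ θ, q (θ + π) = - q θ := by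
    intro θ
    rw [hq, hq, show θ + π + π = θ + 2 * π by ring, hper θ]
    ring
  have hr_perπ : ∀ θ, r (θ + π) = r θ := by
    intro θ
    simp only [hr]
    rw [show θ + π + π = θ + 2 * π by ring, hper θ]
    ring
  have hdq_anti : ∀ θ, deriv q (θ + π) = - deriv q θ := by
    intro θ
    rw [hdq, hdq, show θ + π + π = θ + 2 * π by ring, hper' θ]
    ring
  have hdr_perπ : ∀ θ, deriv r (θ + π) = deriv r θ := by
    intro θ
    rw [hdr, hdr, show θ + π + π = θ + 2 * π by ring, hper' θ]
    ring
  have hq_per : Function.Periodic q (2 * π) := by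
    intro x
    rw [show x + 2 * π = x + π + π by ring, hq_anti (x + π), hq_anti x, neg_neg]
  have hr_per : Function.Periodic r (2 * π) := by
    intro x
    rw [show x + 2 * π = x + π + π by ring, hr_perπ (x + π), hr_perπ x]
  -- integrability
  have i_r : IntervalIntegrable (fun θ => r θ ^ 2 - deriv r θ ^ 2) MeasureTheory.volume 0 (2 * π) :=
    ((hrc.pow 2).sub (hr'c.pow 2)).intervalIntegrable _ _
  have i_q : IntervalIntegrable (fun θ => q θ ^ 2 - deriv q θ ^ 2) MeasureTheory.volume 0 (2 * π) :=
    ((hqc.pow 2).sub (hq'c.pow 2)).intervalIntegrable _ _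
  have i_c : IntervalIntegrable (fun θ => r θ * q θ - deriv r θ * deriv q θ)
      MeasureTheory.volume 0 (2 * π) :=
    ((hrc.mul hqc).sub (hr'c.mul hq'c)).intervalIntegrable _ _
  -- the cross term vanishes
  have hcross : (∫ θ in (0:ℝ)..(2 * π), (r θ * q θ - deriv r θ * deriv q θ)) = 0 := by
    apply WignerAux.integral_anti_zero _ ((hrc.mul hqc).sub (hr'c.mul hq'c))
    intro θ
    simp only [Pi.sub_apply, Pi.mul_apply]
    rw [hr_perπ θ, hq_anti θ, hdr_perπ θ, hdq_anti θ]
    ring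
  -- splitting of the energy integral
  have hpt : ∀ θ, p θ ^ 2 - deriv p θ ^ 2 =
      (r θ ^ 2 - deriv r θ ^ 2) + (q θ ^ 2 - deriv q θ ^ 2)
        + 2 * (r θ * q θ - deriv r θ * deriv q θ) := by
    intro θ
    have e1 : p θ = r θ + q θ := by rw [hq θ]; simp only [hr]; ring
    have e2 : deriv p θ = deriv r θ + deriv q θ := by rw [hdr θ, hdq θ]; ring
    rw [e1, e2]
    ring
  have hsplit : (∫ θ in (0:ℝ)..(2 * π), (p θ ^ 2 - deriv p θ ^ 2))
      = (∫ θ in (0:ℝ)..(2 * π), (r θ ^ 2 - deriv r θ ^ 2))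
        + (∫ θ in (0:ℝ)..(2 * π), (q θ ^ 2 - deriv q θ ^ 2))
        + 2 * ∫ θ in (0:ℝ)..(2 * π), (r θ * q θ - deriv r θ * deriv q θ) := by
    calc (∫ θ in (0:ℝ)..(2 * π), (p θ ^ 2 - deriv p θ ^ 2))
        = ∫ θ in (0:ℝ)..(2 * π), ((r θ ^ 2 - deriv r θ ^ 2) + (q θ ^ 2 - deriv q θ ^ 2)
            + 2 * (r θ * q θ - deriv r θ * deriv q θ)) :=
          intervalIntegral.integral_congr fun θ _ => hpt θ
      _ = _ := by
          rw [intervalIntegral.integral_add (i_r.add i_q) (i_c.const_mul 2),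
            intervalIntegral.integral_add i_r i_q, intervalIntegral.integral_const_mul]
  -- mean value of r
  have hpint : IntervalIntegrable p MeasureTheory.volume 0 (2 * π) := hpc.intervalIntegrable _ _
  have hpsint : IntervalIntegrable (fun θ : ℝ => p (θ + π)) MeasureTheory.volume 0 (2 * π) :=
    (hpc.comp (continuous_id.add continuous_const)).intervalIntegrable _ _
  have hshift_int : (∫ θ in (0:ℝ)..(2 * π), p (θ + π)) = ∫ θ in (0:ℝ)..(2 * π), p θ := by
    rw [intervalIntegral.integral_comp_add_right (fun θ => p θ)]
    rw [zero_add, show 2 * π + π = π + 2 * π by ring]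
    have h := hper.intervalIntegral_add_eq π 0
    rwa [zero_add] at h
  have hrint : (∫ θ in (0:ℝ)..(2 * π), r θ) = L := by
    have h1 : (∫ θ in (0:ℝ)..(2 * π), r θ)
        = (∫ θ in (0:ℝ)..(2 * π), (p θ + p (θ + π))) / 2 := by
      rw [← intervalIntegral.integral_div]
    rw [h1, intervalIntegral.integral_add hpint hpsint, hshift_int, hL]
    ring
  -- Wirtinger for the zero-mean part of r
  set s : ℝ → ℝ := fun θ => r θ - L / (2 * π) with hs
  have hsc : Continuous s := hrc.sub continuous_const
  have hs_cd : ContDiff ℝ (⊤ : ℕ∞) s := hr_cd.sub contDiff_const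
  have hs_per : Function.Periodic s (2 * π) := by
    intro x
    simp only [hs]
    rw [hr_per x]
  have hds : ∀ θ, deriv s θ = deriv r θ := by
    intro θ
    rw [hs]
    exact deriv_sub_const _
  have hsmean : (∫ θ in (0:ℝ)..(2 * π), s θ) = 0 := by
    have h1 : (∫ θ in (0:ℝ)..(2 * π), s θ)
        = (∫ θ in (0:ℝ)..(2 * π), r θ) - ∫ θ in (0:ℝ)..(2 * π), (fun _ => L / (2 * π)) θ := by
      rw [← intervalIntegral.integral_sub (hrc.intervalIntegrable _ _) intervalIntegrable_const]
    rw [h1, hrint, intervalIntegral.integral_const, smul_eq_mul]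
    field_simp
    ring
  have Ws := WignerAux.wirtinger s hs_cd hs_per hsmean
  have hr2 : (∫ θ in (0:ℝ)..(2 * π), r θ ^ 2)
      = (∫ θ in (0:ℝ)..(2 * π), s θ ^ 2) + 2 * π * (L / (2 * π)) ^ 2 := by
    have hptr : ∀ θ, r θ ^ 2 = s θ ^ 2 + (2 * (L / (2 * π))) * s θ + (L / (2 * π)) ^ 2 := by
      intro θ
      have h : r θ = s θ + L / (2 * π) := by simp [hs]
      rw [h]
      ring
    have i_s2 : IntervalIntegrable (fun θ => s θ ^ 2) MeasureTheory.volume 0 (2 * π) :=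
      (hsc.pow 2).intervalIntegrable _ _
    have i_sl : IntervalIntegrable (fun θ => (2 * (L / (2 * π))) * s θ)
        MeasureTheory.volume 0 (2 * π) := (continuous_const.mul hsc).intervalIntegrable _ _
    calc (∫ θ in (0:ℝ)..(2 * π), r θ ^ 2)
        = ∫ θ in (0:ℝ)..(2 * π), (s θ ^ 2 + (2 * (L / (2 * π))) * s θ + (L / (2 * π)) ^ 2) :=
          intervalIntegral.integral_congr fun θ _ => hptr θ
      _ = (∫ θ in (0:ℝ)..(2 * π), s θ ^ 2) + (2 * (L / (2 * π))) * (∫ θ in (0:ℝ)..(2 * π), s θ)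
            + ∫ θ in (0:ℝ)..(2 * π), (fun _ => (L / (2 * π)) ^ 2) θ := by
          rw [intervalIntegral.integral_add (i_s2.add i_sl) intervalIntegrable_const,
            intervalIntegral.integral_add i_s2 i_sl, intervalIntegral.integral_const_mul]
      _ = (∫ θ in (0:ℝ)..(2 * π), s θ ^ 2) + 2 * π * (L / (2 * π)) ^ 2 := by
          rw [hsmean, intervalIntegral.integral_const, smul_eq_mul]
          ring
  have hr'2 : (∫ θ in (0:ℝ)..(2 * π), deriv r θ ^ 2) = ∫ θ in (0:ℝ)..(2 * π), deriv s θ ^ 2 :=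
    intervalIntegral.integral_congr fun θ _ => by rw [hds θ]
  have hJ1 : (∫ θ in (0:ℝ)..(2 * π), (q θ ^ 2 - deriv q θ ^ 2)) ≤ 0 := by
    have hqmean : (∫ θ in (0:ℝ)..(2 * π), q θ) = 0 :=
      WignerAux.integral_anti_zero q hqc hq_anti
    have Wq := WignerAux.wirtinger q hq_cd hq_per hqmean
    have hsub : (∫ θ in (0:ℝ)..(2 * π), (q θ ^ 2 - deriv q θ ^ 2))
        = (∫ θ in (0:ℝ)..(2 * π), q θ ^ 2) - ∫ θ in (0:ℝ)..(2 * π), deriv q θ ^ 2 :=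
      intervalIntegral.integral_sub ((hqc.pow 2).intervalIntegrable _ _)
        ((hq'c.pow 2).intervalIntegrable _ _)
    rw [hsub]
    linarith
  have hJ2 : (∫ θ in (0:ℝ)..(2 * π), (r θ ^ 2 - deriv r θ ^ 2)) ≤ L ^ 2 / (2 * π) := by
    have hsub : (∫ θ in (0:ℝ)..(2 * π), (r θ ^ 2 - deriv r θ ^ 2))
        = (∫ θ in (0:ℝ)..(2 * π), r θ ^ 2) - ∫ θ in (0:ℝ)..(2 * π), deriv r θ ^ 2 :=
      intervalIntegral.integral_sub ((hrc.pow 2).intervalIntegrable _ _)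
        ((hr'c.pow 2).intervalIntegrable _ _)
    have hval : 2 * π * (L / (2 * π)) ^ 2 = L ^ 2 / (2 * π) := by
      field_simp
    rw [hsub, hr2, hr'2, hval]
    linarith
  have hquarter : L ^ 2 / (2 * π) / 2 = L ^ 2 / (4 * π) := by
    rw [div_div]
    ring_nf
  constructor
  · rw [hA, hsplit, hcross, hAt]
    nlinarith [hJ1, hJ2, hquarter]
  · rw [hAt]
    linarith
end

section
/- Let M be an oval with length L_M, enclosed area A_M, and let λ ∈ (−∞, 0) ∪ (1, ∞). Then (2λ−1)²·A_M ≤ Ã_{E_λ(M)} ≤ A_M − (λ(1−λ)/π)·L_M². -/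
open Real MeasureTheory Set intervalIntegral

section Parseval

variable {T : ℝ} [hT : Fact (0 < T)]

open AddCircle in
lemma parseval_cont (g : C(AddCircle T, ℂ)) :
    Summable (fun n : ℤ => ‖fourierCoeff (⇑g) n‖ ^ 2) ∧
    ∑' n : ℤ, ‖fourierCoeff (⇑g) n‖ ^ 2
      = ∫ t : AddCircle T, ‖g t‖ ^ 2 ∂haarAddCircle := by
  set gL := ContinuousMap.toLp (E := ℂ) 2 haarAddCircle ℂ g with hgL
  have hcoeff : ∀ n : ℤ, fourierCoeff (⇑gL) n = fourierCoeff (⇑g) n :=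
    fourierCoeff_toLp g
  constructor
  · have h1 : Memℓp (fun n => fourierBasis.repr gL n) 2 := (fourierBasis.repr gL).property
    have h2 : Summable fun n : ℤ => ‖fourierBasis.repr gL n‖ ^ (ENNReal.toReal 2) :=
      (memℓp_gen_iff (by norm_num)).mp h1
    have h3 : Summable fun n : ℤ => ‖fourierBasis.repr gL n‖ ^ (2:ℕ) := by
      have : (ENNReal.toReal 2) = (2:ℝ) := by simp
      rw [this] at h2
      refine h2.congr fun n => ?_
      rw [← Real.rpow_natCast]; norm_num
    simpa [fourierBasis_repr, hcoeff] using h3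
  · have h := tsum_sq_fourierCoeff gL
    simp_rw [hcoeff] at h
    rw [h]
    refine integral_congr_ae ?_
    filter_upwards [ContinuousMap.coeFn_toLp (p := 2) haarAddCircle (𝕜 := ℂ) g] with x hx
    rw [hx]

end Parseval

section Wirtinger

lemma sum_sq_fourierCoeffOn (h : ℝ → ℝ) (hc : Continuous h)
    (hper : Function.Periodic h (2 * π)) :
    Summable (fun n : ℤ => ‖fourierCoeffOn Real.two_pi_pos (fun x => (h x : ℂ)) n‖ ^ 2) ∧
    (∫ x in (0:ℝ)..(2 * π), h x ^ 2)
      = (2 * π) * ∑' n : ℤ, ‖fourierCoeffOn Real.two_pi_pos (fun x => (h x : ℂ)) n‖ ^ 2 := by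
  haveI : Fact (0 < 2 * π) := ⟨Real.two_pi_pos⟩
  set F : ℝ → ℂ := fun x => (h x : ℂ) with hF
  have hFc : Continuous F := Complex.continuous_ofReal.comp hc
  have hF0 : F 0 = F (2 * π) := by
    simp only [hF]
    exact_mod_cast congrArg Complex.ofReal (by simpa using (hper 0).symm)
  set G : C(AddCircle (2 * π), ℂ) :=
    ⟨AddCircle.liftIco (2 * π) 0 F, AddCircle.liftIco_zero_continuous hF0 hFc.continuousOn⟩
    with hG
  have hGcoeff : ∀ n : ℤ, fourierCoeff (⇑G) n = fourierCoeffOn Real.two_pi_pos F n := by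
    intro n
    have := fourierCoeff_liftIco_eq (T := 2 * π) (a := 0) F n
    rw [show fourierCoeff (⇑G) n = fourierCoeff (AddCircle.liftIco (2 * π) 0 F) n from rfl]
    simpa using this
  obtain ⟨hs, heq⟩ := parseval_cont G
  have h1 : ∫ x in (0:ℝ)..(0 + 2 * π), ‖G x‖ ^ 2 = ∫ t : AddCircle (2 * π), ‖G t‖ ^ 2 :=
    AddCircle.intervalIntegral_preimage (2 * π) 0 (fun t => ‖G t‖ ^ 2)
  have h2 : ∫ t : AddCircle (2 * π), ‖G t‖ ^ 2
      = (2 * π) * ∫ t : AddCircle (2 * π), ‖G t‖ ^ 2 ∂AddCircle.haarAddCircle := by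
    rw [AddCircle.volume_eq_smul_haarAddCircle, MeasureTheory.integral_smul_measure,
      ENNReal.toReal_ofReal Real.two_pi_pos.le, smul_eq_mul]
  have h3 : ∫ x in (0:ℝ)..(0 + 2 * π), ‖G (x : AddCircle (2 * π))‖ ^ 2
      = ∫ x in (0:ℝ)..(2 * π), h x ^ 2 := by
    rw [zero_add, intervalIntegral.integral_of_le Real.two_pi_pos.le,
      intervalIntegral.integral_of_le Real.two_pi_pos.le,
      integral_Ioc_eq_integral_Ioo, integral_Ioc_eq_integral_Ioo]
    refine setIntegral_congr_fun measurableSet_Ioo fun x hx => ?_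
    have hmem : x ∈ Ico (0:ℝ) (0 + 2 * π) := ⟨hx.1.le, by simpa using hx.2⟩
    have : G (x : AddCircle (2 * π)) = F x := AddCircle.liftIco_coe_apply (f := F) hmem
    rw [this]
    simp [hF, sq_abs]
  constructor
  · refine hs.congr fun n => ?_
    rw [hGcoeff]
  · rw [← funext hGcoeff] at *
    rw [← h3, h1, h2, heq]

lemma wirtinger (f : ℝ → ℝ) (hf : ContDiff ℝ (⊤ : ℕ∞) f) (hper : Function.Periodic f (2 * π))
    (hmean : (∫ x in (0:ℝ)..(2 * π), f x) = 0) :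
    (∫ x in (0:ℝ)..(2 * π), f x ^ 2) ≤ ∫ x in (0:ℝ)..(2 * π), deriv f x ^ 2 := by
  haveI : Fact (0 < 2 * π) := ⟨Real.two_pi_pos⟩
  have hdiff : Differentiable ℝ f := hf.differentiable (by simp)
  have hc : Continuous f := hf.continuous
  have hc' : Continuous (deriv f) := hf.continuous_deriv (by simp)
  have hper' : Function.Periodic (deriv f) (2 * π) := by
    intro x
    have : deriv (fun y => f (y + 2 * π)) x = deriv f (x + 2 * π) :=
      deriv_comp_add_const f (2 * π) x
    rw [← this]
    congr 1
    exact funext fun y => hper y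
  set F : ℝ → ℂ := fun x => (f x : ℂ) with hF
  set F' : ℝ → ℂ := fun x => ((deriv f x : ℝ) : ℂ) with hF'
  have hFd : ∀ x, HasDerivAt F (F' x) x := fun x => ((hdiff x).hasDerivAt).ofReal_comp
  set c : ℤ → ℂ := fourierCoeffOn Real.two_pi_pos F with hcdef
  set c' : ℤ → ℂ := fourierCoeffOn Real.two_pi_pos F' with hc'def
  have hc0 : c 0 = 0 := by
    rw [hcdef, fourierCoeffOn_eq_integral]
    simp only [neg_zero, fourier_zero, one_smul, hF]
    rw [intervalIntegral.integral_ofReal, hmean]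
    simp
  have hrel : ∀ n : ℤ, n ≠ 0 → c' n = (n : ℂ) * Complex.I * c n := by
    intro n hn
    have hint : IntervalIntegrable F' volume 0 (2 * π) :=
      ((Complex.continuous_ofReal.comp hc')).intervalIntegrable _ _
    have e := fourierCoeffOn_of_hasDerivAt Real.two_pi_pos hn
      (fun x _ => hFd x) hint
    have hFF : F (2 * π) - F 0 = 0 := by
      have : f (2 * π) = f 0 := by simpa using hper 0
      simp [hF, this]
    rw [hFF] at e
    simp only [mul_zero, zero_sub, fourier_eval_zero] at e
    rw [← hcdef, ← hc'def] at e
    have hπ : (π : ℂ) ≠ 0 := Complex.ofReal_ne_zero.mpr Real.pi_ne_zero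
    have hnc : (n : ℂ) ≠ 0 := Int.cast_ne_zero.mpr hn
    field_simp at e
    have h2pi : (2 * (π : ℂ)) ≠ 0 := by
      simp [hπ]
    push_cast at e
    refine mul_left_cancel₀ h2pi ?_
    linear_combination (-1 : ℂ) * e
  have hterm : ∀ n : ℤ, ‖c n‖ ^ 2 ≤ ‖c' n‖ ^ 2 := by
    intro n
    rcases eq_or_ne n 0 with rfl | hn
    · simp [hc0]
    · rw [hrel n hn]
      have h1 : (1 : ℝ) ≤ |(n : ℝ)| := by
        rw [← Int.cast_abs]
        exact_mod_cast Int.one_le_abs hn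
      rw [norm_mul, norm_mul, Complex.norm_I, mul_one, Complex.norm_intCast]
      have h2 : (1:ℝ) ≤ |(n:ℝ)| ^ 2 := by nlinarith
      have h3 := mul_le_mul_of_nonneg_right h2 (sq_nonneg ‖c n‖)
      nlinarith [h3]
  obtain ⟨hs, he⟩ := sum_sq_fourierCoeffOn f hc hper
  obtain ⟨hs', he'⟩ := sum_sq_fourierCoeffOn (deriv f) hc' hper'
  rw [← hF] at hs he
  rw [← hF'] at hs' he'
  rw [← hcdef] at hs he
  rw [← hc'def] at hs' he'
  have := Summable.tsum_le_tsum hterm hs hs'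
  rw [he, he']
  have h2π : (0:ℝ) < 2 * π := Real.two_pi_pos
  nlinarith

end Wirtinger
lemma integral_sq_expand (u v : ℝ → ℝ) (hu : Continuous u) (hv : Continuous v) (A B : ℝ) :
    (∫ x in (0:ℝ)..(2 * π), (A * u x + B * v x) ^ 2)
      = A ^ 2 * (∫ x in (0:ℝ)..(2 * π), u x ^ 2)
        + B ^ 2 * (∫ x in (0:ℝ)..(2 * π), v x ^ 2)
        + 2 * A * B * ∫ x in (0:ℝ)..(2 * π), u x * v x := by
  have iu : IntervalIntegrable (fun x => A ^ 2 * u x ^ 2) volume 0 (2 * π) :=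
    (continuous_const.mul (hu.pow 2)).intervalIntegrable _ _
  have iv : IntervalIntegrable (fun x => B ^ 2 * v x ^ 2) volume 0 (2 * π) :=
    (continuous_const.mul (hv.pow 2)).intervalIntegrable _ _
  have iw : IntervalIntegrable (fun x => 2 * A * B * (u x * v x)) volume 0 (2 * π) :=
    (continuous_const.mul (hu.mul hv)).intervalIntegrable _ _
  have h1 : Set.EqOn (fun x => (A * u x + B * v x) ^ 2)
      (fun x => A ^ 2 * u x ^ 2 + B ^ 2 * v x ^ 2 + 2 * A * B * (u x * v x))
      (Set.uIcc 0 (2 * π)) := fun x _ => by ring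
  rw [intervalIntegral.integral_congr h1, intervalIntegral.integral_add (iu.add iv) iw,
    intervalIntegral.integral_add iu iv, intervalIntegral.integral_const_mul,
    intervalIntegral.integral_const_mul, intervalIntegral.integral_const_mul]

lemma wirtinger' (f : ℝ → ℝ) (hf : ContDiff ℝ (⊤ : ℕ∞) f) (hper : Function.Periodic f (2 * π)) :
    (∫ x in (0:ℝ)..(2 * π), f x ^ 2) - (∫ x in (0:ℝ)..(2 * π), f x) ^ 2 / (2 * π)
      ≤ ∫ x in (0:ℝ)..(2 * π), deriv f x ^ 2 := by
  have hπ := Real.pi_pos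
  set I := ∫ x in (0:ℝ)..(2 * π), f x with hI
  set m : ℝ := I / (2 * π) with hm
  have hfint : IntervalIntegrable f volume 0 (2 * π) := hf.continuous.intervalIntegrable _ _
  have hgc : ContDiff ℝ (⊤ : ℕ∞) (fun x => f x - m) := hf.sub contDiff_const
  have hgper : Function.Periodic (fun x => f x - m) (2 * π) := fun x => by simp [hper x]
  have hgd : deriv (fun x => f x - m) = deriv f := by
    funext x
    exact deriv_sub_const m
  have hmean : (∫ x in (0:ℝ)..(2 * π), (f x - m)) = 0 := by
    rw [intervalIntegral.integral_sub hfint intervalIntegrable_const,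
      intervalIntegral.integral_const, ← hI, hm]
    have h2 : (2 * π) ≠ 0 := by positivity
    rw [sub_zero, smul_eq_mul, mul_div_assoc', mul_div_cancel_left₀ I h2, sub_self]
  have key := wirtinger (fun x => f x - m) hgc hgper hmean
  rw [hgd] at key
  have hexp : (∫ x in (0:ℝ)..(2 * π), (f x - m) ^ 2)
      = (∫ x in (0:ℝ)..(2 * π), f x ^ 2) - 2 * m * I + (2 * π) * m ^ 2 := by
    have h := integral_sq_expand f (fun _ => (1:ℝ)) hf.continuous continuous_const 1 (-m)
    have hcg : (∫ x in (0:ℝ)..(2 * π), (f x - m) ^ 2)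
        = ∫ x in (0:ℝ)..(2 * π), (1 * f x + (-m) * 1) ^ 2 :=
      intervalIntegral.integral_congr fun x _ => by ring
    have hone : (∫ x in (0:ℝ)..(2 * π), (1:ℝ) ^ 2) = 2 * π := by
      simp
    have honef : (∫ x in (0:ℝ)..(2 * π), f x * 1) = I := by
      simp [hI]
    rw [hcg, h, hone, honef]
    ring
  rw [hexp] at key
  have hms : I ^ 2 / (2 * π) = 2 * m * I - 2 * π * m ^ 2 := by
    rw [hm]
    field_simp
    ring
  linarith

set_option maxHeartbeats 800000 in
/-- Bounds for the oriented area of the affine λ-equidistant, `λ ∈ (-∞,0)∪(1,∞)`. -/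
theorem equidistant_area_bounds_outside (p : ℝ → ℝ) (hp : ContDiff ℝ (⊤ : ℕ∞) p)
    (hper : Function.Periodic p (2 * π))
    (hpos : ∀ θ : ℝ, 0 < p θ + deriv (deriv p) θ)
    (lam : ℝ) (hlam : lam < 0 ∨ 1 < lam)
    (P : ℝ → ℝ) (hP : ∀ θ : ℝ, P θ = lam * p θ - (1 - lam) * p (θ + π))
    (L A Al : ℝ)
    (hL : L = ∫ θ in (0:ℝ)..(2 * π), p θ)
    (hA : A = (1/2) * ∫ θ in (0:ℝ)..(2 * π), (p θ ^ 2 - deriv p θ ^ 2))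
    (hAl : Al = (1/2) * ∫ θ in (0:ℝ)..(2 * π), (P θ ^ 2 - deriv P θ ^ 2)) :
    (2 * lam - 1) ^ 2 * A ≤ Al ∧ Al ≤ A - lam * (1 - lam) / π * L ^ 2 := by
  have hπ := Real.pi_pos
  have hpc : Continuous p := hp.continuous
  have hpd : Differentiable ℝ p := hp.differentiable (by simp)
  have hp'c : Continuous (deriv p) := hp.continuous_deriv (by simp)
  have hqcd : ContDiff ℝ (⊤ : ℕ∞) (fun θ : ℝ => p (θ + π)) := hp.comp (contDiff_id.add contDiff_const)
  have hqc : Continuous (fun θ : ℝ => p (θ + π)) := hpc.comp (continuous_id.add continuous_const)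
  have hq'c : Continuous (fun θ : ℝ => deriv p (θ + π)) :=
    hp'c.comp (continuous_id.add continuous_const)
  have hqd : ∀ θ : ℝ, HasDerivAt (fun t => p (t + π)) (deriv p (θ + π)) θ :=
    fun θ => HasDerivAt.comp_add_const (f := p) θ π ((hpd (θ + π)).hasDerivAt)
  have hper' : Function.Periodic (deriv p) (2 * π) := by
    intro x
    have h := deriv_comp_add_const (f := p) (a := 2 * π) (x := x)
    rw [← h]
    congr 1
    exact funext fun y => hper y
  -- named integrals
  obtain ⟨a1, ha1⟩ : ∃ x, x = ∫ θ in (0:ℝ)..(2 * π), p θ ^ 2 := ⟨_, rfl⟩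
  obtain ⟨a2, ha2⟩ : ∃ x, x = ∫ θ in (0:ℝ)..(2 * π), deriv p θ ^ 2 := ⟨_, rfl⟩
  obtain ⟨b1, hb1⟩ : ∃ x, x = ∫ θ in (0:ℝ)..(2 * π), p θ * p (θ + π) := ⟨_, rfl⟩
  obtain ⟨b2, hb2⟩ : ∃ x, x = ∫ θ in (0:ℝ)..(2 * π), deriv p θ * deriv p (θ + π) := ⟨_, rfl⟩
  -- shift identities
  have hshift : ∀ u : ℝ → ℝ, Function.Periodic u (2 * π) →
      (∫ θ in (0:ℝ)..(2 * π), u (θ + π)) = ∫ θ in (0:ℝ)..(2 * π), u θ := by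
    intro u hu
    rw [intervalIntegral.integral_comp_add_right]
    have h1 := hu.intervalIntegral_add_eq π 0
    rw [zero_add] at h1
    rw [show (0:ℝ) + π = π by ring, show 2 * π + π = π + 2 * π by ring]
    exact h1
  have hsq_shift : (∫ θ in (0:ℝ)..(2 * π), p (θ + π) ^ 2) = a1 := by
    rw [ha1]; exact hshift (fun t => p t ^ 2) (fun x => by simp [hper x])
  have hsq'_shift : (∫ θ in (0:ℝ)..(2 * π), deriv p (θ + π) ^ 2) = a2 := by
    rw [ha2]; exact hshift (fun t => deriv p t ^ 2) (fun x => by simp [hper' x])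
  have hL_shift : (∫ θ in (0:ℝ)..(2 * π), p (θ + π)) = L := by
    rw [hL]; exact hshift p hper
  -- quadratic expansions
  have e2 : (∫ θ in (0:ℝ)..(2 * π), (p θ - p (θ + π)) ^ 2) = 2 * a1 - 2 * b1 := by
    have h := integral_sq_expand p (fun t => p (t + π)) hpc hqc 1 (-1)
    have hcg : (∫ θ in (0:ℝ)..(2 * π), (p θ - p (θ + π)) ^ 2)
        = ∫ θ in (0:ℝ)..(2 * π), (1 * p θ + (-1) * p (θ + π)) ^ 2 :=
      intervalIntegral.integral_congr fun x _ => by ring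
    rw [hcg, h, hsq_shift, ← ha1, ← hb1]
    ring
  have e3 : (∫ θ in (0:ℝ)..(2 * π), (p θ + p (θ + π)) ^ 2) = 2 * a1 + 2 * b1 := by
    have h := integral_sq_expand p (fun t => p (t + π)) hpc hqc 1 1
    have hcg : (∫ θ in (0:ℝ)..(2 * π), (p θ + p (θ + π)) ^ 2)
        = ∫ θ in (0:ℝ)..(2 * π), (1 * p θ + 1 * p (θ + π)) ^ 2 :=
      intervalIntegral.integral_congr fun x _ => by ring
    rw [hcg, h, hsq_shift, ← ha1, ← hb1]
    ring
  have e4 : (∫ θ in (0:ℝ)..(2 * π), (deriv p θ - deriv p (θ + π)) ^ 2) = 2 * a2 - 2 * b2 := by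
    have h := integral_sq_expand (deriv p) (fun t => deriv p (t + π)) hp'c hq'c 1 (-1)
    have hcg : (∫ θ in (0:ℝ)..(2 * π), (deriv p θ - deriv p (θ + π)) ^ 2)
        = ∫ θ in (0:ℝ)..(2 * π), (1 * deriv p θ + (-1) * deriv p (θ + π)) ^ 2 :=
      intervalIntegral.integral_congr fun x _ => by ring
    rw [hcg, h, hsq'_shift, ← ha2, ← hb2]
    ring
  have e5 : (∫ θ in (0:ℝ)..(2 * π), (deriv p θ + deriv p (θ + π)) ^ 2) = 2 * a2 + 2 * b2 := by
    have h := integral_sq_expand (deriv p) (fun t => deriv p (t + π)) hp'c hq'c 1 1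
    have hcg : (∫ θ in (0:ℝ)..(2 * π), (deriv p θ + deriv p (θ + π)) ^ 2)
        = ∫ θ in (0:ℝ)..(2 * π), (1 * deriv p θ + 1 * deriv p (θ + π)) ^ 2 :=
      intervalIntegral.integral_congr fun x _ => by ring
    rw [hcg, h, hsq'_shift, ← ha2, ← hb2]
    ring
  -- P and its derivative
  have hPfun : P = fun θ => lam * p θ - (1 - lam) * p (θ + π) := funext hP
  have hPc : Continuous P := by
    rw [hPfun]
    exact (continuous_const.mul hpc).sub (continuous_const.mul hqc)
  have hPd : ∀ θ : ℝ, HasDerivAt P (lam * deriv p θ - (1 - lam) * deriv p (θ + π)) θ := by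
    intro θ
    rw [hPfun]
    exact ((hpd θ).hasDerivAt.const_mul lam).sub ((hqd θ).const_mul (1 - lam))
  have hP'fun : deriv P = fun θ => lam * deriv p θ - (1 - lam) * deriv p (θ + π) :=
    funext fun θ => (hPd θ).deriv
  have hP'c : Continuous (deriv P) := by
    rw [hP'fun]
    exact (continuous_const.mul hp'c).sub (continuous_const.mul hq'c)
  have eP : (∫ θ in (0:ℝ)..(2 * π), P θ ^ 2)
      = lam ^ 2 * a1 + (1 - lam) ^ 2 * a1 - 2 * lam * (1 - lam) * b1 := by
    have h := integral_sq_expand p (fun t => p (t + π)) hpc hqc lam (-(1 - lam))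
    have hcg : (∫ θ in (0:ℝ)..(2 * π), P θ ^ 2)
        = ∫ θ in (0:ℝ)..(2 * π), (lam * p θ + (-(1 - lam)) * p (θ + π)) ^ 2 :=
      intervalIntegral.integral_congr fun x _ => by rw [hP x]; ring
    rw [hcg, h, hsq_shift, ← ha1, ← hb1]
    ring
  have eP' : (∫ θ in (0:ℝ)..(2 * π), deriv P θ ^ 2)
      = lam ^ 2 * a2 + (1 - lam) ^ 2 * a2 - 2 * lam * (1 - lam) * b2 := by
    have h := integral_sq_expand (deriv p) (fun t => deriv p (t + π)) hp'c hq'c lam (-(1 - lam))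
    have hcg : (∫ θ in (0:ℝ)..(2 * π), deriv P θ ^ 2)
        = ∫ θ in (0:ℝ)..(2 * π), (lam * deriv p θ + (-(1 - lam)) * deriv p (θ + π)) ^ 2 :=
      intervalIntegral.integral_congr fun x _ => by rw [hP'fun]; ring
    rw [hcg, h, hsq'_shift, ← ha2, ← hb2]
    ring
  -- A and Al in terms of a, b
  have hA2 : 2 * A = a1 - a2 := by
    rw [hA, ha1, ha2,
      intervalIntegral.integral_sub (f := fun θ => p θ ^ 2) (g := fun θ => deriv p θ ^ 2)
        ((hpc.pow 2).intervalIntegrable _ _)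
        ((hp'c.pow 2).intervalIntegrable _ _)]
    ring
  have hAl2 : 2 * Al = (lam ^ 2 + (1 - lam) ^ 2) * (a1 - a2) - 2 * lam * (1 - lam) * (b1 - b2) := by
    rw [hAl,
      intervalIntegral.integral_sub (f := fun θ => P θ ^ 2) (g := fun θ => deriv P θ ^ 2)
        ((hPc.pow 2).intervalIntegrable _ _)
        ((hP'c.pow 2).intervalIntegrable _ _), eP, eP']
    ring
  -- Wirtinger applications
  have hf1cd : ContDiff ℝ (⊤ : ℕ∞) (fun θ => p θ - p (θ + π)) := hp.sub hqcd
  have hf1per : Function.Periodic (fun θ => p θ - p (θ + π)) (2 * π) := by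
    intro x
    have h2 := hper (x + π)
    rw [show x + π + 2 * π = x + 2 * π + π by ring] at h2
    simp only [hper x, h2]
  have hf1d : deriv (fun θ => p θ - p (θ + π)) = fun θ => deriv p θ - deriv p (θ + π) :=
    funext fun θ => ((hpd θ).hasDerivAt.sub (hqd θ)).deriv
  have hf2cd : ContDiff ℝ (⊤ : ℕ∞) (fun θ => p θ + p (θ + π)) := hp.add hqcd
  have hf2per : Function.Periodic (fun θ => p θ + p (θ + π)) (2 * π) := by
    intro x
    have h2 := hper (x + π)
    rw [show x + π + 2 * π = x + 2 * π + π by ring] at h2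
    simp only [hper x, h2]
  have hf2d : deriv (fun θ => p θ + p (θ + π)) = fun θ => deriv p θ + deriv p (θ + π) :=
    funext fun θ => ((hpd θ).hasDerivAt.add (hqd θ)).deriv
  have w1 : (∫ θ in (0:ℝ)..(2 * π), (p θ - p (θ + π)) ^ 2)
      - (∫ θ in (0:ℝ)..(2 * π), (p θ - p (θ + π))) ^ 2 / (2 * π)
      ≤ ∫ θ in (0:ℝ)..(2 * π), deriv (fun θ => p θ - p (θ + π)) θ ^ 2 :=
    wirtinger' _ hf1cd hf1per
  have w2 : (∫ θ in (0:ℝ)..(2 * π), (p θ + p (θ + π)) ^ 2)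
      - (∫ θ in (0:ℝ)..(2 * π), (p θ + p (θ + π))) ^ 2 / (2 * π)
      ≤ ∫ θ in (0:ℝ)..(2 * π), deriv (fun θ => p θ + p (θ + π)) θ ^ 2 :=
    wirtinger' _ hf2cd hf2per
  rw [hf1d] at w1
  rw [hf2d] at w2
  have e1 : (∫ θ in (0:ℝ)..(2 * π), (p θ - p (θ + π))) = 0 := by
    rw [intervalIntegral.integral_sub (hpc.intervalIntegrable _ _)
      (hqc.intervalIntegrable _ _), hL_shift, ← hL, sub_self]
  have e6 : (∫ θ in (0:ℝ)..(2 * π), (p θ + p (θ + π))) = 2 * L := by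
    rw [intervalIntegral.integral_add (hpc.intervalIntegrable _ _)
      (hqc.intervalIntegrable _ _), hL_shift, ← hL]
    ring
  rw [e1, e2, e4] at w1
  rw [e6, e3, e5] at w2
  have key1 : a1 - a2 ≤ b1 - b2 := by
    have h0 : (0:ℝ) ^ 2 / (2 * π) = 0 := by norm_num
    rw [h0] at w1
    linarith
  have key2 : (a1 - a2) + (b1 - b2) ≤ L ^ 2 / π := by
    have h0 : (2 * L) ^ 2 / (2 * π) = 2 * (L ^ 2 / π) := by
      field_simp
    rw [h0] at w2
    linarith
  have hμ : lam * (1 - lam) < 0 := by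
    rcases hlam with h | h
    · exact mul_neg_of_neg_of_pos h (by linarith)
    · exact mul_neg_of_pos_of_neg (by linarith) (by linarith)
  constructor
  · have hid : Al - (2 * lam - 1) ^ 2 * A
        = (-(lam * (1 - lam))) * ((b1 - b2) - (a1 - a2)) := by
      linear_combination (1/2) * hAl2 - ((2 * lam - 1) ^ 2 / 2) * hA2
    have hprod : 0 ≤ (-(lam * (1 - lam))) * ((b1 - b2) - (a1 - a2)) :=
      mul_nonneg (by linarith) (by linarith)
    linarith
  · have hid2 : A - lam * (1 - lam) / π * L ^ 2 - Al
        = (-(lam * (1 - lam))) * (L ^ 2 / π - ((a1 - a2) + (b1 - b2))) := by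
      linear_combination (-(1:ℝ)/2) * hAl2 + (1/2) * hA2
    have hprod2 : 0 ≤ (-(lam * (1 - lam))) * (L ^ 2 / π - ((a1 - a2) + (b1 - b2))) :=
      mul_nonneg (by linarith) (by linarith)
    linarith
end

section
/- Let M be an oval and λ ∈ ℝ with λ ∉ {0, 1/2, 1}. Then M is a curve of constant width if and only if Ã_{E_λ(M)} = A_M − (λ(1−λ)/π)·L_M². -/
open Real

section AuxiliaryLemmas
open MeasureTheory Set MeasureTheory.Measure intervalIntegral
set_option linter.unusedSectionVars false

section helpers
variable {T : ℝ} [hT : Fact (0 < T)]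

lemma lift_continuous {f : ℝ → ℂ} (hf : Function.Periodic f T) (hc : Continuous f) :
    Continuous hf.lift :=
  continuous_coinduced_dom.mpr hc

lemma liftIoc_eq_lift {f : ℝ → ℂ} (hf : Function.Periodic f T) (a : ℝ) :
    AddCircle.liftIoc T a f = hf.lift := by
  funext x
  conv_rhs => rw [← (AddCircle.equivIoc T a).symm_apply_apply x]
  rfl

open AddCircle in
lemma hasSum_sq_fourierCoeff' (G : C(AddCircle T, ℂ)) :
    HasSum (fun n : ℤ => ‖fourierCoeff (⇑G) n‖ ^ 2)
      ((1 / T) * ∫ x in (0:ℝ)..T, ‖G (x : AddCircle T)‖ ^ 2) := by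
  have h1 := tsum_sq_fourierCoeff (ContinuousMap.toLp (E := ℂ) 2 haarAddCircle ℂ G)
  have hrepr : ∀ n : ℤ, fourierCoeff (ContinuousMap.toLp (E := ℂ) 2 haarAddCircle ℂ G) n
      = fourierCoeff (⇑G) n := fourierCoeff_toLp G
  have hs : Summable (fun n : ℤ => ‖fourierCoeff (⇑G) n‖ ^ 2) := by
    have hmem := lp.memℓp (fourierBasis.repr (ContinuousMap.toLp (E := ℂ) 2 haarAddCircle ℂ G))
    have := hmem.summable (by norm_num : (0:ℝ) < (2 : ENNReal).toReal)
    simp only [fourierBasis_repr, hrepr] at this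
    convert this using 2 with n
    rw [ENNReal.toReal_ofNat, ← Real.rpow_natCast]
    norm_num
  have h2 : (∫ t : AddCircle T, ‖(ContinuousMap.toLp (E := ℂ) 2 haarAddCircle ℂ G) t‖^2
      ∂haarAddCircle) = ∫ t : AddCircle T, ‖G t‖^2 ∂haarAddCircle := by
    apply MeasureTheory.integral_congr_ae
    filter_upwards [ContinuousMap.coeFn_toLp (p := 2) haarAddCircle (𝕜 := ℂ) G] with t ht
    rw [ht]
  have h3 : (∫ t : AddCircle T, ‖G t‖^2 ∂haarAddCircle)
      = (1 / T) * ∫ x in (0:ℝ)..T, ‖G (x : AddCircle T)‖ ^ 2 := by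
    have h4 := AddCircle.intervalIntegral_preimage T 0 (fun t : AddCircle T => ‖G t‖^2)
    rw [zero_add, AddCircle.volume_eq_smul_haarAddCircle, MeasureTheory.integral_smul_measure _,
      ENNReal.toReal_ofReal hT.out.le, smul_eq_mul] at h4
    rw [h4]
    rw [← mul_assoc, one_div, inv_mul_cancel₀ hT.out.ne', one_mul]
  simp only [hrepr] at h1
  rw [h2, h3] at h1
  exact hs.hasSum_iff.mpr h1

end helpers

open Complex in
lemma wirtinger_constant (q : ℝ → ℝ) (hq : ContDiff ℝ (⊤ : ℕ∞) q) (hqp : Function.Periodic q π)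
    (hE : (∫ θ in (0:ℝ)..π, (q θ ^ 2 - deriv q θ ^ 2)) = (∫ θ in (0:ℝ)..π, q θ) ^ 2 / π) :
    ∀ θ : ℝ, q θ = q 0 := by
  haveI hT : Fact (0 < π) := ⟨pi_pos⟩
  have hqc : Continuous q := hq.continuous
  have hq'c : Continuous (deriv q) := hq.continuous_deriv (by simp)
  have hdper : Function.Periodic (deriv q) π := by
    intro x
    have h1 : (fun y => q (y + π)) = q := funext hqp
    have h2 := deriv_comp_add_const q π x
    rw [h1] at h2
    exact h2.symm
  set f : ℝ → ℂ := fun x => (q x : ℂ) with hf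
  set f' : ℝ → ℂ := fun x => ((deriv q x : ℝ) : ℂ) with hf'
  have hfper : Function.Periodic f π := fun x => congrArg Complex.ofReal (hqp x)
  have hf'per : Function.Periodic f' π := fun x => congrArg Complex.ofReal (hdper x)
  have hfc : Continuous f := continuous_ofReal.comp hqc
  have hf'c : Continuous f' := continuous_ofReal.comp hq'c
  set F : C(AddCircle π, ℂ) := ⟨hfper.lift, lift_continuous hfper hfc⟩ with hF
  set F' : C(AddCircle π, ℂ) := ⟨hf'per.lift, lift_continuous hf'per hf'c⟩ with hF'
  set cn : ℤ → ℂ := fourierCoeff (⇑F) with hcn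
  set dn : ℤ → ℂ := fourierCoeff (⇑F') with hdn
  -- Parseval for F and F'
  have hS1 : HasSum (fun n : ℤ => ‖cn n‖ ^ 2) ((1 / π) * ∫ θ in (0:ℝ)..π, q θ ^ 2) := by
    have := hasSum_sq_fourierCoeff' F
    convert this using 2
    apply intervalIntegral.integral_congr
    intro x _
    show q x ^ 2 = ‖F (x : AddCircle π)‖ ^ 2
    show q x ^ 2 = ‖f x‖ ^ 2
    simp [hf, Complex.norm_real, _root_.sq_abs]
  have hS2 : HasSum (fun n : ℤ => ‖dn n‖ ^ 2) ((1 / π) * ∫ θ in (0:ℝ)..π, deriv q θ ^ 2) := by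
    have := hasSum_sq_fourierCoeff' F'
    convert this using 2
    apply intervalIntegral.integral_congr
    intro x _
    show deriv q x ^ 2 = ‖f' x‖ ^ 2
    simp [hf', Complex.norm_real, _root_.sq_abs]
  set m : ℝ := ∫ θ in (0:ℝ)..π, q θ with hm
  have hc0 : cn 0 = ((1 / π * m : ℝ) : ℂ) := by
    rw [hcn, fourierCoeff_eq_intervalIntegral (⇑F) 0 0, zero_add]
    have : (fun x : ℝ => @fourier π (-0) x • F (x : AddCircle π)) = f := by
      funext x
      simp only [neg_zero, fourier_zero, one_smul]
      rfl
    rw [this]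
    rw [show ∫ x in (0:ℝ)..π, f x = ((m : ℝ) : ℂ) from intervalIntegral.integral_ofReal]
    rw [Complex.real_smul]
    push_cast
    ring
  have hqdiff : ∀ x : ℝ, DifferentiableAt ℝ q x := fun x => hq.differentiable (by simp) x
  have hd0 : dn 0 = 0 := by
    rw [hdn, fourierCoeff_eq_intervalIntegral (⇑F') 0 0, zero_add]
    have : (fun x : ℝ => @fourier π (-0) x • F' (x : AddCircle π)) = f' := by
      funext x
      simp only [neg_zero, fourier_zero, one_smul]
      rfl
    rw [this]
    have hint : ∫ x in (0:ℝ)..π, deriv q x = q π - q 0 :=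
      intervalIntegral.integral_deriv_eq_sub (fun x _ => hqdiff x)
        (hq'c.intervalIntegrable 0 π)
    have hq0 : q π = q 0 := by simpa using hqp 0
    rw [show ∫ x in (0:ℝ)..π, f' x = ((q π - q 0 : ℝ) : ℂ) by
      rw [← hint]; exact intervalIntegral.integral_ofReal]
    rw [hq0]
    simp
  -- derivative coefficient relation
  have hrel : ∀ n : ℤ, n ≠ 0 → dn n = 2 * Complex.I * n * cn n := by
    intro n hn
    have h1 : cn n = fourierCoeffOn (lt_add_of_pos_right 0 hT.out) f n := by
      rw [hcn, show ⇑F = hfper.lift from rfl, ← liftIoc_eq_lift hfper 0,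
        fourierCoeff_liftIoc_eq]
    have h2 : dn n = fourierCoeffOn (lt_add_of_pos_right 0 hT.out) f' n := by
      rw [hdn, show ⇑F' = hf'per.lift from rfl, ← liftIoc_eq_lift hf'per 0,
        fourierCoeff_liftIoc_eq]
    have h3 := fourierCoeffOn_of_hasDeriv_right (lt_add_of_pos_right 0 hT.out) hn
      (hfc.continuousOn)
      (fun x _ => (((hqdiff x).hasDerivAt).ofReal_comp).hasDerivWithinAt)
      (hf'c.intervalIntegrable 0 (0 + π))
    rw [← h1, ← h2] at h3
    have hf0 : f (0 + π) - f 0 = 0 := by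
      simp only [hf]
      rw [hqp 0]
      ring
    rw [hf0, mul_zero] at h3
    have hπ : ((π : ℝ) : ℂ) ≠ 0 := Complex.ofReal_ne_zero.mpr pi_ne_zero
    have hnz : ((n : ℤ) : ℂ) ≠ 0 := Int.cast_ne_zero.mpr hn
    have hI := Complex.I_ne_zero
    have h3' : cn n = 1 / (-2 * (π:ℂ) * Complex.I * n) * (-((π:ℂ) * dn n)) := by
      rw [h3]; push_cast; ring
    field_simp at h3'
    have h5 : (π : ℂ) * dn n = (π : ℂ) * (2 * Complex.I * n * cn n) := by
      linear_combination (-(π : ℂ)) * h3'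
    exact mul_left_cancel₀ hπ h5
  -- squared norms of dn
  have hb : (fun n : ℤ => ‖dn n‖ ^ 2) = fun n : ℤ => 4 * (n : ℝ) ^ 2 * ‖cn n‖ ^ 2 := by
    funext n
    rcases eq_or_ne n 0 with rfl | hn
    · simp [hd0]
    · rw [hrel n hn]
      rw [norm_mul, norm_mul, norm_mul, Complex.norm_I]
      rw [show ‖(2 : ℂ)‖ = 2 by simp, show ‖((n : ℤ) : ℂ)‖ = |(n : ℝ)| by
        rw [← Complex.ofReal_intCast, Complex.norm_real, Real.norm_eq_abs]]
      rw [show ((n:ℝ))^2 = |(n:ℝ)|^2 from (_root_.sq_abs _).symm]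
      ring
  have hS2' : HasSum (fun n : ℤ => 4 * (n : ℝ) ^ 2 * ‖cn n‖ ^ 2)
      ((1 / π) * ∫ θ in (0:ℝ)..π, deriv q θ ^ 2) := hb ▸ hS2
  have hdiff : HasSum (fun n : ℤ => ‖cn n‖ ^ 2 - 4 * (n : ℝ) ^ 2 * ‖cn n‖ ^ 2)
      ((1 / π) * (∫ θ in (0:ℝ)..π, q θ ^ 2) - (1 / π) * ∫ θ in (0:ℝ)..π, deriv q θ ^ 2) :=
    hS1.sub hS2'
  set e : ℤ → ℝ := fun n => ‖cn n‖ ^ 2 - 4 * (n : ℝ) ^ 2 * ‖cn n‖ ^ 2 with he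
  have hsplit : (∫ θ in (0:ℝ)..π, q θ ^ 2) - (∫ θ in (0:ℝ)..π, deriv q θ ^ 2)
      = ∫ θ in (0:ℝ)..π, (q θ ^ 2 - deriv q θ ^ 2) :=
    (intervalIntegral.integral_sub ((hqc.pow 2).intervalIntegrable 0 π)
      ((hq'c.pow 2).intervalIntegrable 0 π)).symm
  have he0 : e 0 = (1 / π) * (∫ θ in (0:ℝ)..π, q θ ^ 2)
      - (1 / π) * ∫ θ in (0:ℝ)..π, deriv q θ ^ 2 := by
    rw [he]
    simp only [Int.cast_zero]
    rw [← mul_sub, hsplit, hE, hc0]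
    rw [Complex.norm_real, Real.norm_eq_abs]
    simp only [_root_.sq_abs]
    ring
  have hzero : HasSum (fun n : ℤ => e n - if n = 0 then e 0 else 0) 0 := by
    have h := hdiff.sub (hasSum_ite_eq 0 (e 0))
    rw [← he0, _root_.sub_self] at h
    exact h
  have hnonneg : ∀ n : ℤ, 0 ≤ -(e n - if n = 0 then e 0 else 0) := by
    intro n
    rcases eq_or_ne n 0 with rfl | hn
    · simp
    · simp only [if_neg hn, sub_zero, he, neg_sub]
      have h2 : (1 : ℤ) ≤ |n| := Int.one_le_abs hn
      have h3 : (1 : ℝ) ≤ |(n : ℝ)| := by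
        rw [← Int.cast_abs]; exact_mod_cast h2
      have h1 : (1 : ℝ) ≤ (n : ℝ) ^ 2 := by
        nlinarith [h3, _root_.sq_abs (n:ℝ), abs_nonneg (n:ℝ)]
      nlinarith [sq_nonneg ‖cn n‖]
  have hallzero : ∀ n : ℤ, n ≠ 0 → cn n = 0 := by
    have h4 : HasSum (fun n : ℤ => -(e n - if n = 0 then e 0 else 0)) 0 := by
      simpa using hzero.neg
    have h5 := (hasSum_zero_iff_of_nonneg hnonneg).mp h4
    intro n hn
    have h6 : -(e n - if n = 0 then e 0 else 0) = 0 := congrFun h5 n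
    rw [if_neg hn] at h6
    have h7 : (4 * (n : ℝ) ^ 2 - 1) * ‖cn n‖ ^ 2 = 0 := by
      rw [he] at h6
      simp only at h6
      nlinarith [h6]
    have h2 : (1 : ℤ) ≤ |n| := Int.one_le_abs hn
    have h3 : (1 : ℝ) ≤ |(n : ℝ)| := by
      rw [← Int.cast_abs]; exact_mod_cast h2
    have h1 : (1 : ℝ) ≤ (n : ℝ) ^ 2 := by
      nlinarith [h3, _root_.sq_abs (n:ℝ), abs_nonneg (n:ℝ)]
    have h8 : ‖cn n‖ ^ 2 = 0 := by
      rcases mul_eq_zero.mp h7 with h | h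
      · nlinarith
      · exact h
    simpa using (pow_eq_zero_iff (two_ne_zero)).mp h8
  -- pointwise convergence of the Fourier series
  have hsummable : Summable cn :=
    summable_of_ne_finset_zero (s := {(0 : ℤ)}) fun n hn =>
      hallzero n (by simpa using hn)
  intro θ
  have hval : ∀ x : ℝ, F (x : AddCircle π) = cn 0 := by
    intro x
    have h1 := has_pointwise_sum_fourier_series_of_summable (f := F) hsummable
      (x : AddCircle π)
    have h2 : HasSum (fun i : ℤ => cn i • fourier i ((x : ℝ) : AddCircle π))
        (cn 0 • fourier 0 ((x : ℝ) : AddCircle π)) :=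
      hasSum_single 0 fun i hi => by rw [hallzero i hi, zero_smul]
    have h3 := h1.unique h2
    rw [h3, fourier_zero, smul_eq_mul, mul_one]
  have ha : ((q θ : ℝ) : ℂ) = cn 0 := hval θ
  have hb' : ((q 0 : ℝ) : ℂ) = cn 0 := hval 0
  exact_mod_cast ha.trans hb'.symm

open intervalIntegral in
lemma integral_comb (f g h : ℝ → ℝ) (x y z lo hi : ℝ)
    (hf : Continuous f) (hg : Continuous g) (hh : Continuous h) :
    ∫ t in lo..hi, (x * f t + y * g t + z * h t)
      = x * (∫ t in lo..hi, f t) + y * (∫ t in lo..hi, g t) + z * ∫ t in lo..hi, h t := by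
  rw [integral_add ((by fun_prop : Continuous fun t => x * f t + y * g t).intervalIntegrable lo hi)
      ((by fun_prop : Continuous fun t => z * h t).intervalIntegrable lo hi),
    integral_add ((by fun_prop : Continuous fun t => x * f t).intervalIntegrable lo hi)
      ((by fun_prop : Continuous fun t => y * g t).intervalIntegrable lo hi),
    intervalIntegral.integral_const_mul, intervalIntegral.integral_const_mul,
    intervalIntegral.integral_const_mul]

end AuxiliaryLemmas

open MeasureTheory Set intervalIntegral in
/-- For `λ ∉ {0, 1/2, 1}`: `M` has constant width iff
`Ã_{E_λ(M)} = A_M - (λ(1-λ)/π)L_M²`. -/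
theorem constant_width_iff_equidistant_area (p : ℝ → ℝ) (hp : ContDiff ℝ (⊤ : ℕ∞) p)
    (hper : Function.Periodic p (2 * π))
    (hpos : ∀ θ : ℝ, 0 < p θ + deriv (deriv p) θ)
    (lam : ℝ) (hlam0 : lam ≠ 0) (hlamh : lam ≠ 1/2) (hlam1 : lam ≠ 1)
    (P : ℝ → ℝ) (hP : ∀ θ : ℝ, P θ = lam * p θ - (1 - lam) * p (θ + π))
    (L A Al : ℝ)
    (hL : L = ∫ θ in (0:ℝ)..(2 * π), p θ)
    (hA : A = (1/2) * ∫ θ in (0:ℝ)..(2 * π), (p θ ^ 2 - deriv p θ ^ 2))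
    (hAl : Al = (1/2) * ∫ θ in (0:ℝ)..(2 * π), (P θ ^ 2 - deriv P θ ^ 2)) :
    (∃ w : ℝ, ∀ θ : ℝ, p θ + p (θ + π) = w) ↔
      Al = A - lam * (1 - lam) / π * L ^ 2 := by
  have hpc : Continuous p := hp.continuous
  have hp'c : Continuous (deriv p) := hp.continuous_deriv (by simp)
  have hpdiff : ∀ x : ℝ, DifferentiableAt ℝ p x := fun x => hp.differentiable (by simp) x
  have hdper : Function.Periodic (deriv p) (2 * π) := by
    intro x
    have h1 : (fun y => p (y + 2 * π)) = p := funext hper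
    have h2 := deriv_comp_add_const p (2 * π) x
    rw [h1] at h2
    exact h2.symm
  -- the shifted function and its derivative
  have hshift : ∀ θ : ℝ, HasDerivAt (fun t => p (t + π)) (deriv p (θ + π)) θ :=
    fun θ => HasDerivAt.comp_add_const θ π (hpdiff (θ + π)).hasDerivAt
  have hPd : ∀ θ : ℝ, deriv P θ = lam * deriv p θ - (1 - lam) * deriv p (θ + π) := by
    intro θ
    have hPfun : P = fun θ => lam * p θ - (1 - lam) * p (θ + π) := funext hP
    rw [hPfun]
    exact (((hpdiff θ).hasDerivAt.const_mul lam).sub ((hshift θ).const_mul (1 - lam))).deriv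
  set q : ℝ → ℝ := fun θ => p θ + p (θ + π) with hqdef
  have hqsmooth : ContDiff ℝ (⊤ : ℕ∞) q :=
    hp.add (hp.comp (contDiff_id.add contDiff_const))
  have hqd : ∀ θ : ℝ, deriv q θ = deriv p θ + deriv p (θ + π) :=
    fun θ => ((hpdiff θ).hasDerivAt.add (hshift θ)).deriv
  have hqper : Function.Periodic q π := by
    intro θ
    show p (θ + π) + p (θ + π + π) = p θ + p (θ + π)
    rw [show θ + π + π = θ + 2 * π by ring, hper θ]
    ring
  -- the three basic integrands
  set g1 : ℝ → ℝ := fun θ => p θ ^ 2 - deriv p θ ^ 2 with hg1def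
  set g3 : ℝ → ℝ := fun θ => p θ * p (θ + π) - deriv p θ * deriv p (θ + π) with hg3def
  have hg1c : Continuous g1 := (hpc.pow 2).sub (hp'c.pow 2)
  have hg2c : Continuous (fun θ => g1 (θ + π)) := hg1c.comp (continuous_id.add continuous_const)
  have hg3c : Continuous g3 :=
    (hpc.mul (hpc.comp (continuous_id.add continuous_const))).sub
      (hp'c.mul (hp'c.comp (continuous_id.add continuous_const)))
  have hg1per : Function.Periodic g1 (2 * π) := by
    intro θ
    simp only [hg1def]
    rw [hper θ, hdper θ]
  have hg3per : Function.Periodic g3 π := by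
    intro θ
    simp only [hg3def]
    rw [show θ + π + π = θ + 2 * π by ring, hper θ, hdper θ]
    ring
  set X : ℝ := ∫ θ in (0:ℝ)..(2 * π), g1 θ with hXdef
  set B : ℝ := ∫ θ in (0:ℝ)..(2 * π), g3 θ with hBdef
  -- the shifted integral of g1 over a full period
  have hshiftX : (∫ θ in (0:ℝ)..(2 * π), g1 (θ + π)) = X := by
    rw [integral_comp_add_right g1 π]
    have e1 : (∫ θ in (0:ℝ)+π..(2*π)+π, g1 θ) = ∫ θ in π..π + 2*π, g1 θ := by
      congr 1 <;> ring
    rw [e1, hg1per.intervalIntegral_add_eq π 0, zero_add]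
  -- I1
  have hI1 : (∫ θ in (0:ℝ)..(2 * π), (P θ ^ 2 - deriv P θ ^ 2))
      = (lam^2 + (1-lam)^2) * X - 2 * lam * (1-lam) * B := by
    have hpt : ∀ θ : ℝ, P θ ^ 2 - deriv P θ ^ 2
        = lam^2 * g1 θ + (1-lam)^2 * g1 (θ + π) + (-(2 * lam * (1-lam))) * g3 θ := by
      intro θ
      rw [hP, hPd]
      simp only [hg1def, hg3def]
      ring
    rw [integral_congr (g := fun θ => lam^2 * g1 θ + (1-lam)^2 * g1 (θ + π)
        + (-(2 * lam * (1-lam))) * g3 θ) (fun θ _ => hpt θ)]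
    rw [integral_comb g1 (fun θ => g1 (θ + π)) g3 _ _ _ _ _ hg1c hg2c hg3c]
    rw [hshiftX]
    ring
  -- half-period splits
  have hsplitg1 : (∫ θ in (0:ℝ)..π, g1 θ) + (∫ θ in (0:ℝ)..π, g1 (θ + π)) = X := by
    rw [integral_comp_add_right g1 π]
    have e1 : (∫ θ in (0:ℝ)+π..π+π, g1 θ) = ∫ θ in π..2*π, g1 θ := by congr 1 <;> ring
    rw [e1, hXdef]
    exact integral_add_adjacent_intervals (hg1c.intervalIntegrable 0 π)
      (hg1c.intervalIntegrable π (2*π))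
  have hB2 : B = 2 * ∫ θ in (0:ℝ)..π, g3 θ := by
    have h1 : (∫ θ in (0:ℝ)..π, g3 θ) + (∫ θ in π..(2*π), g3 θ) = B :=
      integral_add_adjacent_intervals (hg3c.intervalIntegrable 0 π)
        (hg3c.intervalIntegrable π (2*π))
    have h2 : (∫ θ in π..(2*π), g3 θ) = ∫ θ in (0:ℝ)..π, g3 θ := by
      rw [show (∫ θ in π..(2*π), g3 θ) = ∫ θ in (0:ℝ)+π..π+π, g3 θ by congr 1 <;> ring,
        ← integral_comp_add_right g3 π]
      exact integral_congr fun θ _ => hg3per θ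
    rw [← h1, h2]
    ring
  -- I2
  have hI2 : (∫ θ in (0:ℝ)..π, (q θ ^ 2 - deriv q θ ^ 2)) = X + B := by
    have hpt : ∀ θ : ℝ, q θ ^ 2 - deriv q θ ^ 2
        = 1 * g1 θ + 1 * g1 (θ + π) + 2 * g3 θ := by
      intro θ
      rw [hqd]
      show (p θ + p (θ + π))^2 - _ = _
      simp only [hg1def, hg3def]
      ring
    rw [integral_congr (g := fun θ => 1 * g1 θ + 1 * g1 (θ + π) + 2 * g3 θ)
      (fun θ _ => hpt θ)]
    rw [integral_comb g1 (fun θ => g1 (θ + π)) g3 _ _ _ _ _ hg1c hg2c hg3c]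
    rw [one_mul, one_mul, hsplitg1, ← hB2]  -- careful
  -- I3
  have hI3 : (∫ θ in (0:ℝ)..π, q θ) = L := by
    rw [show (∫ θ in (0:ℝ)..π, q θ) = (∫ θ in (0:ℝ)..π, p θ) + ∫ θ in (0:ℝ)..π, p (θ + π) from
      integral_add (hpc.intervalIntegrable 0 π)
        ((hpc.comp (continuous_id.add continuous_const)).intervalIntegrable 0 π)]
    rw [integral_comp_add_right p π,
      show (∫ θ in (0:ℝ)+π..π+π, p θ) = ∫ θ in π..2*π, p θ by congr 1 <;> ring, hL]
    exact integral_add_adjacent_intervals (hpc.intervalIntegrable 0 π)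
      (hpc.intervalIntegrable π (2*π))
  -- algebraic reduction
  set S : ℝ := ∫ θ in (0:ℝ)..π, (q θ ^ 2 - deriv q θ ^ 2) with hSdef
  have hc : lam * (1 - lam) ≠ 0 :=
    mul_ne_zero hlam0 (sub_ne_zero.mpr (Ne.symm hlam1))
  have hkey : Al - A = -(lam * (1-lam)) * S := by
    rw [hAl, hA, hI1, hI2]
    ring
  have hiff2 : (Al = A - lam * (1 - lam) / π * L ^ 2) ↔ S = L^2 / π := by
    constructor
    · intro h
      have h2 : lam * (1-lam) * S = lam * (1-lam) * (L^2/π) := by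
        linear_combination hkey - h
      exact mul_left_cancel₀ hc h2
    · intro h
      linear_combination hkey - (lam * (1-lam)) * h
  rw [hiff2]
  constructor
  · rintro ⟨w, hw⟩
    have hqconst : q = fun _ => w := funext hw
    have hq'0 : ∀ θ : ℝ, deriv q θ = 0 := by
      intro θ
      rw [hqconst]
      exact deriv_const θ w
    have hLw : L = π * w := by
      rw [← hI3, hqconst, intervalIntegral.integral_const, smul_eq_mul, sub_zero]
    rw [hSdef, integral_congr (g := fun _ => w^2) (fun θ _ => by rw [hq'0, hqconst]; ring),
      intervalIntegral.integral_const, smul_eq_mul, sub_zero, hLw]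
    field_simp
  · intro h
    have hconst := wirtinger_constant q hqsmooth hqper (by rw [hI3, ← hSdef, h])
    exact ⟨q 0, hconst⟩
end

section
/- Let M be an oval with length L_M and enclosed area A_M. Then M is a curve of constant width if and only if 2·Ã_{E_{1/2}(M)} = A_M − L_M²/(4π). -/
open Real

open MeasureTheory Complex intervalIntegral AddCircle

local instance fact_two_pi_pos : Fact ((0:ℝ) < 2 * π) := ⟨by positivity⟩

private lemma ae_integral_lift_sq {u : ℝ → ℂ} (hu : Continuous u)
    (hup : Function.Periodic u (2 * π)) :
    (∫ t : AddCircle (2 * π), ‖AddCircle.liftIco (2 * π) 0 u t‖ ^ 2 ∂haarAddCircle)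
      = (1 / (2 * π)) * ∫ x in (0:ℝ)..(2 * π), ‖u x‖ ^ 2 := by
  have h1 := AddCircle.intervalIntegral_preimage (2 * π) 0
      (fun t => ‖AddCircle.liftIco (2 * π) 0 u t‖ ^ 2)
  rw [volume_eq_smul_haarAddCircle, MeasureTheory.integral_smul_measure,
    ENNReal.toReal_ofReal (by positivity : (0:ℝ) ≤ 2 * π)] at h1
  have hae : ∀ᵐ (x : ℝ) ∂volume, x ≠ 2 * π := by
    refine ae_iff.mpr ?_
    have : {x : ℝ | ¬ x ≠ 2 * π} = {2 * π} := by ext x; simp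
    rw [this, Real.volume_singleton]
  have h2 : (∫ x in (0:ℝ)..(0 + 2 * π), ‖AddCircle.liftIco (2 * π) 0 u ↑x‖ ^ 2)
      = ∫ x in (0:ℝ)..(2 * π), ‖u x‖ ^ 2 := by
    rw [zero_add]
    refine intervalIntegral.integral_congr_ae ?_
    filter_upwards [hae] with x hx hx2
    rw [Set.uIoc_of_le (by positivity : (0:ℝ) ≤ 2 * π)] at hx2
    rw [AddCircle.liftIco_zero_coe_apply ⟨hx2.1.le, lt_of_le_of_ne hx2.2 hx⟩]
  rw [h2] at h1
  have h2pi : (0:ℝ) < 2 * π := by positivity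
  field_simp at h1 ⊢
  simp only [smul_eq_mul] at h1
  linarith [h1]

private lemma wirtinger_aux {g : ℝ → ℝ} (hg : ContDiff ℝ (⊤ : ℕ∞) g) (hper : Function.Periodic g π)
    (hmean : (∫ x in (0:ℝ)..(2*π), g x) = 0) :
    ∫ x in (0:ℝ)..(2*π), g x ^ 2 ≤ (1/4) * ∫ x in (0:ℝ)..(2*π), deriv g x ^ 2 := by
  have hginf : ContDiff ℝ (⊤:ℕ∞) g := hg.of_le (by simp)
  set f : ℝ → ℂ := fun x => (g x : ℂ) with hfdef
  set f' : ℝ → ℂ := fun x => ((deriv g x : ℝ) : ℂ) with hf'def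
  have hgc : Continuous g := hg.continuous
  have hg'c : Continuous (deriv g) := (contDiff_infty_iff_deriv.mp hginf).2.continuous
  have hfc : Continuous f := Complex.continuous_ofReal.comp hgc
  have hf'c : Continuous f' := Complex.continuous_ofReal.comp hg'c
  have hper2 : Function.Periodic g (2 * π) := by
    have := hper.add_period hper
    rwa [two_mul]
  have hper2' : Function.Periodic (deriv g) (2 * π) := by
    intro x
    rw [← deriv_comp_add_const]
    congr 1
    ext y
    exact hper2 y
  have hfper : Function.Periodic f (2 * π) := fun x => by simp [hfdef, hper2 x]
  have hf'per : Function.Periodic f' (2 * π) := fun x => by simp [hf'def, hper2' x]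
  have hfperπ : ∀ x, f (x + π) = f x := fun x => by simp [hfdef, hper x]
  have hd : ∀ x, HasDerivAt f (f' x) x := fun x =>
    ((hginf.differentiable (by norm_num) x).hasDerivAt).ofReal_comp
  have hG0 : f 0 = f (2 * π) := by simpa using (hfper 0).symm
  have hG0' : f' 0 = f' (2 * π) := by simpa using (hf'per 0).symm
  set G : C(AddCircle (2 * π), ℂ) :=
    ⟨AddCircle.liftIco (2 * π) 0 f, AddCircle.liftIco_zero_continuous hG0 hfc.continuousOn⟩
    with hGdef
  set G' : C(AddCircle (2 * π), ℂ) :=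
    ⟨AddCircle.liftIco (2 * π) 0 f', AddCircle.liftIco_zero_continuous hG0' hf'c.continuousOn⟩
    with hG'def
  have hab : (0:ℝ) < 2 * π := by positivity
  -- bridge : fourierCoeff of lift = fourierCoeffOn
  have cG : ∀ (u : ℝ → ℂ) (n : ℤ),
      fourierCoeff (AddCircle.liftIco (2 * π) 0 u) n = fourierCoeffOn hab u n := by
    intro u n
    have := fourierCoeff_liftIco_eq (T := 2 * π) (a := 0) u n
    simpa only [zero_add] using this
  -- mean zero coefficient
  have hc0 : fourierCoeffOn hab f 0 = 0 := by
    rw [fourierCoeffOn_eq_integral]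
    simp only [neg_zero, fourier_zero, one_smul, sub_zero]
    rw [hfdef]
    rw [intervalIntegral.integral_ofReal, hmean]
    simp
  -- derivative coefficients
  have hder : ∀ n : ℤ, n ≠ 0 →
      fourierCoeffOn hab f' n = Complex.I * n * fourierCoeffOn hab f n := by
    intro n hn
    have := fourierCoeffOn_of_hasDerivAt hab hn (fun x _ => hd x) (hf'c.intervalIntegrable _ _)
    rw [← hG0, sub_self, mul_zero, zero_sub] at this
    push_cast at this
    have hne : (2 * (π:ℂ)) * Complex.I * n ≠ 0 := by
      simp [Complex.I_ne_zero, Real.pi_ne_zero, hn]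
    field_simp at this
    have h2 : (2*(π:ℂ)) * fourierCoeffOn hab f' n
        = (2*(π:ℂ)) * (Complex.I * n * fourierCoeffOn hab f n) := by
      linear_combination (-1 : ℂ) * this
    exact mul_left_cancel₀ (by simp [Real.pi_ne_zero] : (2*(π:ℂ)) ≠ 0) h2
  -- odd coefficients of f vanish
  have hodd : ∀ n : ℤ, Odd n → fourierCoeffOn hab f n = 0 := by
    intro n hn
    set h : ℝ → ℂ := fun x => fourier (-n) (x : AddCircle (2 * π)) * f x with hhdef
    have hhper : Function.Periodic h (2 * π) := by
      intro x
      simp only [hhdef]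
      rw [AddCircle.coe_add_period, hfper x]
    have hshift : ∀ x : ℝ, h (x + π) = - h x := by
      intro x
      simp only [hhdef]
      rw [hfperπ x]
      have hfou : fourier (-n) ((x + π : ℝ) : AddCircle (2 * π))
          = - fourier (-n) ((x : ℝ) : AddCircle (2 * π)) := by
        rw [fourier_coe_apply, fourier_coe_apply]
        push_cast
        rw [show 2 * (π:ℂ) * Complex.I * (-(n:ℂ)) * ((x:ℂ) + π) / (2 * π)
            = 2 * (π:ℂ) * Complex.I * (-(n:ℂ)) * x / (2 * π) + ((-n : ℤ) : ℂ) * ((π:ℂ) * Complex.I) by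
          have hπ : ((π:ℂ)) ≠ 0 := by exact_mod_cast Real.pi_ne_zero
          push_cast
          field_simp
          ring]
        rw [Complex.exp_add, Complex.exp_int_mul, Complex.exp_pi_mul_I, (hn.neg).neg_one_zpow]
        ring
      rw [hfou]
      ring
    have e1 : (∫ x in (0:ℝ)..(2*π), h x) = ∫ x in (0:ℝ)..(2*π), h (x + π) := by
      rw [intervalIntegral.integral_comp_add_right]
      have := hhper.intervalIntegral_add_eq 0 π
      simpa [zero_add, add_comm] using this
    have e2 : (∫ x in (0:ℝ)..(2*π), h x) = 0 := by
      have heq : (∫ x in (0:ℝ)..(2*π), h x) = - ∫ x in (0:ℝ)..(2*π), h x := by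
        conv_lhs => rw [e1]
        simp only [hshift]
        rw [intervalIntegral.integral_neg]
      have h20 : (2:ℂ) * ∫ x in (0:ℝ)..(2*π), h x = 0 := by linear_combination heq
      simpa using h20
    rw [← cG f n, fourierCoeff_eq_intervalIntegral _ n 0]
    have hae : ∀ᵐ (x : ℝ) ∂volume, x ≠ 2 * π := by
      refine ae_iff.mpr ?_
      have hs : {x : ℝ | ¬ x ≠ 2 * π} = {2 * π} := by ext x; simp
      rw [hs, Real.volume_singleton]
    have hint : (∫ x in (0:ℝ)..(0 + 2*π),
          fourier (-n) ((x:ℝ) : AddCircle (2*π)) • AddCircle.liftIco (2*π) 0 f x)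
        = ∫ x in (0:ℝ)..(2*π), h x := by
      rw [zero_add]
      refine intervalIntegral.integral_congr_ae ?_
      filter_upwards [hae] with x hx hx2
      rw [Set.uIoc_of_le hab.le] at hx2
      rw [AddCircle.liftIco_zero_coe_apply ⟨hx2.1.le, lt_of_le_of_ne hx2.2 hx⟩]
      simp [hhdef, smul_eq_mul]
    rw [hint, e2, smul_zero]
  -- summability of coefficient squares
  have hsummable : ∀ (F : Lp ℂ 2 (@haarAddCircle (2*π) _)),
      Summable fun n : ℤ => ‖fourierCoeff (F : AddCircle (2*π) → ℂ) n‖ ^ 2 := by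
    intro F
    have h0 := orthonormal_fourier.inner_products_summable F
    have e : ∀ i : ℤ, (inner ℂ (fourierLp 2 i) F : ℂ) = fourierCoeff (F : AddCircle (2*π) → ℂ) i := by
      intro i
      rw [← fourierBasis_repr F i, HilbertBasis.repr_apply_apply, coe_fourierBasis]
    simpa only [e] using h0
  -- Parseval for G
  have hS1 : ∑' n : ℤ, ‖fourierCoeffOn hab f n‖ ^ 2
      = (1/(2*π)) * ∫ x in (0:ℝ)..(2*π), g x ^ 2 := by
    have hP1 := tsum_sq_fourierCoeff (ContinuousMap.toLp (E := ℂ) 2 haarAddCircle ℂ G)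
    simp_rw [fourierCoeff_toLp] at hP1
    have hcongr : (∫ t, ‖(ContinuousMap.toLp (E := ℂ) 2 haarAddCircle ℂ G) t‖^2
          ∂(@haarAddCircle (2*π) _))
        = ∫ t, ‖(G : AddCircle (2*π) → ℂ) t‖^2 ∂haarAddCircle := by
      refine integral_congr_ae ?_
      filter_upwards [ContinuousMap.coeFn_toLp (p := 2) (𝕜 := ℂ) (@haarAddCircle (2*π) _) G] with t ht
      rw [ht]
    rw [hcongr] at hP1
    have hlift : (∫ t, ‖(G : AddCircle (2*π) → ℂ) t‖^2 ∂(@haarAddCircle (2*π) _))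
        = (1/(2*π)) * ∫ x in (0:ℝ)..(2*π), ‖f x‖ ^ 2 := ae_integral_lift_sq hfc hfper
    have hnormsq : (∫ x in (0:ℝ)..(2*π), ‖f x‖ ^ 2) = ∫ x in (0:ℝ)..(2*π), g x ^ 2 := by
      refine intervalIntegral.integral_congr (fun x _ => ?_)
      simp [hfdef, Complex.norm_real, Real.norm_eq_abs, _root_.sq_abs]
    rw [hlift, hnormsq] at hP1
    calc ∑' n : ℤ, ‖fourierCoeffOn hab f n‖ ^ 2
        = ∑' n : ℤ, ‖fourierCoeff ((G : C(AddCircle (2*π), ℂ)) : AddCircle (2*π) → ℂ) n‖ ^ 2 := by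
          refine tsum_congr fun n => ?_
          rw [show ((G : C(AddCircle (2*π), ℂ)) : AddCircle (2*π) → ℂ)
              = AddCircle.liftIco (2*π) 0 f from rfl, cG]
      _ = (1/(2*π)) * ∫ x in (0:ℝ)..(2*π), g x ^ 2 := hP1
  -- Parseval for G'
  have hS2 : ∑' n : ℤ, ‖fourierCoeffOn hab f' n‖ ^ 2
      = (1/(2*π)) * ∫ x in (0:ℝ)..(2*π), deriv g x ^ 2 := by
    have hP1 := tsum_sq_fourierCoeff (ContinuousMap.toLp (E := ℂ) 2 haarAddCircle ℂ G')
    simp_rw [fourierCoeff_toLp] at hP1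
    have hcongr : (∫ t, ‖(ContinuousMap.toLp (E := ℂ) 2 haarAddCircle ℂ G') t‖^2
          ∂(@haarAddCircle (2*π) _))
        = ∫ t, ‖(G' : AddCircle (2*π) → ℂ) t‖^2 ∂haarAddCircle := by
      refine integral_congr_ae ?_
      filter_upwards [ContinuousMap.coeFn_toLp (p := 2) (𝕜 := ℂ) (@haarAddCircle (2*π) _) G'] with t ht
      rw [ht]
    rw [hcongr] at hP1
    have hlift : (∫ t, ‖(G' : AddCircle (2*π) → ℂ) t‖^2 ∂(@haarAddCircle (2*π) _))
        = (1/(2*π)) * ∫ x in (0:ℝ)..(2*π), ‖f' x‖ ^ 2 := ae_integral_lift_sq hf'c hf'per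
    have hnormsq : (∫ x in (0:ℝ)..(2*π), ‖f' x‖ ^ 2) = ∫ x in (0:ℝ)..(2*π), deriv g x ^ 2 := by
      refine intervalIntegral.integral_congr (fun x _ => ?_)
      simp [hf'def, Complex.norm_real, Real.norm_eq_abs, _root_.sq_abs]
    rw [hlift, hnormsq] at hP1
    calc ∑' n : ℤ, ‖fourierCoeffOn hab f' n‖ ^ 2
        = ∑' n : ℤ, ‖fourierCoeff ((G' : C(AddCircle (2*π), ℂ)) : AddCircle (2*π) → ℂ) n‖ ^ 2 := by
          refine tsum_congr fun n => ?_
          rw [show ((G' : C(AddCircle (2*π), ℂ)) : AddCircle (2*π) → ℂ)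
              = AddCircle.liftIco (2*π) 0 f' from rfl, cG f' n]
      _ = (1/(2*π)) * ∫ x in (0:ℝ)..(2*π), deriv g x ^ 2 := hP1
  -- summability
  have sum1 : Summable fun n : ℤ => ‖fourierCoeffOn hab f n‖ ^ 2 := by
    have := hsummable (ContinuousMap.toLp (E := ℂ) 2 haarAddCircle ℂ G)
    simp_rw [fourierCoeff_toLp] at this
    refine this.congr fun n => ?_
    rw [show ((G : C(AddCircle (2*π), ℂ)) : AddCircle (2*π) → ℂ)
        = AddCircle.liftIco (2*π) 0 f from rfl, cG]
  have sum2 : Summable fun n : ℤ => ‖fourierCoeffOn hab f' n‖ ^ 2 := by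
    have := hsummable (ContinuousMap.toLp (E := ℂ) 2 haarAddCircle ℂ G')
    simp_rw [fourierCoeff_toLp] at this
    refine this.congr fun n => ?_
    rw [show ((G' : C(AddCircle (2*π), ℂ)) : AddCircle (2*π) → ℂ)
        = AddCircle.liftIco (2*π) 0 f' from rfl, cG]
  -- termwise comparison
  have hterm : ∀ n : ℤ, ‖fourierCoeffOn hab f n‖ ^ 2 ≤ (1/4) * ‖fourierCoeffOn hab f' n‖ ^ 2 := by
    intro n
    rcases eq_or_ne n 0 with rfl | hn
    · rw [hc0]
      simp
    rcases Int.even_or_odd n with he | ho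
    · have hcn : ‖fourierCoeffOn hab f' n‖ = |(n:ℝ)| * ‖fourierCoeffOn hab f n‖ := by
        rw [hder n hn]
        simp [norm_mul, Complex.norm_I]
      have h2n : (2:ℝ) ≤ |(n:ℝ)| := by
        obtain ⟨k, rfl⟩ := he
        have hk : k ≠ 0 := by omega
        have : (1:ℝ) ≤ |(k:ℝ)| := by
          rw [← Int.cast_abs]
          exact_mod_cast Int.one_le_abs hk
        push_cast
        rw [show ((k:ℝ) + k) = 2 * k by ring, abs_mul]
        rw [_root_.abs_two]
        nlinarith
      rw [hcn, mul_pow]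
      have h4 : (4:ℝ) ≤ |(n:ℝ)| ^ 2 := by nlinarith [abs_nonneg (n:ℝ)]
      nlinarith [mul_nonneg (sub_nonneg.mpr h4) (sq_nonneg ‖fourierCoeffOn hab f n‖)]
    · rw [hodd n ho]
      simp
  -- put everything together
  have key : (1/(2*π)) * (∫ x in (0:ℝ)..(2*π), g x ^ 2)
      ≤ (1/4) * ((1/(2*π)) * ∫ x in (0:ℝ)..(2*π), deriv g x ^ 2) := by
    rw [← hS1, ← hS2]
    rw [← tsum_mul_left]
    exact Summable.tsum_le_tsum hterm sum1 (sum2.mul_left _)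
  have hpos : (0:ℝ) < 1/(2*π) := by positivity
  rw [show (1/4) * ((1/(2*π)) * ∫ x in (0:ℝ)..(2*π), deriv g x ^ 2)
      = (1/(2*π)) * ((1/4) * ∫ x in (0:ℝ)..(2*π), deriv g x ^ 2) by ring] at key
  exact le_of_mul_le_mul_left key hpos


private lemma integral_antiperiodic_zero {h : ℝ → ℝ} (hc : Continuous h)
    (ha : ∀ x, h (x + π) = - h x) : (∫ x in (0:ℝ)..(2*π), h x) = 0 := by
  have hsplit : (∫ x in (0:ℝ)..(2*π), h x)
      = (∫ x in (0:ℝ)..π, h x) + ∫ x in π..(2*π), h x :=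
    (intervalIntegral.integral_add_adjacent_intervals
      (hc.intervalIntegrable _ _) (hc.intervalIntegrable _ _)).symm
  have h2 : (∫ x in π..(2*π), h x) = ∫ x in (0:ℝ)..π, h (x + π) := by
    rw [intervalIntegral.integral_comp_add_right]
    norm_num [two_mul]
  have h3 : (∫ x in (0:ℝ)..π, h (x + π)) = - ∫ x in (0:ℝ)..π, h x := by
    simp only [ha]
    rw [intervalIntegral.integral_neg]
  rw [hsplit, h2, h3]
  ring

private lemma zero_of_sq_integral {u : ℝ → ℝ} (hu : Continuous u) (hup : Function.Periodic u π)
    (hint : (∫ x in (0:ℝ)..(2*π), u x ^ 2) ≤ 0) : ∀ x, u x = 0 := by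
  have hall : ∀ x ∈ Set.Icc (0:ℝ) (2*π), u x = 0 := by
    by_contra hcon
    push_neg at hcon
    obtain ⟨c, hc1, hc2⟩ := hcon
    have hlt : (∫ x in (0:ℝ)..(2*π), (0:ℝ)) < ∫ x in (0:ℝ)..(2*π), u x ^ 2 :=
      intervalIntegral.integral_lt_integral_of_continuousOn_of_le_of_exists_lt
        (by positivity) continuousOn_const ((hu.pow 2).continuousOn)
        (fun x _ => sq_nonneg _) ⟨c, hc1, sq_pos_of_ne_zero hc2⟩
    simp only [intervalIntegral.integral_const, smul_zero, smul_eq_mul, mul_zero] at hlt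
    linarith
  intro x
  obtain ⟨y, hy, hxy⟩ := hup.exists_mem_Ico₀ Real.pi_pos x
  rw [hxy]
  exact hall y ⟨hy.1, by nlinarith [hy.2, Real.pi_pos]⟩

/-- `M` has constant width iff `2Ã_{E_{1/2}(M)} = A_M - L_M²/(4π)`. -/
theorem constant_width_iff_wigner_area (p : ℝ → ℝ) (hp : ContDiff ℝ (⊤ : ℕ∞) p)
    (hper : Function.Periodic p (2 * π))
    (hpos : ∀ θ : ℝ, 0 < p θ + deriv (deriv p) θ)
    (q : ℝ → ℝ) (hq : ∀ θ : ℝ, q θ = (p θ - p (θ + π)) / 2)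
    (L A At : ℝ)
    (hL : L = ∫ θ in (0:ℝ)..(2 * π), p θ)
    (hA : A = (1/2) * ∫ θ in (0:ℝ)..(2 * π), (p θ ^ 2 - deriv p θ ^ 2))
    (hAt : 2 * At = (1/2) * ∫ θ in (0:ℝ)..(2 * π), (q θ ^ 2 - deriv q θ ^ 2)) :
    (∃ w : ℝ, ∀ θ : ℝ, p θ + p (θ + π) = w) ↔ 2 * At = A - L ^ 2 / (4 * π) := by
  have hπ := Real.pi_pos
  have hpinf : ContDiff ℝ (⊤:ℕ∞) p := hp.of_le (by simp)
  have hpc : Continuous p := hp.continuous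
  have hdp : ∀ x, HasDerivAt p (deriv p x) x :=
    fun x => (hpinf.differentiable (by norm_num) x).hasDerivAt
  have hp'c : Continuous (deriv p) := (contDiff_infty_iff_deriv.mp hpinf).2.continuous
  have hp'per : Function.Periodic (deriv p) (2*π) := fun x => by
    rw [← deriv_comp_add_const]
    congr 1
    ext y
    exact hper y
  set s : ℝ → ℝ := fun θ => (p θ + p (θ + π))/2 with hsdef
  have hq' : q = fun θ => (p θ - p (θ + π))/2 := funext hq
  have hdpπ : ∀ x, HasDerivAt (fun θ => p (θ + π)) (deriv p (x + π)) x :=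
    fun x => HasDerivAt.comp_add_const x π (hdp (x+π))
  have hds : ∀ x, HasDerivAt s ((deriv p x + deriv p (x+π))/2) x :=
    fun x => ((hdp x).add (hdpπ x)).div_const 2
  have hdq : ∀ x, HasDerivAt q ((deriv p x - deriv p (x+π))/2) x := by
    rw [hq']
    exact fun x => ((hdp x).sub (hdpπ x)).div_const 2
  have hs' : ∀ x, deriv s x = (deriv p x + deriv p (x+π))/2 := fun x => (hds x).deriv
  have hq'' : ∀ x, deriv q x = (deriv p x - deriv p (x+π))/2 := fun x => (hdq x).deriv
  have hpπc : Continuous (fun θ => p (θ + π)) := hpc.comp (continuous_id.add continuous_const)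
  have hp'πc : Continuous (fun θ => deriv p (θ + π)) :=
    hp'c.comp (continuous_id.add continuous_const)
  have hsc : Continuous s := (hpc.add hpπc).div_const 2
  have hqc : Continuous q := by
    rw [hq']
    exact (hpc.sub hpπc).div_const 2
  have hs'c : Continuous (deriv s) := by
    have he : deriv s = fun x => (deriv p x + deriv p (x+π))/2 := funext hs'
    rw [he]
    exact (hp'c.add hp'πc).div_const 2
  have hq'c : Continuous (deriv q) := by
    have he : deriv q = fun x => (deriv p x - deriv p (x+π))/2 := funext hq''
    rw [he]
    exact (hp'c.sub hp'πc).div_const 2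
  have hsper : ∀ θ, s (θ + π) = s θ := by
    intro θ
    simp only [hsdef]
    rw [show θ + π + π = θ + 2*π by ring, hper θ]
    ring
  have hqap : ∀ θ, q (θ + π) = - q θ := by
    intro θ
    rw [hq, hq, show θ + π + π = θ + 2*π by ring, hper θ]
    ring
  have hs'per : ∀ θ, deriv s (θ + π) = deriv s θ := by
    intro θ
    rw [hs', hs', show θ + π + π = θ + 2*π by ring, hp'per θ]
    ring
  have hq'ap : ∀ θ, deriv q (θ + π) = - deriv q θ := by
    intro θ
    rw [hq'', hq'', show θ + π + π = θ + 2*π by ring, hp'per θ]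
    ring
  have hscd : ContDiff ℝ (⊤ : ℕ∞) s :=
    (hp.add (hp.comp (contDiff_id.add contDiff_const))).div_const 2
  have hcross : (∫ θ in (0:ℝ)..(2*π), (s θ * q θ - deriv s θ * deriv q θ)) = 0 := by
    apply integral_antiperiodic_zero ((hsc.mul hqc).sub (hs'c.mul hq'c))
    intro x
    simp only [Pi.sub_apply, Pi.mul_apply]
    rw [hsper, hqap, hs'per, hq'ap]
    ring
  have hqint : (∫ θ in (0:ℝ)..(2*π), q θ) = 0 := integral_antiperiodic_zero hqc hqap
  have hdecomp : ∀ θ, p θ^2 - (deriv p θ)^2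
      = (s θ^2 - (deriv s θ)^2) + (q θ^2 - (deriv q θ)^2)
        + 2*(s θ * q θ - deriv s θ * deriv q θ) := by
    intro θ
    rw [hs', hq'', hq]
    simp only [hsdef]
    ring
  have hsplit : (∫ θ in (0:ℝ)..(2*π), (p θ^2 - deriv p θ^2))
      = (∫ θ in (0:ℝ)..(2*π), (s θ^2 - deriv s θ^2))
        + (∫ θ in (0:ℝ)..(2*π), (q θ^2 - deriv q θ^2)) := by
    rw [intervalIntegral.integral_congr (g := fun θ =>
        (s θ^2 - deriv s θ^2) + (q θ^2 - deriv q θ^2)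
        + 2*(s θ * q θ - deriv s θ * deriv q θ)) (fun θ _ => hdecomp θ)]
    rw [intervalIntegral.integral_add
        (f := fun θ => (s θ^2 - deriv s θ^2) + (q θ^2 - deriv q θ^2))
        (g := fun θ => 2*(s θ * q θ - deriv s θ * deriv q θ))
        (((((hsc.pow 2).sub (hs'c.pow 2))).add ((hqc.pow 2).sub (hq'c.pow 2))).intervalIntegrable _ _)
        ((continuous_const.mul ((hsc.mul hqc).sub (hs'c.mul hq'c))).intervalIntegrable _ _),
      intervalIntegral.integral_add
        (f := fun θ => s θ^2 - deriv s θ^2) (g := fun θ => q θ^2 - deriv q θ^2)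
        (((hsc.pow 2).sub (hs'c.pow 2)).intervalIntegrable _ _)
        (((hqc.pow 2).sub (hq'c.pow 2)).intervalIntegrable _ _),
      intervalIntegral.integral_const_mul, hcross]
    ring
  have hL2 : L = ∫ θ in (0:ℝ)..(2*π), s θ := by
    rw [hL, intervalIntegral.integral_congr (g := fun θ => s θ + q θ)
      (fun θ _ => by simp only [hq, hsdef]; ring),
      intervalIntegral.integral_add (hsc.intervalIntegrable _ _) (hqc.intervalIntegrable _ _),
      hqint, add_zero]
  set c₀ : ℝ := L / (2*π) with hc₀
  set gg : ℝ → ℝ := fun θ => s θ - c₀ with hggdef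
  have hggc : Continuous gg := hsc.sub continuous_const
  have hgg' : ∀ x, deriv gg x = deriv s x := by
    intro x
    rw [hs' x]
    exact ((hds x).sub_const c₀).deriv
  have hggcd : ContDiff ℝ (⊤ : ℕ∞) gg := hscd.sub contDiff_const
  have hggper : Function.Periodic gg π := fun x => by simp only [hggdef]; rw [hsper x]
  have hggint : (∫ θ in (0:ℝ)..(2*π), gg θ) = 0 := by
    simp only [hggdef]
    rw [intervalIntegral.integral_sub (hsc.intervalIntegrable _ _) intervalIntegrable_const,
      ← hL2, intervalIntegral.integral_const]
    simp only [hc₀, smul_eq_mul, sub_zero]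
    field_simp
    ring
  have hgg'c : Continuous (deriv gg) := by
    have he : deriv gg = deriv s := funext hgg'
    rw [he]
    exact hs'c
  have hsqint : (∫ θ in (0:ℝ)..(2*π), s θ^2)
      = (∫ θ in (0:ℝ)..(2*π), gg θ^2) + 2*π*c₀^2 := by
    rw [intervalIntegral.integral_congr (g := fun θ => gg θ^2 + (2*c₀*gg θ + c₀^2))
      (fun θ _ => by simp only [hggdef]; ring),
      intervalIntegral.integral_add (f := fun θ => gg θ^2) (g := fun θ => 2*c₀*gg θ + c₀^2)
        ((hggc.pow 2).intervalIntegrable _ _)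
        (((continuous_const.mul hggc).add continuous_const).intervalIntegrable _ _),
      intervalIntegral.integral_add (f := fun θ => 2*c₀*gg θ) (g := fun _ => c₀^2)
        ((continuous_const.mul hggc).intervalIntegrable _ _)
        intervalIntegrable_const,
      intervalIntegral.integral_const_mul, hggint, intervalIntegral.integral_const]
    simp only [mul_zero, smul_eq_mul, sub_zero, zero_add]
  have hs'gg : (∫ θ in (0:ℝ)..(2*π), deriv s θ^2) = ∫ θ in (0:ℝ)..(2*π), deriv gg θ^2 :=
    (intervalIntegral.integral_congr (fun θ _ => by rw [hgg' θ])).symm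
  have hkey : A - 2*At = π*c₀^2
      + (1/2)*((∫ θ in (0:ℝ)..(2*π), gg θ^2) - (∫ θ in (0:ℝ)..(2*π), deriv gg θ^2)) := by
    rw [hA, hAt, hsplit]
    rw [intervalIntegral.integral_sub (f := fun θ => s θ^2) (g := fun θ => deriv s θ^2)
      ((hsc.pow 2).intervalIntegrable _ _)
      ((hs'c.pow 2).intervalIntegrable _ _), hsqint, hs'gg]
    ring
  have hiff : (2*At = A - L^2/(4*π))
      ↔ (∫ θ in (0:ℝ)..(2*π), gg θ^2) = (∫ θ in (0:ℝ)..(2*π), deriv gg θ^2) := by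
    have hLc : L = 2*π*c₀ := by rw [hc₀]; field_simp
    have hdiv : L^2/(4*π) = π*c₀^2 := by rw [hLc]; field_simp; ring
    rw [hdiv]
    constructor
    · intro h
      linarith [hkey]
    · intro h
      linarith [hkey]
  rw [hiff]
  constructor
  · rintro ⟨w, hw⟩
    have hsw : ∀ θ, s θ = w/2 := fun θ => by simp only [hsdef]; rw [hw θ]
    have hLw : L = π * w := by
      rw [hL2, intervalIntegral.integral_congr (g := fun _ => w/2) (fun θ _ => hsw θ),
        intervalIntegral.integral_const]
      simp only [smul_eq_mul, sub_zero]
      ring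
    have hc0w : c₀ = w/2 := by
      rw [hc₀, hLw]
      field_simp
    have hgg0 : gg = fun _ => (0:ℝ) := by
      funext θ
      simp only [hggdef]
      rw [hsw θ, hc0w]
      ring
    have hX : (∫ θ in (0:ℝ)..(2*π), gg θ^2) = 0 := by rw [hgg0]; simp
    have hY : (∫ θ in (0:ℝ)..(2*π), deriv gg θ^2) = 0 := by rw [hgg0]; simp
    rw [hX, hY]
  · intro h
    have hW := wirtinger_aux hggcd hggper hggint
    have hle : (∫ θ in (0:ℝ)..(2*π), gg θ^2) ≤ 0 := by linarith
    have hzero := zero_of_sq_integral hggc hggper hle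
    refine ⟨2*c₀, fun θ => ?_⟩
    have h0 := hzero θ
    simp only [hggdef] at h0
    have hsθ : s θ = c₀ := by linarith
    simp only [hsdef] at hsθ
    linarith
end
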